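/- arXiv:1803.02924 — 14 statements merged into one kernel-verified Lean document; each statement's English description precedes it below -/
import Mathlib

section
/- Let ε > 0 and τ ∈ (0,1). Let y_j, r_j, p_j (j = 0,…,Ĵ+1) be CG iterates for a symmetric matrix H̄ and vector g, with p_jᵀ H̄ p_j > 0 and r_j ≠ 0 for j = 0,…,Ĵ. Define Φ_0(z) = q(y_0) + (ε/2)‖z−y_0‖² and Φ_{j+1}(z) = τΦ_j(z) + (1−τ)(q(y_j) + r_jᵀ(z−y_j) + (ε/2)‖z−y_j‖²) for j = 0,…,Ĵ−1. Suppose that q(y_{Ĵ+1}) ≥ q(y_i) + r_iᵀ(y_{Ĵ+1}−y_i) + (ε/2)‖y_{Ĵ+1}−y_i‖² for all i = 0,…,Ĵ. Then, with ψ(y) = Φ_0(y) − q(y), it holds that Φ_j(y_{Ĵ+1}) ≤ q(y_{Ĵ+1}) + τ^j ψ(y_{Ĵ+1}) for every j = 0,…,Ĵ. -/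
open RealInnerProductSpace

/-- The estimating-sequence bound: `Φ_j(y_{Ĵ+1}) ≤ q(y_{Ĵ+1}) + τ^j ψ(y_{Ĵ+1})`
for all `j = 0,…,Ĵ`, where `ψ = Φ_0 − q`. -/
theorem stmt1
    {n : ℕ} (Hb : EuclideanSpace ℝ (Fin n) →L[ℝ] EuclideanSpace ℝ (Fin n))
    (hsym : ∀ x y : EuclideanSpace ℝ (Fin n), ⟪Hb x, y⟫ = ⟪x, Hb y⟫)
    (ε τ : ℝ) (hε : 0 < ε) (hτ : τ ∈ Set.Ioo (0:ℝ) 1)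
    (g : EuclideanSpace ℝ (Fin n))
    (q : EuclideanSpace ℝ (Fin n) → ℝ)
    (hq : ∀ z, q z = 1/2 * ⟪z, Hb z⟫ + ⟪g, z⟫)
    (J : ℕ)
    (y r p : ℕ → EuclideanSpace ℝ (Fin n)) (α : ℕ → ℝ)
    (hy0 : y 0 = 0) (hr0 : r 0 = g) (hp0 : p 0 = -g)
    (hα : ∀ j ≤ J, α j = ‖r j‖^2 / ⟪p j, Hb (p j)⟫)
    (hyrec : ∀ j ≤ J, y (j+1) = y j + α j • p j)
    (hrrec : ∀ j ≤ J, r (j+1) = r j + α j • Hb (p j))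
    (hprec : ∀ j ≤ J, p (j+1) = -(r (j+1)) + (‖r (j+1)‖^2 / ‖r j‖^2) • p j)
    (hpcurv : ∀ j ≤ J, 0 < ⟪p j, Hb (p j)⟫)
    (hrne : ∀ j ≤ J, r j ≠ 0)
    (Φ : ℕ → EuclideanSpace ℝ (Fin n) → ℝ)
    (hΦ0 : ∀ z, Φ 0 z = q (y 0) + ε/2 * ‖z - y 0‖^2)
    (hΦrec : ∀ j < J, ∀ z, Φ (j+1) z =
      τ * Φ j z + (1-τ) * (q (y j) + ⟪r j, z - y j⟫ + ε/2 * ‖z - y j‖^2))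
    (hstrong : ∀ i ≤ J,
      q (y (J+1)) ≥ q (y i) + ⟪r i, y (J+1) - y i⟫ + ε/2 * ‖y (J+1) - y i‖^2) :
    ∀ j ≤ J, Φ j (y (J+1)) ≤ q (y (J+1)) + τ^j * (Φ 0 (y (J+1)) - q (y (J+1))) := by
  intro j hj
  induction j with
  | zero => simp
  | succ k ih =>
    have hkJ : k ≤ J := Nat.le_of_succ_le hj
    have hkltJ : k < J := hj
    have h1 := ih hkJ
    have h2 := hstrong k hkJ
    have hrw := hΦrec k hkltJ (y (J+1))
    have hτ0 : 0 < τ := hτ.1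
    have hτ1 : τ < 1 := hτ.2
    rw [hrw]
    have : τ * Φ k (y (J+1)) ≤ τ * (q (y (J+1)) + τ^k * (Φ 0 (y (J+1)) - q (y (J+1)))) :=
      mul_le_mul_of_nonneg_left h1 hτ0.le
    have h3 : (1-τ) * (q (y k) + ⟪r k, y (J+1) - y k⟫ + ε/2 * ‖y (J+1) - y k‖^2)
        ≤ (1-τ) * q (y (J+1)) :=
      mul_le_mul_of_nonneg_left h2 (by linarith)
    have hpow : τ^(k+1) = τ * τ^k := pow_succ' τ k
    rw [hpow]
    linarith [this, h3]
end

section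
/- Let ε ∈ (0,1), let H be a symmetric n×n real matrix with ‖H‖ ≤ M, set H̄ = H + 2εI, κ = (M+2ε)/ε, and τ = √κ/(√κ+1). Let y_j, r_j, p_j (j = 0,…,Ĵ) be CG iterates for H̄ and g ≠ 0, with r_j ≠ 0 and p_jᵀ H̄ p_j ≥ ε‖p_j‖² for j = 0,…,Ĵ−1. Define Φ_0(z) = q(y_0) + (ε/2)‖z−y_0‖² and Φ_{j+1}(z) = τΦ_j(z) + (1−τ)(q(y_j) + r_jᵀ(z−y_j) + (ε/2)‖z−y_j‖²) for j = 0,…,Ĵ−1, and let Φ_j* denote the minimum value of Φ_j over ℝⁿ. Then q(y_j) ≤ Φ_j* for all j = 0,…,Ĵ. -/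
/-!
The CG residual is the gradient, `r_j = H̄ y_j + g`, each residual is orthogonal and each new
direction `H̄`-conjugate to the previous directions. Hence `H̄` is positive semidefinite on the
Krylov subspace `K_j = span {p_0, …, p_{j-1}}` and `y_j` minimizes `q` over `y_j + K_j`. The
gradient step `y_j - r_j / L`, `L = M + 2ε = κε`, lies in `y_{j+1} + K_{j+1}`, so
`q(y_{j+1}) ≤ q(y_j) - ‖r_j‖² / (2L)`.

Each `Φ_j` equals `Φ_j* + (ε/2)‖z - v_j‖²`, and one shows `Φ_j ≥ q(y_j) + (ε/2)‖z - v_j‖²` by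
induction (Nesterov's estimate sequences): completing the square in the recursion for `Φ_{j+1}`
costs `(1-τ)²‖r_j‖²/(2ε) ≤ ‖r_j‖²/(2κε)`, which the decrease of `q` pays for, while the cross
term `⟪r_j, v_j - y_j⟫` vanishes because `v_j - y_j ∈ K_j`.
-/

open RealInnerProductSpace

section

variable {E : Type*} [NormedAddCommGroup E] [InnerProductSpace ℝ E]

noncomputable def quad (A : E →L[ℝ] E) (g x : E) : ℝ := 1/2 * ⟪x, A x⟫ + ⟪g, x⟫

theorem quad_add {A : E →L[ℝ] E} (hA : (A : E →ₗ[ℝ] E).IsSymmetric) (g x d : E) :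
    quad A g (x + d) = quad A g x + ⟪A x + g, d⟫ + 1/2 * ⟪d, A d⟫ := by
  have hxd : ⟪x, A d⟫ = ⟪A x, d⟫ := (hA x d).symm
  simp only [quad, map_add, inner_add_left, inner_add_right, hxd, real_inner_comm d (A x)]
  ring

theorem quad_sub_smul_grad_add_le {A : E →L[ℝ] E} (hA : (A : E →ₗ[ℝ] E).IsSymmetric)
    {L : ℝ} (hL : ‖A‖ ≤ L) (hL0 : 0 < L) (g x : E) :
    quad A g (x - L⁻¹ • (A x + g)) + ‖A x + g‖^2 / (2*L) ≤ quad A g x := by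
  set v := A x + g
  have hcurv : ⟪v, A v⟫ ≤ L * ‖v‖^2 :=
    calc ⟪v, A v⟫ ≤ ‖v‖ * ‖A v‖ := real_inner_le_norm _ _
      _ ≤ ‖v‖ * (L * ‖v‖) := by
          gcongr; exact (A.le_opNorm v).trans (by gcongr)
      _ = L * ‖v‖^2 := by ring
  rw [sub_eq_add_neg, quad_add hA, map_neg, map_smul, inner_neg_left, inner_neg_right,
    inner_neg_right, real_inner_smul_left, real_inner_smul_right, real_inner_smul_right,
    real_inner_self_eq_norm_sq]
  have hstep : L⁻¹ * (L⁻¹ * ⟪v, A v⟫) ≤ L⁻¹ * ‖v‖^2 :=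
    calc L⁻¹ * (L⁻¹ * ⟪v, A v⟫) ≤ L⁻¹ * (L⁻¹ * (L * ‖v‖^2)) := by gcongr
      _ = L⁻¹ * ‖v‖^2 := by field_simp
  have hsplit : ‖v‖ ^ 2 / (2 * L) = 1/2 * (L⁻¹ * ‖v‖^2) := by field_simp
  linarith

/-- The minimizer `v_j` of the estimating function `Φ_j`. -/
noncomputable def estimateCenter (τ ε : ℝ) (y r : ℕ → E) : ℕ → E
  | 0 => y 0
  | j + 1 => τ • estimateCenter τ ε y r j + (1 - τ) • y j - ((1 - τ) / ε) • r j

theorem convex_comb_sq_add_inner_eq {ε : ℝ} (hε : ε ≠ 0) (τ : ℝ) (z v y r : E) :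
    τ * (ε/2 * ‖z - v‖^2) + (1-τ) * (⟪r, z - y⟫ + ε/2 * ‖z - y‖^2)
      = ε/2 * ‖z - (τ • v + (1-τ) • y - ((1-τ)/ε) • r)‖^2
        + τ*(1-τ) * (ε/2 * ‖v - y‖^2) + τ*(1-τ) * ⟪r, v - y⟫
        - (1-τ)^2/(2*ε) * ‖r‖^2 := by
  simp only [← real_inner_self_eq_norm_sq, inner_sub_left, inner_sub_right, inner_add_left,
    inner_add_right, real_inner_smul_left, real_inner_smul_right, real_inner_comm v z,
    real_inner_comm y z, real_inner_comm r z, real_inner_comm y v, real_inner_comm r v,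
    real_inner_comm r y]
  field_simp
  ring

theorem add_sq_dist_estimateCenter_le {q : E → ℝ} {Φ : ℕ → E → ℝ} {y r : ℕ → E}
    {ε τ : ℝ} {J : ℕ} (hε : 0 < ε) (hτ0 : 0 ≤ τ) (hτ1 : τ ≤ 1)
    (hΦ0 : ∀ z, Φ 0 z = q (y 0) + ε/2 * ‖z - y 0‖^2)
    (hΦrec : ∀ j < J, ∀ z, Φ (j+1) z =
      τ * Φ j z + (1-τ) * (q (y j) + ⟪r j, z - y j⟫ + ε/2 * ‖z - y j‖^2))
    (horth : ∀ j < J, ⟪r j, estimateCenter τ ε y r j - y j⟫ = 0)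
    (hdecr : ∀ j < J, q (y (j+1)) + (1-τ)^2/(2*ε) * ‖r j‖^2 ≤ q (y j)) :
    ∀ j ≤ J, ∀ z, q (y j) + ε/2 * ‖z - estimateCenter τ ε y r j‖^2 ≤ Φ j z := by
  intro j hj z
  induction j with
  | zero => rw [hΦ0]; rfl
  | succ j ih =>
    have hjJ : j < J := by omega
    have hcomb := convex_comb_sq_add_inner_eq hε.ne' τ z (estimateCenter τ ε y r j) (y j) (r j)
    rw [horth j hjJ, mul_zero, add_zero] at hcomb
    have hgap : 0 ≤ τ*(1-τ) * (ε/2 * ‖estimateCenter τ ε y r j - y j‖^2) := by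
      have : 0 ≤ 1 - τ := by linarith
      positivity
    have hΦj := mul_le_mul_of_nonneg_left (ih hjJ.le) hτ0
    rw [hΦrec j hjJ, estimateCenter]
    linarith [hdecr j hjJ]

theorem one_sub_sqrt_div_sq_div_le {κ ε : ℝ} (hκ : 0 < κ) (hε : 0 < ε) :
    (1 - √κ / (√κ + 1))^2 / (2*ε) ≤ 1 / (2*(κ*ε)) := by
  have hs : 0 < √κ := Real.sqrt_pos.mpr hκ
  have hκs : κ = √κ^2 := (Real.sq_sqrt hκ.le).symm
  set s := √κ
  rw [hκs]
  field_simp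
  nlinarith

structure IsCGRun (A : E →L[ℝ] E) (g : E) (J : ℕ) (y r p : ℕ → E) (α : ℕ → ℝ) : Prop where
  y_zero : y 0 = 0
  r_zero : r 0 = g
  p_zero : p 0 = -g
  α_eq : ∀ j < J, α j = ‖r j‖^2 / ⟪p j, A (p j)⟫
  y_succ : ∀ j < J, y (j+1) = y j + α j • p j
  r_succ : ∀ j < J, r (j+1) = r j + α j • A (p j)
  p_succ : ∀ j < J, p (j+1) = -(r (j+1)) + (‖r (j+1)‖^2 / ‖r j‖^2) • p j
  r_ne_zero : ∀ j < J, r j ≠ 0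
  curvature_pos : ∀ j < J, p j ≠ 0 → 0 < ⟪p j, A (p j)⟫

/-- The Krylov subspace `K_j`. -/
def dirSpan (p : ℕ → E) (j : ℕ) : Submodule ℝ E := Submodule.span ℝ (p '' Set.Iio j)

theorem mem_dirSpan {p : ℕ → E} {i j : ℕ} (h : i < j) : p i ∈ dirSpan p j :=
  Submodule.subset_span ⟨i, h, rfl⟩

theorem dirSpan_mono (p : ℕ → E) {i j : ℕ} (h : i ≤ j) : dirSpan p i ≤ dirSpan p j :=
  Submodule.span_mono (Set.image_mono fun _ hm => lt_of_lt_of_le hm h)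

theorem dirSpan_succ (p : ℕ → E) (j : ℕ) :
    dirSpan p (j+1) = Submodule.span ℝ (insert (p j) (p '' Set.Iio j)) := by
  rw [dirSpan, ← Set.image_insert_eq, ← Order.Iio_succ_eq_insert, Order.succ_eq_add_one]

theorem inner_eq_zero_of_mem_dirSpan {p : ℕ → E} {j : ℕ} {x u : E}
    (hx : ∀ m < j, ⟪x, p m⟫ = 0) (hu : u ∈ dirSpan p j) : ⟪x, u⟫ = 0 := by
  have : dirSpan p j ≤ LinearMap.ker (innerₛₗ ℝ x) :=
    Submodule.span_le.mpr (by rintro _ ⟨m, hm, rfl⟩; exact hx m hm)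
  simpa using this hu

namespace IsCGRun

variable {A : E →L[ℝ] E} {g : E} {J : ℕ} {y r p : ℕ → E} {α : ℕ → ℝ}

theorem r_eq (h : IsCGRun A g J y r p α) : ∀ j ≤ J, r j = A (y j) + g := by
  intro j hj
  induction j with
  | zero => rw [h.r_zero, h.y_zero, map_zero, zero_add]
  | succ j ih =>
    rw [h.r_succ j hj, h.y_succ j hj, map_add, map_smul, ih (by omega)]
    abel

theorem r_mem_dirSpan (h : IsCGRun A g J y r p α) : ∀ j ≤ J, r j ∈ dirSpan p (j+1)
  | 0, _ => by
    rw [h.r_zero, ← neg_neg g, ← h.p_zero]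
    exact neg_mem (mem_dirSpan (Nat.lt_succ_self 0))
  | m + 1, hm => by
    have hr : r (m+1) = (‖r (m+1)‖^2 / ‖r m‖^2) • p m - p (m+1) := by
      rw [h.p_succ m hm]; abel
    rw [hr]
    exact sub_mem (Submodule.smul_mem _ _ (mem_dirSpan (by omega))) (mem_dirSpan (by omega))

theorem inner_r_p_self (h : IsCGRun A g J y r p α) {k : ℕ} (hk : k ≤ J)
    (horth : ∀ m < k, ⟪r k, p m⟫ = 0) : ⟪r k, p k⟫ = -‖r k‖^2 := by
  cases k with
  | zero => rw [h.r_zero, h.p_zero, inner_neg_right, real_inner_self_eq_norm_sq]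
  | succ m =>
    rw [h.p_succ m hk, inner_add_right, inner_neg_right, real_inner_smul_right,
      horth m m.lt_succ_self, real_inner_self_eq_norm_sq, mul_zero, add_zero]

theorem inner_p_A_p_pos_of_inner_r_p (h : IsCGRun A g J y r p α) {k : ℕ} (hk : k < J)
    (hrp : ⟪r k, p k⟫ = -‖r k‖^2) : 0 < ⟪p k, A (p k)⟫ := by
  refine h.curvature_pos k hk fun hp => h.r_ne_zero k hk ?_
  rw [hp, inner_zero_right, zero_eq_neg, sq_eq_zero_iff, norm_eq_zero] at hrp
  exact hrp

theorem alpha_mul_curvature (h : IsCGRun A g J y r p α) {k : ℕ} (hk : k < J)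
    (hrp : ⟪r k, p k⟫ = -‖r k‖^2) : α k * ⟪p k, A (p k)⟫ = ‖r k‖^2 := by
  rw [h.α_eq k hk, div_mul_cancel₀ _ (h.inner_p_A_p_pos_of_inner_r_p hk hrp).ne']

theorem inner_r_succ_p (h : IsCGRun A g J y r p α) {N : ℕ} (hN : N < J)
    (horth : ∀ m < N, ⟪r N, p m⟫ = 0) (hconj : ∀ m < N, ⟪p m, A (p N)⟫ = 0)
    (hrp : ⟪r N, p N⟫ = -‖r N‖^2) : ∀ m < N + 1, ⟪r (N+1), p m⟫ = 0 := by
  intro m hm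
  rw [h.r_succ N hN, inner_add_left, real_inner_smul_left,
    real_inner_comm (p m) (A (p N))]
  rcases Nat.lt_succ_iff_lt_or_eq.mp hm with hmN | rfl
  · rw [horth m hmN, hconj m hmN, mul_zero, add_zero]
  · rw [hrp, h.alpha_mul_curvature hN hrp, neg_add_cancel]

theorem inner_p_A_p_succ (hA : (A : E →ₗ[ℝ] E).IsSymmetric) (h : IsCGRun A g J y r p α)
    {N : ℕ} (hN : N < J) (hconj : ∀ m < N, ⟪p m, A (p N)⟫ = 0)
    (hrp : ∀ k ≤ N, ⟪r k, p k⟫ = -‖r k‖^2) (horth : ∀ m < N + 1, ⟪r (N+1), p m⟫ = 0) :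
    ∀ m < N + 1, ⟪p m, A (p (N+1))⟫ = 0 := by
  intro m hm
  have hmJ : m < J := by omega
  have hrm : ‖r m‖^2 ≠ 0 := pow_ne_zero 2 (norm_ne_zero_iff.mpr (h.r_ne_zero m hmJ))
  have hαm := h.alpha_mul_curvature hmJ (hrp m (by omega))
  have hαne : α m ≠ 0 := by rintro h0; rw [h0, zero_mul] at hαm; exact hrm hαm.symm
  have hrr : ∀ k ≤ N, ⟪r k, r (N+1)⟫ = 0 := fun k hk => by
    rw [real_inner_comm]
    exact inner_eq_zero_of_mem_dirSpan horth
      (dirSpan_mono p (by omega) (h.r_mem_dirSpan k (by omega)))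
  have hAp : α m * ⟪A (p m), r (N+1)⟫ = ⟪r (m+1), r (N+1)⟫ - ⟪r m, r (N+1)⟫ := by
    rw [← real_inner_smul_left, ← inner_sub_left, h.r_succ m hmJ, add_sub_cancel_left]
  have hsym : ⟪p m, A (r (N+1))⟫ = ⟪A (p m), r (N+1)⟫ := (hA (p m) (r (N+1))).symm
  have hexpand : α m * ⟪p m, A (p (N+1))⟫ = -(α m * ⟪A (p m), r (N+1)⟫)
      + ‖r (N+1)‖^2 / ‖r N‖^2 * (α m * ⟪p m, A (p N)⟫) := by
    rw [h.p_succ N hN, map_add, map_neg, map_smul, inner_add_right, inner_neg_right,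
      real_inner_smul_right, hsym]
    ring
  refine (mul_eq_zero.mp ?_).resolve_left hαne
  rw [hexpand, hAp]
  rcases Nat.lt_succ_iff_lt_or_eq.mp hm with hmN | rfl
  · rw [hrr (m+1) hmN, hrr m hmN.le, hconj m hmN]
    ring
  · rw [hαm, hrr m le_rfl, real_inner_self_eq_norm_sq, div_mul_cancel₀ _ hrm]
    ring

theorem orthogonal_and_conjugate (hA : (A : E →ₗ[ℝ] E).IsSymmetric) (h : IsCGRun A g J y r p α) :
    ∀ j ≤ J, (∀ m < j, ⟪r j, p m⟫ = 0) ∧ (∀ m < j, ⟪p m, A (p j)⟫ = 0) := by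
  intro j hj
  induction j using Nat.strong_induction_on with
  | _ j ih =>
    cases j with
    | zero => simp
    | succ N =>
      have hN : N < J := by omega
      have hrp : ∀ k ≤ N, ⟪r k, p k⟫ = -‖r k‖^2 := fun k hk =>
        h.inner_r_p_self (by omega) (ih k (by omega) (by omega)).1
      obtain ⟨horthN, hconjN⟩ := ih N N.lt_succ_self hN.le
      have horth := h.inner_r_succ_p hN horthN hconjN (hrp N le_rfl)
      exact ⟨horth, h.inner_p_A_p_succ hA hN hconjN hrp horth⟩

theorem inner_p_A_p_pos (hA : (A : E →ₗ[ℝ] E).IsSymmetric) (h : IsCGRun A g J y r p α)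
    {j : ℕ} (hj : j < J) : 0 < ⟪p j, A (p j)⟫ :=
  h.inner_p_A_p_pos_of_inner_r_p hj (h.inner_r_p_self hj.le (h.orthogonal_and_conjugate hA j hj.le).1)

theorem inner_A_nonneg_of_mem_dirSpan (hA : (A : E →ₗ[ℝ] E).IsSymmetric)
    (h : IsCGRun A g J y r p α) : ∀ j ≤ J, ∀ u ∈ dirSpan p j, 0 ≤ ⟪u, A u⟫ := by
  intro j hj
  induction j with
  | zero =>
    intro u hu
    obtain rfl : u = 0 := by simpa [dirSpan] using hu
    simp
  | succ j ih =>
    intro u hu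
    obtain ⟨c, w, hw, rfl⟩ := Submodule.mem_span_insert.mp (dirSpan_succ p j ▸ hu)
    have hjJ : j < J := by omega
    have hconj : ⟪A (p j), w⟫ = 0 := inner_eq_zero_of_mem_dirSpan (fun m hm => by
      rw [real_inner_comm]; exact (h.orthogonal_and_conjugate hA j hjJ.le).2 m hm) hw
    have hsym : ⟪p j, A w⟫ = ⟪A (p j), w⟫ := (hA (p j) w).symm
    have hexpand : ⟪c • p j + w, A (c • p j + w)⟫
        = c^2 * ⟪p j, A (p j)⟫ + 2 * c * ⟪A (p j), w⟫ + ⟪w, A w⟫ := by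
      simp only [map_add, map_smul, inner_add_left, inner_add_right, real_inner_smul_left,
        real_inner_smul_right, hsym, real_inner_comm (A (p j)) w]
      ring
    rw [hexpand, hconj, mul_zero, add_zero]
    exact add_nonneg (mul_nonneg (sq_nonneg c) (h.inner_p_A_p_pos hA hjJ).le) (ih hjJ.le w hw)

theorem quad_le_quad_add (hA : (A : E →ₗ[ℝ] E).IsSymmetric) (h : IsCGRun A g J y r p α) :
    ∀ j ≤ J, ∀ u ∈ dirSpan p j, quad A g (y j) ≤ quad A g (y j + u) := by
  intro j hj u hu
  rw [quad_add hA, ← h.r_eq j hj,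
    inner_eq_zero_of_mem_dirSpan (h.orthogonal_and_conjugate hA j hj).1 hu]
  linarith [h.inner_A_nonneg_of_mem_dirSpan hA j hj u hu]

theorem quad_succ_add_le (hA : (A : E →ₗ[ℝ] E).IsSymmetric) (h : IsCGRun A g J y r p α)
    {L : ℝ} (hL : ‖A‖ ≤ L) (hL0 : 0 < L) {j : ℕ} (hj : j < J) :
    quad A g (y (j+1)) + ‖r j‖^2 / (2*L) ≤ quad A g (y j) := by
  have hmem : y j - L⁻¹ • r j - y (j+1) ∈ dirSpan p (j+1) := by
    rw [h.y_succ j hj, show y j - L⁻¹ • r j - (y j + α j • p j) = -(L⁻¹ • r j) - α j • p j by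
      abel]
    exact sub_mem (neg_mem (Submodule.smul_mem _ _ (h.r_mem_dirSpan j hj.le)))
      (Submodule.smul_mem _ _ (mem_dirSpan j.lt_succ_self))
  have hmin := h.quad_le_quad_add hA (j+1) hj _ hmem
  rw [add_sub_cancel] at hmin
  have hstep := quad_sub_smul_grad_add_le hA hL hL0 g (y j)
  rw [← h.r_eq j hj.le] at hstep
  linarith

theorem estimateCenter_sub_mem_dirSpan (h : IsCGRun A g J y r p α) (τ ε : ℝ) :
    ∀ j ≤ J, estimateCenter τ ε y r j - y j ∈ dirSpan p j
  | 0, _ => by simp [estimateCenter]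
  | j + 1, hj => by
    have hrec : estimateCenter τ ε y r (j+1) - y (j+1)
        = τ • (estimateCenter τ ε y r j - y j) - ((1-τ)/ε) • r j - α j • p j := by
      rw [estimateCenter, h.y_succ j hj]
      module
    rw [hrec]
    refine sub_mem (sub_mem (Submodule.smul_mem _ _ (dirSpan_mono p j.le_succ ?_))
      (Submodule.smul_mem _ _ (h.r_mem_dirSpan j (by omega))))
      (Submodule.smul_mem _ _ (mem_dirSpan j.lt_succ_self))
    exact estimateCenter_sub_mem_dirSpan h τ ε j (by omega)

end IsCGRun

end

theorem stmt2_general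
    {n : ℕ} (H : EuclideanSpace ℝ (Fin n) →L[ℝ] EuclideanSpace ℝ (Fin n))
    (hsym : ∀ x y : EuclideanSpace ℝ (Fin n), ⟪H x, y⟫ = ⟪x, H y⟫)
    (ε M : ℝ) (hε : ε ∈ Set.Ioo (0:ℝ) 1) (hM : ‖H‖ ≤ M)
    (Hb : EuclideanSpace ℝ (Fin n) →L[ℝ] EuclideanSpace ℝ (Fin n))
    (hHb : ∀ x : EuclideanSpace ℝ (Fin n), Hb x = H x + (2*ε) • x)
    (κ τ : ℝ)
    (hκ : κ = (M + 2*ε)/ε)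
    (hτ : τ = Real.sqrt κ / (Real.sqrt κ + 1))
    (g : EuclideanSpace ℝ (Fin n))
    (q : EuclideanSpace ℝ (Fin n) → ℝ)
    (hq : ∀ z, q z = 1/2 * ⟪z, Hb z⟫ + ⟪g, z⟫)
    (J : ℕ)
    (y r p : ℕ → EuclideanSpace ℝ (Fin n)) (α : ℕ → ℝ)
    (hy0 : y 0 = 0) (hr0 : r 0 = g) (hp0 : p 0 = -g)
    (hα : ∀ j < J, α j = ‖r j‖^2 / ⟪p j, Hb (p j)⟫)
    (hyrec : ∀ j < J, y (j+1) = y j + α j • p j)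
    (hrrec : ∀ j < J, r (j+1) = r j + α j • Hb (p j))
    (hprec : ∀ j < J, p (j+1) = -(r (j+1)) + (‖r (j+1)‖^2 / ‖r j‖^2) • p j)
    (hrne : ∀ j < J, r j ≠ 0)
    (hpcurv : ∀ j < J, ⟪p j, Hb (p j)⟫ ≥ ε * ‖p j‖^2)
    (Φ : ℕ → EuclideanSpace ℝ (Fin n) → ℝ)
    (hΦ0 : ∀ z, Φ 0 z = q (y 0) + ε/2 * ‖z - y 0‖^2)
    (hΦrec : ∀ j < J, ∀ z, Φ (j+1) z =
      τ * Φ j z + (1-τ) * (q (y j) + ⟪r j, z - y j⟫ + ε/2 * ‖z - y j‖^2)) :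
    ∀ j ≤ J, q (y j) ≤ ⨅ z : EuclideanSpace ℝ (Fin n), Φ j z := by
  obtain ⟨hε0, -⟩ := hε
  have hκ0 : 0 < κ := hκ ▸ div_pos (by linarith [(norm_nonneg H).trans hM]) hε0
  have hA : (Hb : EuclideanSpace ℝ (Fin n) →ₗ[ℝ] _).IsSymmetric := fun x y => by
    simp only [ContinuousLinearMap.coe_coe, hHb, inner_add_left, inner_add_right,
      real_inner_smul_left, real_inner_smul_right, hsym]
  have hL : ‖Hb‖ ≤ κ * ε := by
    refine Hb.opNorm_le_bound (by positivity) fun x => ?_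
    rw [hHb, hκ, div_mul_cancel₀ _ hε0.ne', add_mul]
    refine (norm_add_le _ _).trans (add_le_add ((H.le_opNorm x).trans (by gcongr)) ?_)
    rw [norm_smul, Real.norm_of_nonneg (by positivity)]
  have hτ0 : 0 ≤ τ := hτ ▸ by positivity
  have hτ1 : τ ≤ 1 := hτ ▸ (div_le_one (by positivity)).mpr (by linarith)
  have hcg : IsCGRun Hb g J y r p α := ⟨hy0, hr0, hp0, hα, hyrec, hrrec, hprec, hrne,
    fun j hj hp => (by positivity : 0 < ε * ‖p j‖^2).trans_le (hpcurv j hj)⟩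
  obtain rfl : q = quad Hb g := funext hq
  have hestimate := add_sq_dist_estimateCenter_le hε0 hτ0 hτ1 hΦ0 hΦrec
    (fun j hj => inner_eq_zero_of_mem_dirSpan (hcg.orthogonal_and_conjugate hA j hj.le).1
      (hcg.estimateCenter_sub_mem_dirSpan τ ε j hj.le))
    (fun j hj => by
      have hcoef := hτ ▸ one_sub_sqrt_div_sq_div_le hκ0 hε0
      have hdecr := hcg.quad_succ_add_le hA hL (by positivity) hj
      rw [div_eq_mul_one_div (‖r j‖^2), mul_comm] at hdecr
      nlinarith [sq_nonneg ‖r j‖])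
  intro j hj
  exact le_ciInf fun z => (le_add_of_nonneg_right (by positivity)).trans (hestimate j hj z)

/-- `q(y_j) ≤ Φ_j*` for all `j = 0,…,Ĵ`, where `Φ_j*` is the minimum value of
the estimating function `Φ_j`. -/
theorem stmt2
    {n : ℕ} (H : EuclideanSpace ℝ (Fin n) →L[ℝ] EuclideanSpace ℝ (Fin n))
    (hsym : ∀ x y : EuclideanSpace ℝ (Fin n), ⟪H x, y⟫ = ⟪x, H y⟫)
    (ε M : ℝ) (hε : ε ∈ Set.Ioo (0:ℝ) 1) (hM : ‖H‖ ≤ M)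
    (Hb : EuclideanSpace ℝ (Fin n) →L[ℝ] EuclideanSpace ℝ (Fin n))
    (hHb : ∀ x : EuclideanSpace ℝ (Fin n), Hb x = H x + (2*ε) • x)
    (κ τ : ℝ)
    (hκ : κ = (M + 2*ε)/ε)
    (hτ : τ = Real.sqrt κ / (Real.sqrt κ + 1))
    (g : EuclideanSpace ℝ (Fin n)) (hg : g ≠ 0)
    (q : EuclideanSpace ℝ (Fin n) → ℝ)
    (hq : ∀ z, q z = 1/2 * ⟪z, Hb z⟫ + ⟪g, z⟫)
    (J : ℕ)
    (y r p : ℕ → EuclideanSpace ℝ (Fin n)) (α : ℕ → ℝ)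
    (hy0 : y 0 = 0) (hr0 : r 0 = g) (hp0 : p 0 = -g)
    (hα : ∀ j < J, α j = ‖r j‖^2 / ⟪p j, Hb (p j)⟫)
    (hyrec : ∀ j < J, y (j+1) = y j + α j • p j)
    (hrrec : ∀ j < J, r (j+1) = r j + α j • Hb (p j))
    (hprec : ∀ j < J, p (j+1) = -(r (j+1)) + (‖r (j+1)‖^2 / ‖r j‖^2) • p j)
    (hrne : ∀ j < J, r j ≠ 0)
    (hpcurv : ∀ j < J, ⟪p j, Hb (p j)⟫ ≥ ε * ‖p j‖^2)
    (Φ : ℕ → EuclideanSpace ℝ (Fin n) → ℝ)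
    (hΦ0 : ∀ z, Φ 0 z = q (y 0) + ε/2 * ‖z - y 0‖^2)
    (hΦrec : ∀ j < J, ∀ z, Φ (j+1) z =
      τ * Φ j z + (1-τ) * (q (y j) + ⟪r j, z - y j⟫ + ε/2 * ‖z - y j‖^2)) :
    ∀ j ≤ J, q (y j) ≤ ⨅ z : EuclideanSpace ℝ (Fin n), Φ j z :=
  stmt2_general H hsym ε M hε hM Hb hHb κ τ hκ hτ g q hq J y r p α hy0 hr0 hp0 hα hyrec hrrec hprec
    hrne hpcurv Φ hΦ0 hΦrec
end

section
/- Let ε > 0, let H be a symmetric n×n real matrix with ‖H‖ ≤ M, and set H̄ = H + 2εI. Let y_j, r_j, p_j (j = 0,…,Ĵ+1) be CG iterates for H̄ and g ≠ 0, well defined with p_jᵀ H̄ p_j > 0 and r_j ≠ 0 for j = 0,…,Ĵ−1, and suppose p_Ĵᵀ H̄ p_Ĵ ≥ ε‖p_Ĵ‖² with p_Ĵ ≠ 0. Then q(y_Ĵ) − q(y_{Ĵ+1}) ≥ (ε / (2(M+2ε)²)) ‖r_Ĵ‖². -/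
/-!
The invariant `⟪p, r⟫ = -‖r‖²`, `⟪r, H̄ p⟫ = -⟪p, H̄ p⟫` propagates along the CG recursion
(the second identity encodes the H̄-conjugacy of successive directions). At step `Ĵ`, the
first gives the exact-line-search decrease `q(y_Ĵ) - q(y_{Ĵ+1}) = ‖r‖⁴ / (2c)` with
`c = ⟪p, H̄ p⟫`, and the second, with Cauchy–Schwarz and `ε‖p‖² ≤ c`, gives
`c² ≤ ‖H̄‖² ‖r‖² ‖p‖² ≤ ‖H̄‖² ‖r‖² c / ε`, i.e. `ε c ≤ ‖H̄‖² ‖r‖²`.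
-/

open RealInnerProductSpace

variable {E : Type*} [NormedAddCommGroup E] [InnerProductSpace ℝ E]

section Operator

variable {A B : E →L[ℝ] E} {s : ℝ}

theorem ContinuousLinearMap.isSymmetric_of_apply_eq_add_smul
    (hA : (A : E →ₗ[ℝ] E).IsSymmetric) (hB : ∀ x, B x = A x + s • x) :
    (B : E →ₗ[ℝ] E).IsSymmetric := fun x z => by
  simp only [ContinuousLinearMap.coe_coe, hB, inner_add_left, inner_add_right,
    real_inner_smul_left, real_inner_smul_right]
  rw [show ⟪A x, z⟫ = ⟪x, A z⟫ from hA x z]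

theorem ContinuousLinearMap.opNorm_le_of_apply_eq_add_smul (hB : ∀ x, B x = A x + s • x) :
    ‖B‖ ≤ ‖A‖ + |s| :=
  B.opNorm_le_bound (by positivity) fun x =>
    calc ‖B x‖ ≤ ‖A x‖ + ‖s • x‖ := hB x ▸ norm_add_le _ _
      _ ≤ ‖A‖ * ‖x‖ + |s| * ‖x‖ := by
        rw [norm_smul, Real.norm_eq_abs]; gcongr; exact A.le_opNorm x
      _ = (‖A‖ + |s|) * ‖x‖ := by ring

theorem mul_inner_self_apply_le_opNorm_sq_mul_norm_sq {ε : ℝ} {p r : E} (hε : 0 ≤ ε)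
    (hcurv : ε * ‖p‖ ^ 2 ≤ ⟪p, A p⟫) (hrAp : ⟪r, A p⟫ = -⟪p, A p⟫) :
    ε * ⟪p, A p⟫ ≤ ‖A‖ ^ 2 * ‖r‖ ^ 2 := by
  set c := ⟪p, A p⟫
  have hc : 0 ≤ c := le_trans (by positivity) hcurv
  have hcle : c ≤ ‖A‖ * ‖r‖ * ‖p‖ :=
    calc c = -⟪r, A p⟫ := by rw [hrAp, neg_neg]
      _ ≤ ‖r‖ * ‖A p‖ := (neg_le_abs _).trans (abs_real_inner_le_norm r (A p))
      _ ≤ ‖r‖ * (‖A‖ * ‖p‖) := by gcongr; exact A.le_opNorm p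
      _ = ‖A‖ * ‖r‖ * ‖p‖ := by ring
  have hsq : ε * c * c ≤ ‖A‖ ^ 2 * ‖r‖ ^ 2 * c :=
    calc ε * c * c ≤ ε * (‖A‖ * ‖r‖ * ‖p‖) ^ 2 := by
          rw [mul_assoc, ← sq]; gcongr
      _ = ‖A‖ ^ 2 * ‖r‖ ^ 2 * (ε * ‖p‖ ^ 2) := by ring
      _ ≤ ‖A‖ ^ 2 * ‖r‖ ^ 2 * c := by gcongr
  rcases hc.eq_or_lt with hc0 | hcpos
  · rw [← hc0, mul_zero]; positivity
  · exact le_of_mul_le_mul_right hsq hcpos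

end Operator

section ConjugateGradient

variable {A : E →L[ℝ] E}

variable (A) in
def CGInvariant (p r : E) : Prop :=
  ⟪p, r⟫ = -‖r‖ ^ 2 ∧ ⟪r, A p⟫ = -⟪p, A p⟫

theorem cgInvariant_neg_self (g : E) : CGInvariant A (-g) g := by
  constructor
  · rw [inner_neg_left, real_inner_self_eq_norm_sq]
  · rw [map_neg, inner_neg_left, inner_neg_right, neg_neg]

theorem CGInvariant.step (hA : (A : E →ₗ[ℝ] E).IsSymmetric) {p r p' r' : E}
    (h : CGInvariant A p r) (hc : ⟪p, A p⟫ ≠ 0) (hr : r ≠ 0)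
    (hr' : r' = r + (‖r‖ ^ 2 / ⟪p, A p⟫) • A p)
    (hp' : p' = -r' + (‖r'‖ ^ 2 / ‖r‖ ^ 2) • p) :
    CGInvariant A p' r' := by
  set c := ⟪p, A p⟫
  set α := ‖r‖ ^ 2 / c
  have hr2 : ‖r‖ ^ 2 ≠ 0 := by positivity
  have hαc : α * c = ‖r‖ ^ 2 := div_mul_cancel₀ _ hc
  have hpr' : ⟪p, r'⟫ = 0 := by
    rw [hr', inner_add_right, real_inner_smul_right, h.1, hαc, neg_add_cancel]
  have hrr' : ⟪r, r'⟫ = 0 := by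
    rw [hr', inner_add_right, real_inner_smul_right, h.2, real_inner_self_eq_norm_sq,
      mul_neg, hαc, add_neg_cancel]
  have hApr' : α * ⟪A p, r'⟫ = ‖r'‖ ^ 2 := by
    have hsq : ‖r'‖ ^ 2 = ⟪r + α • A p, r'⟫ := by rw [← hr', real_inner_self_eq_norm_sq]
    rw [hsq, inner_add_left, real_inner_smul_left, hrr', zero_add]
  have hconj : ⟪p, A p'⟫ = 0 := by
    rw [← ContinuousLinearMap.coe_coe, ← hA, ContinuousLinearMap.coe_coe, hp', inner_add_right,
      inner_neg_right, real_inner_smul_right, real_inner_comm p, ← hApr']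
    simp only [α]
    field_simp
    ring
  have hrp' : r' = -p' + (‖r'‖ ^ 2 / ‖r‖ ^ 2) • p := by rw [hp']; abel
  constructor
  · rw [hp', inner_add_left, inner_neg_left, real_inner_smul_left, hpr',
      real_inner_self_eq_norm_sq, mul_zero, add_zero]
  · rw [hrp', inner_add_left, inner_neg_left, real_inner_smul_left, hconj, mul_zero, add_zero]

variable {g : E} {y r p : ℕ → E} {α : ℕ → ℝ} {J : ℕ}

theorem cgInvariant_of_le (hA : (A : E →ₗ[ℝ] E).IsSymmetric) (hr0 : r 0 = g) (hp0 : p 0 = -g)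
    (hα : ∀ j < J, α j = ‖r j‖ ^ 2 / ⟪p j, A (p j)⟫)
    (hrrec : ∀ j < J, r (j + 1) = r j + α j • A (p j))
    (hprec : ∀ j < J, p (j + 1) = -r (j + 1) + (‖r (j + 1)‖ ^ 2 / ‖r j‖ ^ 2) • p j)
    (hcurv : ∀ j < J, ⟪p j, A (p j)⟫ ≠ 0) (hrne : ∀ j < J, r j ≠ 0) :
    ∀ j ≤ J, CGInvariant A (p j) (r j) := by
  intro j
  induction j with
  | zero => intro _; rw [hr0, hp0]; exact cgInvariant_neg_self g
  | succ j ih =>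
    intro hj
    have hjJ : j < J := hj
    exact (ih hjJ.le).step hA (hcurv j hjJ) (hrne j hjJ) (hα j hjJ ▸ hrrec j hjJ)
      (hprec j hjJ)

theorem residual_eq_apply_add (hy0 : y 0 = 0) (hr0 : r 0 = g)
    (hyrec : ∀ j < J, y (j + 1) = y j + α j • p j)
    (hrrec : ∀ j < J, r (j + 1) = r j + α j • A (p j)) :
    ∀ j ≤ J, r j = A (y j) + g := by
  intro j
  induction j with
  | zero => intro _; rw [hy0, hr0, map_zero, zero_add]
  | succ j ih =>
    intro hj
    have hjJ : j < J := hj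
    rw [hrrec j hjJ, hyrec j hjJ, map_add, map_smul, ih hjJ.le]
    abel

end ConjugateGradient

theorem quadratic_sub_quadratic_add_smul {A : E →L[ℝ] E} (hA : (A : E →ₗ[ℝ] E).IsSymmetric)
    {g : E} {q : E → ℝ} (hq : ∀ z, q z = 1 / 2 * ⟪z, A z⟫ + ⟪g, z⟫) {y p : E} {R : ℝ}
    (hpr : ⟪p, A y + g⟫ = -R) (hc : ⟪p, A p⟫ ≠ 0) :
    q y - q (y + (R / ⟪p, A p⟫) • p) = R ^ 2 / (2 * ⟪p, A p⟫) := by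
  have hyAp : ⟪y, A p⟫ = ⟪p, A y⟫ := by
    rw [← ContinuousLinearMap.coe_coe, ← hA, real_inner_comm]
  have hexpand : ∀ t : ℝ, q (y + t • p) = q y + t * ⟪p, A y + g⟫ + t ^ 2 / 2 * ⟪p, A p⟫ := by
    intro t
    simp only [hq, map_add, map_smul, inner_add_left, inner_add_right, real_inner_smul_left,
      real_inner_smul_right, hyAp, real_inner_comm p g]
    ring
  rw [hexpand, hpr]
  field_simp
  ring

theorem stmt3_general
    {n : ℕ} (H : EuclideanSpace ℝ (Fin n) →L[ℝ] EuclideanSpace ℝ (Fin n))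
    (hsym : ∀ x y : EuclideanSpace ℝ (Fin n), ⟪H x, y⟫ = ⟪x, H y⟫)
    (ε M : ℝ) (hε : 0 < ε) (hM : ‖H‖ ≤ M)
    (Hb : EuclideanSpace ℝ (Fin n) →L[ℝ] EuclideanSpace ℝ (Fin n))
    (hHb : ∀ x : EuclideanSpace ℝ (Fin n), Hb x = H x + (2*ε) • x)
    (g : EuclideanSpace ℝ (Fin n))
    (q : EuclideanSpace ℝ (Fin n) → ℝ)
    (hq : ∀ z, q z = 1/2 * ⟪z, Hb z⟫ + ⟪g, z⟫)
    (J : ℕ)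
    (y r p : ℕ → EuclideanSpace ℝ (Fin n)) (α : ℕ → ℝ)
    (hy0 : y 0 = 0) (hr0 : r 0 = g) (hp0 : p 0 = -g)
    (hα : ∀ j ≤ J, α j = ‖r j‖^2 / ⟪p j, Hb (p j)⟫)
    (hyrec : ∀ j ≤ J, y (j+1) = y j + α j • p j)
    (hrrec : ∀ j ≤ J, r (j+1) = r j + α j • Hb (p j))
    (hprec : ∀ j ≤ J, p (j+1) = -(r (j+1)) + (‖r (j+1)‖^2 / ‖r j‖^2) • p j)
    (hpcurv : ∀ j < J, 0 < ⟪p j, Hb (p j)⟫)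
    (hrne : ∀ j < J, r j ≠ 0)
    (hpJcurv : ⟪p J, Hb (p J)⟫ ≥ ε * ‖p J‖^2)
    (hpJ : p J ≠ 0) :
    q (y J) - q (y (J+1)) ≥ ε / (2 * (M + 2*ε)^2) * ‖r J‖^2 := by
  have hHbsym := ContinuousLinearMap.isSymmetric_of_apply_eq_add_smul hsym hHb
  have hHbnorm : ‖Hb‖ ≤ M + 2 * ε := by
    have := ContinuousLinearMap.opNorm_le_of_apply_eq_add_smul hHb
    rw [abs_of_pos (by positivity)] at this
    linarith
  have hinv := cgInvariant_of_le hHbsym hr0 hp0 (fun j hj => hα j hj.le)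
    (fun j hj => hrrec j hj.le) (fun j hj => hprec j hj.le) (fun j hj => (hpcurv j hj).ne')
    hrne J le_rfl
  have hres := residual_eq_apply_add hy0 hr0 (fun j hj => hyrec j hj.le)
    (fun j hj => hrrec j hj.le) J le_rfl
  have hc : 0 < ⟪p J, Hb (p J)⟫ :=
    lt_of_lt_of_le (mul_pos hε (pow_pos (norm_pos_iff.mpr hpJ) 2)) hpJcurv
  have hdec : q (y J) - q (y (J + 1)) = ‖r J‖ ^ 4 / (2 * ⟪p J, Hb (p J)⟫) := by
    rw [hyrec J le_rfl, hα J le_rfl,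
      quadratic_sub_quadratic_add_smul hHbsym hq (hres ▸ hinv.1) hc.ne']
    ring
  have hbound : ε * ⟪p J, Hb (p J)⟫ ≤ (M + 2 * ε) ^ 2 * ‖r J‖ ^ 2 :=
    (mul_inner_self_apply_le_opNorm_sq_mul_norm_sq hε.le hpJcurv hinv.2).trans
      (by gcongr)
  have hL : 0 < M + 2 * ε := by linarith [(norm_nonneg H).trans hM]
  rw [hdec, ge_iff_le, div_mul_eq_mul_div, div_le_div_iff₀ (by positivity) (by positivity)]
  nlinarith [mul_le_mul_of_nonneg_left hbound (sq_nonneg ‖r J‖)]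

/-- The decrease in the CG quadratic at step `Ĵ` is at least
`(ε / (2(M+2ε)²)) ‖r_Ĵ‖²`. -/
theorem stmt3
    {n : ℕ} (H : EuclideanSpace ℝ (Fin n) →L[ℝ] EuclideanSpace ℝ (Fin n))
    (hsym : ∀ x y : EuclideanSpace ℝ (Fin n), ⟪H x, y⟫ = ⟪x, H y⟫)
    (ε M : ℝ) (hε : 0 < ε) (hM : ‖H‖ ≤ M)
    (Hb : EuclideanSpace ℝ (Fin n) →L[ℝ] EuclideanSpace ℝ (Fin n))
    (hHb : ∀ x : EuclideanSpace ℝ (Fin n), Hb x = H x + (2*ε) • x)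
    (g : EuclideanSpace ℝ (Fin n)) (hg : g ≠ 0)
    (q : EuclideanSpace ℝ (Fin n) → ℝ)
    (hq : ∀ z, q z = 1/2 * ⟪z, Hb z⟫ + ⟪g, z⟫)
    (J : ℕ)
    (y r p : ℕ → EuclideanSpace ℝ (Fin n)) (α : ℕ → ℝ)
    (hy0 : y 0 = 0) (hr0 : r 0 = g) (hp0 : p 0 = -g)
    (hα : ∀ j ≤ J, α j = ‖r j‖^2 / ⟪p j, Hb (p j)⟫)
    (hyrec : ∀ j ≤ J, y (j+1) = y j + α j • p j)
    (hrrec : ∀ j ≤ J, r (j+1) = r j + α j • Hb (p j))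
    (hprec : ∀ j ≤ J, p (j+1) = -(r (j+1)) + (‖r (j+1)‖^2 / ‖r j‖^2) • p j)
    (hpcurv : ∀ j < J, 0 < ⟪p j, Hb (p j)⟫)
    (hrne : ∀ j < J, r j ≠ 0)
    (hpJcurv : ⟪p J, Hb (p J)⟫ ≥ ε * ‖p J‖^2)
    (hpJ : p J ≠ 0) :
    q (y J) - q (y (J+1)) ≥ ε / (2 * (M + 2*ε)^2) * ‖r J‖^2 :=
  stmt3_general H hsym ε M hε hM Hb hHb g q hq J y r p α hy0 hr0 hp0 hα hyrec hrrec hprec hpcurv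
    hrne hpJcurv hpJ
end

section
/- Let ε > 0, τ ∈ (0,1), and T > 0. Let y_j, r_j, p_j (j = 0,…,Ĵ+1) be CG iterates for a symmetric matrix H̄ and vector g ≠ 0, with r_j ≠ 0 and p_jᵀ H̄ p_j ≥ ε‖p_j‖² for all j = 0,…,Ĵ. Suppose ‖r_i‖ ≤ √T·τ^{i/2}‖r_0‖ for i = 0,…,Ĵ−1, that ‖r_Ĵ‖ ≥ √T·τ^{Ĵ/2}‖r_0‖, and that q(y_{Ĵ+1}) ≥ q(y_0) + r_0ᵀ(y_{Ĵ+1}−y_0) + (ε/2)‖y_{Ĵ+1}−y_0‖². Then q(y_0) − q(y_{Ĵ+1}) + (ε/2)‖y_0 − y_{Ĵ+1}‖² ≤ ‖r_0‖·‖r_Ĵ‖·τ^{−Ĵ/2} / (ε(1−√τ)). -/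
open RealInnerProductSpace

/-!
Each CG direction satisfies `⟪p_j, r_j⟫ = -‖r_j‖²`, because the new residual is orthogonal to
the old direction. By Cauchy–Schwarz `‖r_j‖ ≤ ‖p_j‖`, so with curvature at least `ε` along
`p_j` the step `α_j p_j` has length at most `‖r_j‖ / ε`. The residual bounds give
`‖r_j‖ ≤ √τ^j · ‖r_Ĵ‖ / √τ^Ĵ` for `j ≤ Ĵ`, and summing the geometric series bounds
`‖y_{Ĵ+1} - y_0‖` by `‖r_Ĵ‖ √τ^{-Ĵ} / (ε (1 - √τ))`. Finally the lower bound on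
`q(y_{Ĵ+1})` turns the left-hand side into at most `-⟪r_0, y_{Ĵ+1} - y_0⟫ ≤ ‖r_0‖ ‖y_{Ĵ+1} - y_0‖`.
-/

section ConjugateGradient

variable {E : Type*} [NormedAddCommGroup E] [InnerProductSpace ℝ E] (H : E → E)

theorem norm_le_of_inner_eq_neg_norm_sq {p r : E} (hpr : ⟪p, r⟫ = -‖r‖ ^ 2) : ‖r‖ ≤ ‖p‖ := by
  have hcs := abs_real_inner_le_norm p r
  rw [hpr, abs_neg, abs_of_nonneg (by positivity), sq] at hcs
  rcases (norm_nonneg r).eq_or_lt with hr | hr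
  · rw [← hr]; exact norm_nonneg p
  · exact le_of_mul_le_mul_right hcs hr

theorem inner_next_direction_residual {p r r' : E} {α : ℝ} (β : ℝ)
    (hpr : ⟪p, r⟫ = -‖r‖ ^ 2) (hpHp : ⟪p, H p⟫ ≠ 0) (hα : α = ‖r‖ ^ 2 / ⟪p, H p⟫)
    (hr' : r' = r + α • H p) :
    ⟪-r' + β • p, r'⟫ = -‖r'‖ ^ 2 := by
  have horth : ⟪p, r'⟫ = 0 := by
    rw [hr', inner_add_right, real_inner_smul_right, hα, hpr, div_mul_cancel₀ _ hpHp]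
    ring
  rw [inner_add_left, inner_neg_left, real_inner_self_eq_norm_sq, real_inner_smul_left, horth,
    mul_zero, add_zero]

theorem inner_direction_residual_eq_neg_norm_sq {ε : ℝ} (hε : 0 < ε) {J : ℕ}
    {r p : ℕ → E} {α : ℕ → ℝ} (hp0 : p 0 = -r 0)
    (hα : ∀ j ≤ J, α j = ‖r j‖ ^ 2 / ⟪p j, H (p j)⟫)
    (hrrec : ∀ j ≤ J, r (j + 1) = r j + α j • H (p j))
    (hprec : ∀ j ≤ J, ∃ β : ℝ, p (j + 1) = -r (j + 1) + β • p j)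
    (hrne : ∀ j ≤ J, r j ≠ 0) (hpcurv : ∀ j ≤ J, ε * ‖p j‖ ^ 2 ≤ ⟪p j, H (p j)⟫) :
    ∀ j ≤ J, ⟪p j, r j⟫ = -‖r j‖ ^ 2 := by
  intro j
  induction j with
  | zero =>
    intro _
    rw [hp0, inner_neg_left, real_inner_self_eq_norm_sq]
  | succ k ih =>
    intro hk
    have hkJ : k ≤ J := k.le_succ.trans hk
    have hpk : 0 < ‖p k‖ :=
      (norm_pos_iff.2 (hrne k hkJ)).trans_le (norm_le_of_inner_eq_neg_norm_sq (ih hkJ))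
    have hpHp : 0 < ⟪p k, H (p k)⟫ := (by positivity : 0 < ε * ‖p k‖ ^ 2).trans_le (hpcurv k hkJ)
    obtain ⟨β, hβ⟩ := hprec k hkJ
    rw [hβ]
    exact inner_next_direction_residual H β (ih hkJ) hpHp.ne' (hα k hkJ) (hrrec k hkJ)

theorem norm_step_le_norm_residual_div {ε : ℝ} (hε : 0 < ε) {p r : E}
    (hcurv : ε * ‖p‖ ^ 2 ≤ ⟪p, H p⟫) (hrp : ‖r‖ ≤ ‖p‖) :
    ‖(‖r‖ ^ 2 / ⟪p, H p⟫) • p‖ ≤ ‖r‖ / ε := by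
  rcases eq_or_ne p 0 with rfl | hp
  · rw [smul_zero, norm_zero]; positivity
  have hpH : 0 < ⟪p, H p⟫ := (by positivity : 0 < ε * ‖p‖ ^ 2).trans_le hcurv
  rw [norm_smul, Real.norm_of_nonneg (by positivity), div_mul_eq_mul_div,
    div_le_div_iff₀ hpH hε]
  calc ‖r‖ ^ 2 * ‖p‖ * ε = ‖r‖ * (‖r‖ * ‖p‖ * ε) := by ring
    _ ≤ ‖r‖ * (‖p‖ * ‖p‖ * ε) := by gcongr
    _ = ‖r‖ * (ε * ‖p‖ ^ 2) := by ring
    _ ≤ ‖r‖ * ⟪p, H p⟫ := by gcongr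

end ConjugateGradient

theorem sum_range_succ_le_of_le_geometric {a : ℕ → ℝ} {s C : ℝ} {J : ℕ} (hs0 : 0 < s)
    (hs1 : s < 1) (ha : ∀ i < J, a i ≤ C * s ^ i) (haJ : C * s ^ J ≤ a J) (haJ0 : 0 ≤ a J) :
    ∑ i ∈ Finset.range (J + 1), a i ≤ a J * (s ^ J)⁻¹ / (1 - s) := by
  have hsJ : 0 < s ^ J := pow_pos hs0 J
  have hC : C ≤ a J * (s ^ J)⁻¹ := by rwa [← div_eq_mul_inv, le_div_iff₀ hsJ]
  have hterm : ∀ i ∈ Finset.range (J + 1), a i ≤ s ^ i * (a J * (s ^ J)⁻¹) := by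
    intro i hi
    rcases (Nat.lt_succ_iff.1 (Finset.mem_range.1 hi)).lt_or_eq with hiJ | rfl
    · calc a i ≤ C * s ^ i := ha i hiJ
        _ ≤ a J * (s ^ J)⁻¹ * s ^ i := by gcongr
        _ = _ := by ring
    · rw [mul_comm (a i), ← mul_assoc, mul_inv_cancel₀ hsJ.ne', one_mul]
  calc ∑ i ∈ Finset.range (J + 1), a i
      ≤ (∑ i ∈ Finset.range (J + 1), s ^ i) * (a J * (s ^ J)⁻¹) := by
        rw [Finset.sum_mul]; exact Finset.sum_le_sum hterm
    _ ≤ 1 / (1 - s) * (a J * (s ^ J)⁻¹) := by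
        gcongr
        simpa using geom_sum_Ico_le_of_lt_one (m := 0) (n := J + 1) hs0.le hs1
    _ = a J * (s ^ J)⁻¹ / (1 - s) := by ring

theorem stmt4_general
    {n : ℕ} (Hb : EuclideanSpace ℝ (Fin n) →L[ℝ] EuclideanSpace ℝ (Fin n))
    (ε τ T : ℝ) (hε : 0 < ε) (hτ : τ ∈ Set.Ioo (0:ℝ) 1)
    (g : EuclideanSpace ℝ (Fin n))
    (q : EuclideanSpace ℝ (Fin n) → ℝ)
    (J : ℕ)
    (y r p : ℕ → EuclideanSpace ℝ (Fin n)) (α : ℕ → ℝ)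
    (hr0 : r 0 = g) (hp0 : p 0 = -g)
    (hα : ∀ j ≤ J, α j = ‖r j‖^2 / ⟪p j, Hb (p j)⟫)
    (hyrec : ∀ j ≤ J, y (j+1) = y j + α j • p j)
    (hrrec : ∀ j ≤ J, r (j+1) = r j + α j • Hb (p j))
    (hprec : ∀ j ≤ J, p (j+1) = -(r (j+1)) + (‖r (j+1)‖^2 / ‖r j‖^2) • p j)
    (hrne : ∀ j ≤ J, r j ≠ 0)
    (hpcurv : ∀ j ≤ J, ⟪p j, Hb (p j)⟫ ≥ ε * ‖p j‖^2)
    (hres : ∀ i < J, ‖r i‖ ≤ Real.sqrt T * Real.sqrt τ ^ i * ‖r 0‖)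
    (hresJ : ‖r J‖ ≥ Real.sqrt T * Real.sqrt τ ^ J * ‖r 0‖)
    (hstrong : q (y (J+1)) ≥
      q (y 0) + ⟪r 0, y (J+1) - y 0⟫ + ε/2 * ‖y (J+1) - y 0‖^2) :
    q (y 0) - q (y (J+1)) + ε/2 * ‖y 0 - y (J+1)‖^2 ≤
      ‖r 0‖ * ‖r J‖ * (Real.sqrt τ ^ J)⁻¹ / (ε * (1 - Real.sqrt τ)) := by
  have hs0 : 0 < Real.sqrt τ := Real.sqrt_pos.2 hτ.1
  have hs1 : Real.sqrt τ < 1 := (Real.sqrt_lt' one_pos).2 (by simpa using hτ.2)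
  have hinner := inner_direction_residual_eq_neg_norm_sq Hb hε (by rw [hp0, hr0]) hα hrrec
    (fun j hj => ⟨_, hprec j hj⟩) hrne hpcurv
  have hdist : ‖y 0 - y (J + 1)‖ ≤ ∑ j ∈ Finset.range (J + 1), ‖r j‖ / ε := by
    rw [← dist_eq_norm]
    refine dist_le_range_sum_of_dist_le (J + 1) fun {j} hj => ?_
    have hjJ := Nat.lt_succ_iff.1 hj
    rw [dist_comm, dist_eq_norm, hyrec j hjJ, add_sub_cancel_left, hα j hjJ]
    exact norm_step_le_norm_residual_div Hb hε (hpcurv j hjJ)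
      (norm_le_of_inner_eq_neg_norm_sq (hinner j hjJ))
  have hsum := sum_range_succ_le_of_le_geometric (a := fun j => ‖r j‖)
    (C := Real.sqrt T * ‖r 0‖) hs0 hs1
    (fun i hi => (hres i hi).trans_eq (by ring)) (hresJ.trans_eq' (by ring)) (norm_nonneg _)
  have hlhs : q (y 0) - q (y (J + 1)) + ε / 2 * ‖y 0 - y (J + 1)‖ ^ 2
      ≤ ‖r 0‖ * ‖y 0 - y (J + 1)‖ := by
    have hcs := neg_le_of_abs_le (abs_real_inner_le_norm (r 0) (y (J + 1) - y 0))
    rw [norm_sub_rev (y 0)]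
    linarith
  calc q (y 0) - q (y (J + 1)) + ε / 2 * ‖y 0 - y (J + 1)‖ ^ 2
      ≤ ‖r 0‖ * ‖y 0 - y (J + 1)‖ := hlhs
    _ ≤ ‖r 0‖ * ((∑ j ∈ Finset.range (J + 1), ‖r j‖) / ε) := by
        rw [← Finset.sum_div] at hdist; gcongr
    _ ≤ ‖r 0‖ * (‖r J‖ * (Real.sqrt τ ^ J)⁻¹ / (1 - Real.sqrt τ) / ε) := by gcongr
    _ = ‖r 0‖ * ‖r J‖ * (Real.sqrt τ ^ J)⁻¹ / (ε * (1 - Real.sqrt τ)) := by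
        rw [div_div, mul_comm (1 - _)]; ring

/-- Bound on `q(y_0) − q(y_{Ĵ+1}) + (ε/2)‖y_0 − y_{Ĵ+1}‖²` in terms of the
residual norms, under slow residual decay. -/
theorem stmt4
    {n : ℕ} (Hb : EuclideanSpace ℝ (Fin n) →L[ℝ] EuclideanSpace ℝ (Fin n))
    (hsym : ∀ x y : EuclideanSpace ℝ (Fin n), ⟪Hb x, y⟫ = ⟪x, Hb y⟫)
    (ε τ T : ℝ) (hε : 0 < ε) (hτ : τ ∈ Set.Ioo (0:ℝ) 1) (hT : 0 < T)
    (g : EuclideanSpace ℝ (Fin n)) (hg : g ≠ 0)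
    (q : EuclideanSpace ℝ (Fin n) → ℝ)
    (hq : ∀ z, q z = 1/2 * ⟪z, Hb z⟫ + ⟪g, z⟫)
    (J : ℕ)
    (y r p : ℕ → EuclideanSpace ℝ (Fin n)) (α : ℕ → ℝ)
    (hy0 : y 0 = 0) (hr0 : r 0 = g) (hp0 : p 0 = -g)
    (hα : ∀ j ≤ J, α j = ‖r j‖^2 / ⟪p j, Hb (p j)⟫)
    (hyrec : ∀ j ≤ J, y (j+1) = y j + α j • p j)
    (hrrec : ∀ j ≤ J, r (j+1) = r j + α j • Hb (p j))
    (hprec : ∀ j ≤ J, p (j+1) = -(r (j+1)) + (‖r (j+1)‖^2 / ‖r j‖^2) • p j)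
    (hrne : ∀ j ≤ J, r j ≠ 0)
    (hpcurv : ∀ j ≤ J, ⟪p j, Hb (p j)⟫ ≥ ε * ‖p j‖^2)
    (hres : ∀ i < J, ‖r i‖ ≤ Real.sqrt T * Real.sqrt τ ^ i * ‖r 0‖)
    (hresJ : ‖r J‖ ≥ Real.sqrt T * Real.sqrt τ ^ J * ‖r 0‖)
    (hstrong : q (y (J+1)) ≥
      q (y 0) + ⟪r 0, y (J+1) - y 0⟫ + ε/2 * ‖y (J+1) - y 0‖^2) :
    q (y 0) - q (y (J+1)) + ε/2 * ‖y 0 - y (J+1)‖^2 ≤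
      ‖r 0‖ * ‖r J‖ * (Real.sqrt τ ^ J)⁻¹ / (ε * (1 - Real.sqrt τ)) :=
  stmt4_general Hb ε τ T hε hτ g q J y r p α hr0 hp0 hα hyrec hrrec hprec hrne hpcurv hres hresJ
    hstrong
end

section
/- Let y_j, r_j, p_j (j = 0,…,J) be CG iterates for a symmetric matrix H̄ and vector g ≠ 0, well defined with p_iᵀ H̄ p_i > 0 and r_i ≠ 0 for all i = 0,…,J−1. Then for every i = 0,…,J one has r_iᵀ H̄ r_i ≥ p_iᵀ H̄ p_i. -/
open RealInnerProductSpace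

/-- Property 8 of Lemma A.1: `r_iᵀ H̄ r_i ≥ p_iᵀ H̄ p_i` for all CG iterates. -/
theorem stmt5
    {n : ℕ} (Hb : EuclideanSpace ℝ (Fin n) →L[ℝ] EuclideanSpace ℝ (Fin n))
    (hsym : ∀ x y : EuclideanSpace ℝ (Fin n), ⟪Hb x, y⟫ = ⟪x, Hb y⟫)
    (g : EuclideanSpace ℝ (Fin n)) (hg : g ≠ 0)
    (J : ℕ)
    (y r p : ℕ → EuclideanSpace ℝ (Fin n)) (α : ℕ → ℝ)
    (hy0 : y 0 = 0) (hr0 : r 0 = g) (hp0 : p 0 = -g)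
    (hα : ∀ j < J, α j = ‖r j‖^2 / ⟪p j, Hb (p j)⟫)
    (hyrec : ∀ j < J, y (j+1) = y j + α j • p j)
    (hrrec : ∀ j < J, r (j+1) = r j + α j • Hb (p j))
    (hprec : ∀ j < J, p (j+1) = -(r (j+1)) + (‖r (j+1)‖^2 / ‖r j‖^2) • p j)
    (hpcurv : ∀ i < J, 0 < ⟪p i, Hb (p i)⟫)
    (hrne : ∀ i < J, r i ≠ 0) :
    ∀ i ≤ J, ⟪r i, Hb (r i)⟫ ≥ ⟪p i, Hb (p i)⟫ := by
  have hsym2 : ∀ x z : EuclideanSpace ℝ (Fin n), ⟪x, Hb z⟫ = ⟪z, Hb x⟫ :=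
    fun x z => (hsym x z).symm.trans (real_inner_comm _ _)
  -- ⟪r j, p j⟫ = -‖r j‖²
  have hA : ∀ j ≤ J, ⟪r j, p j⟫ = -‖r j‖^2 := by
    intro j
    induction j with
    | zero =>
      intro _
      rw [hr0, hp0, inner_neg_right, real_inner_self_eq_norm_sq]
    | succ k ih =>
      intro hk
      have hkJ : k < J := hk
      have hne : ⟪p k, Hb (p k)⟫ ≠ 0 := ne_of_gt (hpcurv k hkJ)
      have hrp : ⟪r (k+1), p k⟫ = 0 := by
        rw [hrrec k hkJ, inner_add_left, real_inner_smul_left, hα k hkJ,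
            ih (le_of_lt hkJ), hsym _ _, div_mul_cancel₀ _ hne]
        ring
      rw [hprec k hkJ, inner_add_right, inner_neg_right, real_inner_smul_right,
          hrp, real_inner_self_eq_norm_sq]
      ring
  -- ⟪r (j+1), p j⟫ = 0
  have hrp : ∀ j < J, ⟪r (j+1), p j⟫ = 0 := by
    intro j hj
    have hne : ⟪p j, Hb (p j)⟫ ≠ 0 := ne_of_gt (hpcurv j hj)
    rw [hrrec j hj, inner_add_left, real_inner_smul_left, hα j hj,
        hA j (le_of_lt hj), hsym _ _, div_mul_cancel₀ _ hne]
    ring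
  -- if residuals consecutive-orthogonal at step j, then directions are conjugate
  have hconj : ∀ j < J, ⟪r (j+1), r j⟫ = 0 → ⟪p (j+1), Hb (p j)⟫ = 0 := by
    intro j hj hortho
    have hne : ⟪p j, Hb (p j)⟫ ≠ 0 := ne_of_gt (hpcurv j hj)
    have hrnej : (‖r j‖:ℝ)^2 ≠ 0 :=
      pow_ne_zero 2 (norm_ne_zero_iff.mpr (hrne j hj))
    have hαne : α j ≠ 0 := by
      rw [hα j hj]
      exact div_ne_zero hrnej hne
    have h1 : ‖r (j+1)‖^2 = ⟪r (j+1), r j⟫ + α j * ⟪r (j+1), Hb (p j)⟫ := by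
      rw [← real_inner_self_eq_norm_sq]
      nth_rewrite 2 [hrrec j hj]
      rw [inner_add_right, real_inner_smul_right]
    rw [hortho, zero_add] at h1
    have h2 : ⟪r (j+1), Hb (p j)⟫ = ‖r (j+1)‖^2 / α j := by
      rw [h1, mul_div_cancel_left₀ _ hαne]
    rw [hprec j hj, inner_add_left, inner_neg_left, real_inner_smul_left, h2,
        hα j hj, div_div_eq_mul_div]
    ring
  -- joint induction: consecutive residual orthogonality and direction conjugacy
  have hB : ∀ k, k + 1 ≤ J → ⟪r (k+1), r k⟫ = 0 ∧ ⟪p (k+1), Hb (p k)⟫ = 0 := by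
    intro k
    induction k with
    | zero =>
      intro hk
      have h0 : (0:ℕ) < J := hk
      have hor : ⟪r 1, r 0⟫ = 0 := by
        have h := hrp 0 h0
        rw [hp0, inner_neg_right] at h
        rw [hr0]
        linarith [h]
      exact ⟨hor, hconj 0 h0 hor⟩
    | succ k ih =>
      intro hk
      have hk1 : k + 1 < J := hk
      have hkJ : k < J := lt_trans (Nat.lt_succ_self k) hk1
      obtain ⟨ihor, ihconj⟩ := ih (le_of_lt hk1)
      have hne : ⟪p (k+1), Hb (p (k+1))⟫ ≠ 0 := ne_of_gt (hpcurv (k+1) hk1)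
      have hrr : r (k+1) = -(p (k+1)) + (‖r (k+1)‖^2 / ‖r k‖^2) • p k := by
        rw [hprec k hkJ]; module
      have hor : ⟪r (k+2), r (k+1)⟫ = 0 := by
        rw [hrrec (k+1) hk1, inner_add_left, real_inner_smul_left]
        have hHbr : ⟪Hb (p (k+1)), r (k+1)⟫ = -⟪p (k+1), Hb (p (k+1))⟫ := by
          nth_rewrite 1 [hrr]
          rw [inner_add_right, inner_neg_right, real_inner_smul_right]
          have hc : ⟪Hb (p (k+1)), p k⟫ = 0 := by rw [hsym]; exact ihconj
          have hs : ⟪Hb (p (k+1)), p (k+1)⟫ = ⟪p (k+1), Hb (p (k+1))⟫ :=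
            hsym _ _
          rw [hc, hs]; ring
        rw [hHbr, hα (k+1) hk1, real_inner_self_eq_norm_sq, mul_neg,
            div_mul_cancel₀ _ hne]
        ring
      exact ⟨hor, hconj (k+1) hk1 hor⟩
  -- main statement
  intro i hi
  cases i with
  | zero =>
    rw [hr0, hp0]
    have h : Hb (-g) = -(Hb g) := by simp
    rw [h, inner_neg_neg]
  | succ k =>
    have hkJ : k < J := hi
    set β := ‖r (k+1)‖^2 / ‖r k‖^2 with hβ
    have hrr : r (k+1) = -(p (k+1)) + β • p k := by
      rw [hprec k hkJ]; module
    have hc : ⟪p (k+1), Hb (p k)⟫ = 0 := (hB k hi).2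
    have hc' : ⟪p k, Hb (p (k+1))⟫ = 0 := by rw [hsym2]; exact hc
    have hexp : ⟪r (k+1), Hb (r (k+1))⟫ =
        ⟪p (k+1), Hb (p (k+1))⟫ + β^2 * ⟪p k, Hb (p k)⟫ := by
      rw [hrr, map_add, map_neg, map_smul]
      rw [inner_add_left, inner_add_right, inner_add_right, inner_neg_left,
          inner_neg_left, inner_neg_right, inner_neg_right,
          real_inner_smul_left, real_inner_smul_left,
          real_inner_smul_right, real_inner_smul_right, hc, hc']
      ring
    have hpk : 0 < ⟪p k, Hb (p k)⟫ := hpcurv k hkJ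
    rw [hexp]
    nlinarith [mul_nonneg (sq_nonneg β) (le_of_lt hpk)]
end

section
/- Let y_j, r_j, p_j (j = 0,…,j₀+1) be CG iterates for a symmetric matrix H̄ and vector g ≠ 0, well defined with p_ℓᵀ H̄ p_ℓ > 0 and r_ℓ ≠ 0 for all ℓ = 0,…,j₀. Then for any i ∈ {0,…,j₀}: (y_{j₀+1}−y_i)ᵀ H̄ (y_{j₀+1}−y_i) = Σ_{k=i}^{j₀} α_k ‖r_k‖², and ‖y_{j₀+1}−y_i‖² = Σ_{ℓ=0}^{j₀} (1/‖r_ℓ‖²)·[Σ_{k=max{ℓ,i}}^{j₀} α_k ‖r_k‖²]². In particular, the Rayleigh quotient (y_{j₀+1}−y_i)ᵀ H̄ (y_{j₀+1}−y_i)/‖y_{j₀+1}−y_i‖² can be computed from the scalars α_k and ‖r_k‖², k = 0,…,j₀, alone. -/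
/-!
The CG residuals `r ℓ` are mutually orthogonal and the directions `p k` are `H`-conjugate. Hence
in `y (N+1) - y i = ∑_{k=i}^{N} α k • p k` the quadratic form of `H` diagonalises, each term
contributing `α k² ⟪p k, H p k⟫ = α k ‖r k‖²`. Unrolling the direction recursion gives
`p k = -‖r k‖² ∑_{ℓ≤k} r ℓ / ‖r ℓ‖²`, so the same difference is an explicit combination of the
orthogonal residuals, whose squared norm Pythagoras computes.
-/

open RealInnerProductSpace
open Finset

variable {E : Type*} [NormedAddCommGroup E] [InnerProductSpace ℝ E]

theorem inner_sum_smul_map_sum_smul_of_pairwise {ι : Type*} (T : E →ₗ[ℝ] E) (s : Finset ι)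
    (c : ι → ℝ) (v : ι → E) (hv : ∀ k ∈ s, ∀ l ∈ s, k ≠ l → ⟪v k, T (v l)⟫ = 0) :
    ⟪∑ k ∈ s, c k • v k, T (∑ l ∈ s, c l • v l)⟫ = ∑ k ∈ s, c k ^ 2 * ⟪v k, T (v k)⟫ := by
  simp only [map_sum, map_smul, sum_inner, inner_sum, real_inner_smul_left, real_inner_smul_right]
  refine sum_congr rfl fun k hk => ?_
  rw [sum_eq_single_of_mem k hk fun l hl hlk => by rw [hv l hl k hk hlk, mul_zero, mul_zero]]
  ring

theorem sub_eq_sum_Icc_of_succ_eq_add {M : Type*} [AddCommGroup M] {N i : ℕ} {y v : ℕ → M}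
    (hy : ∀ j ≤ N, y (j + 1) = y j + v j) (hi : i ≤ N) : y (N + 1) - y i = ∑ k ∈ Icc i N, v k := by
  rw [← sum_Icc_sub hi]
  exact sum_congr rfl fun k hk => by rw [hy k (mem_Icc.mp hk).2, add_sub_cancel_left]

/-- The CG recursion for `H y = -r 0`, well defined through step `N`; the iterates `y` are
carried separately. -/
structure IsCGRun_s6 (H : E →ₗ[ℝ] E) (N : ℕ) (r p : ℕ → E) (α : ℕ → ℝ) : Prop where
  p_zero : p 0 = -r 0
  alpha_eq : ∀ j ≤ N, α j = ‖r j‖ ^ 2 / ⟪p j, H (p j)⟫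
  r_succ : ∀ j ≤ N, r (j + 1) = r j + α j • H (p j)
  p_succ : ∀ j ≤ N, p (j + 1) = -r (j + 1) + (‖r (j + 1)‖ ^ 2 / ‖r j‖ ^ 2) • p j
  inner_p_map_p_ne_zero : ∀ j ≤ N, ⟪p j, H (p j)⟫ ≠ 0
  r_ne_zero : ∀ j ≤ N, r j ≠ 0

namespace IsCGRun_s6

variable {H : E →ₗ[ℝ] E} {N : ℕ} {r p : ℕ → E} {α : ℕ → ℝ} (h : IsCGRun_s6 H N r p α)
include h

theorem norm_r_sq_ne_zero {j : ℕ} (hj : j ≤ N) : ‖r j‖ ^ 2 ≠ 0 := by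
  simpa using h.r_ne_zero j hj

theorem alpha_mul_inner_p_map_p {j : ℕ} (hj : j ≤ N) : α j * ⟪p j, H (p j)⟫ = ‖r j‖ ^ 2 := by
  rw [h.alpha_eq j hj, div_mul_cancel₀ _ (h.inner_p_map_p_ne_zero j hj)]

theorem alpha_ne_zero {j : ℕ} (hj : j ≤ N) : α j ≠ 0 := by
  rw [h.alpha_eq j hj]
  exact div_ne_zero (h.norm_r_sq_ne_zero hj) (h.inner_p_map_p_ne_zero j hj)

theorem map_p {j : ℕ} (hj : j ≤ N) : H (p j) = (α j)⁻¹ • (r (j + 1) - r j) := by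
  rw [h.r_succ j hj, add_sub_cancel_left, inv_smul_smul₀ (h.alpha_ne_zero hj)]

theorem r_succ_eq_of_p {i : ℕ} (hi : i ≤ N) :
    r (i + 1) = -p (i + 1) + (‖r (i + 1)‖ ^ 2 / ‖r i‖ ^ 2) • p i := by
  rw [h.p_succ i hi, neg_add, neg_neg, neg_add_cancel_right]

theorem inner_r_p_self_s6 {j : ℕ} (hj : j ≤ N + 1) : ⟪r j, p j⟫ = -‖r j‖ ^ 2 := by
  induction j with
  | zero => rw [h.p_zero, inner_neg_right, real_inner_self_eq_norm_sq]
  | succ j ih =>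
    have hjN : j ≤ N := by omega
    have h_prev : ⟪r (j + 1), p j⟫ = 0 := by
      rw [h.r_succ j hjN, inner_add_left, ih (by omega), real_inner_smul_left, real_inner_comm,
        h.alpha_mul_inner_p_map_p hjN, neg_add_cancel]
    rw [h.p_succ j hjN, inner_add_right, inner_neg_right, real_inner_self_eq_norm_sq,
      real_inner_smul_right, h_prev, mul_zero, add_zero]

theorem inner_r_succ_p_self {j : ℕ} (hj : j ≤ N) : ⟪r (j + 1), p j⟫ = 0 := by
  rw [h.r_succ j hj, inner_add_left, h.inner_r_p_self_s6 (by omega), real_inner_smul_left,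
    real_inner_comm, h.alpha_mul_inner_p_map_p hj, neg_add_cancel]

theorem inner_r_r_eq_zero_of_inner_r_p {j : ℕ} (hj : j ≤ N + 1)
    (hrp : ∀ i < j, ⟪r j, p i⟫ = 0) : ∀ i < j, ⟪r j, r i⟫ = 0
  | 0, hi => by rw [← neg_neg (r 0), ← h.p_zero, inner_neg_right, hrp 0 hi, neg_zero]
  | i + 1, hi => by
    rw [h.r_succ_eq_of_p (by omega), inner_add_right, inner_neg_right, real_inner_smul_right,
      hrp (i + 1) hi, hrp i (by omega), neg_zero, mul_zero, add_zero]

theorem inner_r_p_eq_zero_and_inner_p_map_p_eq_zero (hH : H.IsSymmetric) {j : ℕ}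
    (hj : j ≤ N + 1) : ∀ i < j, ⟪r j, p i⟫ = 0 ∧ ⟪p j, H (p i)⟫ = 0 := by
  induction j with
  | zero => simp
  | succ j ih =>
    have hjN : j ≤ N := by omega
    have hrp : ∀ i < j + 1, ⟪r (j + 1), p i⟫ = 0 := by
      intro i hi
      rcases (Nat.lt_succ_iff_lt_or_eq.mp hi) with hij | rfl
      · rw [h.r_succ j hjN, inner_add_left, real_inner_smul_left, hH, (ih (by omega) i hij).1,
          (ih (by omega) i hij).2, mul_zero, add_zero]
      · exact h.inner_r_succ_p_self hjN
    have hrr := h.inner_r_r_eq_zero_of_inner_r_p hj hrp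
    refine fun i hi => ⟨hrp i hi, ?_⟩
    rw [h.p_succ j hjN, inner_add_left, inner_neg_left, real_inner_smul_left]
    rcases (Nat.lt_succ_iff_lt_or_eq.mp hi) with hij | rfl
    · rw [(ih (by omega) i hij).2, h.map_p (by omega), real_inner_smul_right, inner_sub_right,
        hrr (i + 1) (by omega), hrr i hi]
      simp
    · have hα := h.alpha_ne_zero hjN
      have hr : ‖r i‖ ≠ 0 := norm_ne_zero_iff.mpr (h.r_ne_zero i hjN)
      rw [eq_div_of_mul_eq hα ((mul_comm _ _).trans (h.alpha_mul_inner_p_map_p hjN)), h.map_p hjN,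
        real_inner_smul_right, inner_sub_right, hrr i hi, real_inner_self_eq_norm_sq]
      field_simp
      ring

theorem inner_r_r_eq_zero (hH : H.IsSymmetric) {i j : ℕ} (hj : j ≤ N + 1) (hij : i < j) :
    ⟪r j, r i⟫ = 0 :=
  h.inner_r_r_eq_zero_of_inner_r_p hj
    (fun k hk => (h.inner_r_p_eq_zero_and_inner_p_map_p_eq_zero hH hj k hk).1) i hij

theorem inner_p_map_p_eq_zero (hH : H.IsSymmetric) {i j : ℕ} (hi : i ≤ N + 1) (hj : j ≤ N + 1)
    (hij : i ≠ j) : ⟪p i, H (p j)⟫ = 0 := by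
  rcases hij.lt_or_gt with hij | hji
  · rw [← hH, real_inner_comm]
    exact (h.inner_r_p_eq_zero_and_inner_p_map_p_eq_zero hH hj i hij).2
  · exact (h.inner_r_p_eq_zero_and_inner_p_map_p_eq_zero hH hi j hji).2

theorem p_eq_neg_smul_sum {k : ℕ} (hk : k ≤ N) :
    p k = -(‖r k‖ ^ 2 • ∑ ℓ ∈ range (k + 1), (‖r ℓ‖ ^ 2)⁻¹ • r ℓ) := by
  induction k with
  | zero => rw [h.p_zero, sum_range_one, smul_inv_smul₀ (h.norm_r_sq_ne_zero hk)]
  | succ k ih =>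
    have hkN : k ≤ N := by omega
    rw [h.p_succ k hkN, ih hkN, smul_neg, smul_smul, div_mul_cancel₀ _ (h.norm_r_sq_ne_zero hkN),
      sum_range_succ _ (k + 1), smul_add, smul_inv_smul₀ (h.norm_r_sq_ne_zero hk)]
    abel

variable {y : ℕ → E} (hy : ∀ j ≤ N, y (j + 1) = y j + α j • p j)
include hy

theorem inner_y_sub_map_y_sub (hH : H.IsSymmetric) {i : ℕ} (hi : i ≤ N) :
    ⟪y (N + 1) - y i, H (y (N + 1) - y i)⟫ = ∑ k ∈ Icc i N, α k * ‖r k‖ ^ 2 := by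
  rw [sub_eq_sum_Icc_of_succ_eq_add hy hi, inner_sum_smul_map_sum_smul_of_pairwise]
  · refine sum_congr rfl fun k hk => ?_
    rw [sq, mul_assoc, h.alpha_mul_inner_p_map_p (mem_Icc.mp hk).2]
  · intro k hk l hl hkl
    exact h.inner_p_map_p_eq_zero hH (by grind) (by grind) hkl

theorem y_sub_eq_neg_sum_smul_r {i : ℕ} (hi : i ≤ N) :
    y (N + 1) - y i =
      -∑ ℓ ∈ range (N + 1), ((∑ k ∈ Icc (max ℓ i) N, α k * ‖r k‖ ^ 2) / ‖r ℓ‖ ^ 2) • r ℓ := by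
  have hsum : ∑ k ∈ Icc i N, α k • p k =
      -∑ k ∈ Icc i N, ∑ ℓ ∈ range (k + 1), (α k * ‖r k‖ ^ 2 / ‖r ℓ‖ ^ 2) • r ℓ := by
    rw [← sum_neg_distrib]
    refine sum_congr rfl fun k hk => ?_
    simp only [h.p_eq_neg_smul_sum (mem_Icc.mp hk).2, smul_neg, smul_sum, smul_smul, div_eq_mul_inv,
      mul_assoc]
  rw [sub_eq_sum_Icc_of_succ_eq_add hy hi, hsum, neg_inj,
    sum_comm' (t' := range (N + 1)) (s' := fun ℓ => Icc (max ℓ i) N) (by grind)]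
  simp only [sum_div, sum_smul]

theorem norm_y_sub_sq (hH : H.IsSymmetric) {i : ℕ} (hi : i ≤ N) :
    ‖y (N + 1) - y i‖ ^ 2 =
      ∑ ℓ ∈ range (N + 1), (∑ k ∈ Icc (max ℓ i) N, α k * ‖r k‖ ^ 2) ^ 2 / ‖r ℓ‖ ^ 2 := by
  have h_orth := inner_sum_smul_map_sum_smul_of_pairwise LinearMap.id (range (N + 1))
    (fun ℓ => (∑ k ∈ Icc (max ℓ i) N, α k * ‖r k‖ ^ 2) / ‖r ℓ‖ ^ 2) r fun k hk l hl hkl => by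
      rcases hkl.lt_or_gt with hkl | hlk
      · rw [LinearMap.id_apply, real_inner_comm]
        exact h.inner_r_r_eq_zero hH (by grind) hkl
      · exact h.inner_r_r_eq_zero hH (by grind) hlk
  simp only [LinearMap.id_apply, real_inner_self_eq_norm_sq] at h_orth
  rw [h.y_sub_eq_neg_sum_smul_r hy hi, norm_neg, h_orth]
  refine sum_congr rfl fun ℓ hℓ => ?_
  have := h.norm_r_sq_ne_zero (by grind : ℓ ≤ N)
  field_simp

end IsCGRun_s6

theorem stmt6_general
    {n : ℕ} (Hb : EuclideanSpace ℝ (Fin n) →L[ℝ] EuclideanSpace ℝ (Fin n))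
    (hsym : ∀ x y : EuclideanSpace ℝ (Fin n), ⟪Hb x, y⟫ = ⟪x, Hb y⟫)
    (g : EuclideanSpace ℝ (Fin n))
    (j₀ : ℕ)
    (y r p : ℕ → EuclideanSpace ℝ (Fin n)) (α : ℕ → ℝ)
    (hr0 : r 0 = g) (hp0 : p 0 = -g)
    (hα : ∀ j ≤ j₀, α j = ‖r j‖^2 / ⟪p j, Hb (p j)⟫)
    (hyrec : ∀ j ≤ j₀, y (j+1) = y j + α j • p j)
    (hrrec : ∀ j ≤ j₀, r (j+1) = r j + α j • Hb (p j))
    (hprec : ∀ j ≤ j₀, p (j+1) = -(r (j+1)) + (‖r (j+1)‖^2 / ‖r j‖^2) • p j)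
    (hpcurv : ∀ ℓ ≤ j₀, 0 < ⟪p ℓ, Hb (p ℓ)⟫)
    (hrne : ∀ ℓ ≤ j₀, r ℓ ≠ 0) :
    ∀ i ≤ j₀,
      ⟪y (j₀+1) - y i, Hb (y (j₀+1) - y i)⟫ =
        ∑ k ∈ Finset.Icc i j₀, α k * ‖r k‖^2 ∧
      ‖y (j₀+1) - y i‖^2 =
        ∑ ℓ ∈ Finset.range (j₀+1),
          (∑ k ∈ Finset.Icc (max ℓ i) j₀, α k * ‖r k‖^2)^2 / ‖r ℓ‖^2 := by
  have hcg : IsCGRun_s6 (Hb : EuclideanSpace ℝ (Fin n) →ₗ[ℝ] EuclideanSpace ℝ (Fin n)) j₀ r p α :=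
    ⟨by rw [hp0, hr0], hα, hrrec, hprec, fun j hj => (hpcurv j hj).ne', hrne⟩
  exact fun i hi => ⟨hcg.inner_y_sub_map_y_sub hyrec hsym hi, hcg.norm_y_sub_sq hyrec hsym hi⟩

/-- Lemma A.2: the curvature of `y_{j₀+1} − y_i` along `H̄` and its squared
norm can be expressed purely in terms of the CG scalars `α_k` and `‖r_k‖²`. -/
theorem stmt6
    {n : ℕ} (Hb : EuclideanSpace ℝ (Fin n) →L[ℝ] EuclideanSpace ℝ (Fin n))
    (hsym : ∀ x y : EuclideanSpace ℝ (Fin n), ⟪Hb x, y⟫ = ⟪x, Hb y⟫)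
    (g : EuclideanSpace ℝ (Fin n)) (hg : g ≠ 0)
    (j₀ : ℕ)
    (y r p : ℕ → EuclideanSpace ℝ (Fin n)) (α : ℕ → ℝ)
    (hy0 : y 0 = 0) (hr0 : r 0 = g) (hp0 : p 0 = -g)
    (hα : ∀ j ≤ j₀, α j = ‖r j‖^2 / ⟪p j, Hb (p j)⟫)
    (hyrec : ∀ j ≤ j₀, y (j+1) = y j + α j • p j)
    (hrrec : ∀ j ≤ j₀, r (j+1) = r j + α j • Hb (p j))
    (hprec : ∀ j ≤ j₀, p (j+1) = -(r (j+1)) + (‖r (j+1)‖^2 / ‖r j‖^2) • p j)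
    (hpcurv : ∀ ℓ ≤ j₀, 0 < ⟪p ℓ, Hb (p ℓ)⟫)
    (hrne : ∀ ℓ ≤ j₀, r ℓ ≠ 0) :
    ∀ i ≤ j₀,
      ⟪y (j₀+1) - y i, Hb (y (j₀+1) - y i)⟫ =
        ∑ k ∈ Finset.Icc i j₀, α k * ‖r k‖^2 ∧
      ‖y (j₀+1) - y i‖^2 =
        ∑ ℓ ∈ Finset.range (j₀+1),
          (∑ k ∈ Finset.Icc (max ℓ i) j₀, α k * ‖r k‖^2)^2 / ‖r ℓ‖^2 :=
  stmt6_general Hb hsym g j₀ y r p α hr0 hp0 hα hyrec hrrec hprec hpcurv hrne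
end

section
/- Let H̄ be a symmetric n×n real matrix and b ∈ ℝⁿ with ‖b‖ = 1, and consider CG applied to H̄ with g = −b. Suppose there exists t ≥ 0 such that the Krylov subspace K_t(b, H̄) contains a nonzero vector z with zᵀ H̄ z ≤ 0, and let J be the smallest such t. Then the CG iterates are well defined up to index J (that is, p_jᵀ H̄ p_j > 0 and r_j ≠ 0 for all j = 0,…,J−1), and p_Jᵀ H̄ p_J ≤ 0. -/
open RealInnerProductSpace


theorem cg_inv {n : ℕ} {Hb : EuclideanSpace ℝ (Fin n) →L[ℝ] EuclideanSpace ℝ (Fin n)}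
    {b : EuclideanSpace ℝ (Fin n)} {r p : ℕ → EuclideanSpace ℝ (Fin n)} {α : ℕ → ℝ}
    (hsym : ∀ x y : EuclideanSpace ℝ (Fin n), ⟪Hb x, y⟫ = ⟪x, Hb y⟫)
    (hr0 : r 0 = -b) (hp0 : p 0 = b) (m : ℕ)
    (hpos : ∀ j < m, 0 < ⟪p j, Hb (p j)⟫)
    (hrz : ∀ j < m, r j ≠ 0)
    (hstep : ∀ j < m,
      α j = ‖r j‖^2 / ⟪p j, Hb (p j)⟫ ∧
      r (j+1) = r j + α j • Hb (p j) ∧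
      p (j+1) = -(r (j+1)) + (‖r (j+1)‖^2 / ‖r j‖^2) • p j) :
    ∀ j ≤ m, (⟪r j, p j⟫ = -‖r j‖^2) ∧ (∀ i < j, ⟪r j, p i⟫ = 0) ∧
      (∀ i < j, ⟪p j, Hb (p i)⟫ = 0) ∧ (∀ i < j, ⟪r j, r i⟫ = 0) := by
  intro j
  induction j with
  | zero =>
    intro _
    refine ⟨?_, fun i hi => by omega, fun i hi => by omega, fun i hi => by omega⟩
    rw [hr0, hp0, inner_neg_left, real_inner_self_eq_norm_sq]
    rw [show ‖-b‖ = ‖b‖ from norm_neg b]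
  | succ j ih =>
    intro hj
    have hjm : j < m := hj
    obtain ⟨P1, P2, P3, P4⟩ := ih (le_of_lt hjm)
    obtain ⟨hα, hrrec, hprec⟩ := hstep j hjm
    have hc : 0 < ⟪p j, Hb (p j)⟫ := hpos j hjm
    have hcne : ⟪p j, Hb (p j)⟫ ≠ 0 := ne_of_gt hc
    have hrn : (0:ℝ) < ‖r j‖^2 := pow_pos (norm_pos_iff.mpr (hrz j hjm)) 2
    have hαpos : 0 < α j := by rw [hα]; exact div_pos hrn hc
    have hαne : α j ≠ 0 := ne_of_gt hαpos
    have hkey : α j * ⟪p j, Hb (p j)⟫ = ‖r j‖^2 := by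
      rw [hα]; exact div_mul_cancel₀ _ hcne
    have hαinv : ∀ i < m, α i ≠ 0 := by
      intro i him
      rw [(hstep i him).1]
      exact ne_of_gt (div_pos (pow_pos (norm_pos_iff.mpr (hrz i him)) 2) (hpos i him))
    have hHbp : ∀ i < m, Hb (p i) = (α i)⁻¹ • (r (i+1) - r i) := by
      intro i him
      have h1 : α i • Hb (p i) = r (i+1) - r i := by rw [(hstep i him).2.1]; abel
      rw [← h1, smul_smul, inv_mul_cancel₀ (hαinv i him), one_smul]
    -- (A) : r (j+1) ⊥ p i  for i ≤ j
    have hA : ∀ i ≤ j, ⟪r (j+1), p i⟫ = 0 := by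
      intro i hi
      rcases lt_or_eq_of_le hi with hlt | heq
      · rw [hrrec, inner_add_left, real_inner_smul_left, P2 i hlt,
          hsym (p j) (p i), P3 i hlt, mul_zero, add_zero]
      · subst heq
        rw [hrrec, inner_add_left, real_inner_smul_left, P1,
          real_inner_comm, hkey]
        ring
    -- (C) : r (j+1) ⊥ r i  for i ≤ j
    have hC : ∀ i ≤ j, ⟪r (j+1), r i⟫ = 0 := by
      intro i hi
      cases i with
      | zero =>
        have h0 : r 0 = -(p 0) := by rw [hr0, hp0]
        rw [h0, inner_neg_right, hA 0 (Nat.zero_le _), neg_zero]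
      | succ i =>
        have him : i < m := by omega
        have hri : r (i+1) = (‖r (i+1)‖^2 / ‖r i‖^2) • p i - p (i+1) := by
          rw [(hstep i him).2.2]; abel
        rw [hri, inner_sub_right, real_inner_smul_right,
          hA i (by omega), hA (i+1) hi, mul_zero, sub_zero]
    refine ⟨?_, fun i hi => hA i (by omega), ?_, fun i hi => hC i (by omega)⟩
    · rw [hprec, inner_add_right, inner_neg_right, real_inner_self_eq_norm_sq,
        real_inner_smul_right, hA j le_rfl, mul_zero, add_zero]
    · intro i hi
      have hi' : i ≤ j := by omega
      rw [hprec, inner_add_left, inner_neg_left, real_inner_smul_left]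
      rcases lt_or_eq_of_le hi' with hlt | heq
      · have him : i < m := by omega
        rw [P3 i hlt, hHbp i him, real_inner_smul_right, inner_sub_right,
          hC (i+1) (by omega), hC i (by omega), mul_zero]
        ring
      · subst heq
        have h2 : ⟪r (i+1), Hb (p i)⟫ = (α i)⁻¹ * ‖r (i+1)‖^2 := by
          rw [hHbp i hjm, real_inner_smul_right, inner_sub_right, hC i le_rfl,
            real_inner_self_eq_norm_sq, sub_zero]
        rw [h2, hα, inv_div]
        ring


section
variable {n : ℕ} {Hb : EuclideanSpace ℝ (Fin n) →L[ℝ] EuclideanSpace ℝ (Fin n)}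
  {b : EuclideanSpace ℝ (Fin n)} {r p : ℕ → EuclideanSpace ℝ (Fin n)} {α : ℕ → ℝ}

theorem hb_map_span {S : Set (EuclideanSpace ℝ (Fin n))}
    {T : Submodule ℝ (EuclideanSpace ℝ (Fin n))}
    (h : ∀ v ∈ S, Hb v ∈ T) : ∀ x ∈ Submodule.span ℝ S, Hb x ∈ T := by
  intro x hx
  induction hx using Submodule.span_induction with
  | mem v hv => exact h v hv
  | zero => simpa using T.zero_mem
  | add a c _ _ ha hc => rw [map_add]; exact T.add_mem ha hc
  | smul c a _ ha => rw [map_smul]; exact T.smul_mem c ha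

theorem cg_mem_kry (hr0 : r 0 = -b) (hp0 : p 0 = b) (m : ℕ)
    (hstep : ∀ j < m, r (j+1) = r j + α j • Hb (p j) ∧
      p (j+1) = -(r (j+1)) + (‖r (j+1)‖^2 / ‖r j‖^2) • p j) :
    ∀ j ≤ m, p j ∈ Submodule.span ℝ {v | ∃ i ≤ j, v = (Hb ^ i) b} ∧
      r j ∈ Submodule.span ℝ {v | ∃ i ≤ j, v = (Hb ^ i) b} := by
  intro j
  induction j with
  | zero =>
    intro _
    have hbmem : b ∈ Submodule.span ℝ {v | ∃ i ≤ 0, v = (Hb ^ i) b} :=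
      Submodule.subset_span ⟨0, le_rfl, by simp⟩
    exact ⟨hp0 ▸ hbmem, hr0 ▸ Submodule.neg_mem _ hbmem⟩
  | succ j ih =>
    intro hj
    obtain ⟨hpj, hrj⟩ := ih (by omega)
    have hmono : Submodule.span ℝ {v | ∃ i ≤ j, v = (Hb ^ i) b} ≤
        Submodule.span ℝ {v | ∃ i ≤ j+1, v = (Hb ^ i) b} :=
      Submodule.span_mono (fun v ⟨i, hi, h⟩ => ⟨i, by omega, h⟩)
    have hmap : ∀ x ∈ Submodule.span ℝ {v | ∃ i ≤ j, v = (Hb ^ i) b},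
        Hb x ∈ Submodule.span ℝ {v | ∃ i ≤ j+1, v = (Hb ^ i) b} := by
      refine hb_map_span ?_
      rintro v ⟨i, hi, rfl⟩
      exact Submodule.subset_span ⟨i+1, by omega,
        by rw [pow_succ', ContinuousLinearMap.mul_apply]⟩
    obtain ⟨hr1, hp1⟩ := hstep j hj
    have hrmem : r (j+1) ∈ Submodule.span ℝ {v | ∃ i ≤ j+1, v = (Hb ^ i) b} := by
      rw [hr1]
      exact Submodule.add_mem _ (hmono hrj) (Submodule.smul_mem _ _ (hmap _ hpj))
    refine ⟨?_, hrmem⟩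
    rw [hp1]
    exact Submodule.add_mem _ (Submodule.neg_mem _ hrmem)
      (Submodule.smul_mem _ _ (hmono hpj))

theorem cg_r_mem_pspan (hr0 : r 0 = -b) (hp0 : p 0 = b) (m : ℕ)
    (hstep : ∀ j < m, r (j+1) = r j + α j • Hb (p j) ∧
      p (j+1) = -(r (j+1)) + (‖r (j+1)‖^2 / ‖r j‖^2) • p j) :
    ∀ j ≤ m, r j ∈ Submodule.span ℝ {v | ∃ k ≤ j, v = p k} := by
  intro j hj
  cases j with
  | zero =>
    have : r 0 = -(p 0) := by rw [hr0, hp0]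
    rw [this]
    exact Submodule.neg_mem _ (Submodule.subset_span ⟨0, le_rfl, rfl⟩)
  | succ i =>
    have h := (hstep i (by omega)).2
    have : r (i+1) = (‖r (i+1)‖^2 / ‖r i‖^2) • p i - p (i+1) := by rw [h]; abel
    rw [this]
    exact Submodule.sub_mem _
      (Submodule.smul_mem _ _ (Submodule.subset_span ⟨i, by omega, rfl⟩))
      (Submodule.subset_span ⟨i+1, le_rfl, rfl⟩)

theorem cg_hbp_mem_pspan (hr0 : r 0 = -b) (hp0 : p 0 = b) (m : ℕ)
    (hpos : ∀ j < m, 0 < ⟪p j, Hb (p j)⟫)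
    (hrz : ∀ j < m, r j ≠ 0)
    (hstep : ∀ j < m,
      α j = ‖r j‖^2 / ⟪p j, Hb (p j)⟫ ∧
      r (j+1) = r j + α j • Hb (p j) ∧
      p (j+1) = -(r (j+1)) + (‖r (j+1)‖^2 / ‖r j‖^2) • p j) :
    ∀ k < m, Hb (p k) ∈ Submodule.span ℝ {v | ∃ i ≤ k+1, v = p i} := by
  intro k hk
  have hαne : α k ≠ 0 := by
    rw [(hstep k hk).1]
    exact ne_of_gt (div_pos (pow_pos (norm_pos_iff.mpr (hrz k hk)) 2) (hpos k hk))
  have hHbp : Hb (p k) = (α k)⁻¹ • (r (k+1) - r k) := by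
    have h1 : α k • Hb (p k) = r (k+1) - r k := by rw [(hstep k hk).2.1]; abel
    rw [← h1, smul_smul, inv_mul_cancel₀ hαne, one_smul]
  have hmono : Submodule.span ℝ {v | ∃ i ≤ k, v = p i} ≤
      Submodule.span ℝ {v | ∃ i ≤ k+1, v = p i} :=
    Submodule.span_mono (fun v ⟨i, hi, h⟩ => ⟨i, by omega, h⟩)
  have hstep' : ∀ j < m, r (j+1) = r j + α j • Hb (p j) ∧
      p (j+1) = -(r (j+1)) + (‖r (j+1)‖^2 / ‖r j‖^2) • p j :=
    fun j hj => (hstep j hj).2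
  rw [hHbp]
  exact Submodule.smul_mem _ _ (Submodule.sub_mem _
    (cg_r_mem_pspan hr0 hp0 m hstep' (k+1) hk)
    (hmono (cg_r_mem_pspan hr0 hp0 m hstep' k (by omega))))

theorem cg_kry_le_pspan (hr0 : r 0 = -b) (hp0 : p 0 = b) (m : ℕ)
    (hpos : ∀ j < m, 0 < ⟪p j, Hb (p j)⟫)
    (hrz : ∀ j < m, r j ≠ 0)
    (hstep : ∀ j < m,
      α j = ‖r j‖^2 / ⟪p j, Hb (p j)⟫ ∧
      r (j+1) = r j + α j • Hb (p j) ∧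
      p (j+1) = -(r (j+1)) + (‖r (j+1)‖^2 / ‖r j‖^2) • p j) :
    ∀ i ≤ m, (Hb ^ i) b ∈ Submodule.span ℝ {v | ∃ k ≤ i, v = p k} := by
  intro i
  induction i with
  | zero =>
    intro _
    have : (Hb ^ 0) b = p 0 := by rw [hp0]; simp
    rw [this]
    exact Submodule.subset_span ⟨0, le_rfl, rfl⟩
  | succ i ih =>
    intro hi
    have hIb := ih (by omega)
    have : (Hb ^ (i+1)) b = Hb ((Hb ^ i) b) := by
      rw [pow_succ', ContinuousLinearMap.mul_apply]
    rw [this]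
    refine hb_map_span ?_ _ hIb
    rintro v ⟨k, hk, rfl⟩
    have hmono : Submodule.span ℝ {v | ∃ j ≤ k+1, v = p j} ≤
        Submodule.span ℝ {v | ∃ j ≤ i+1, v = p j} :=
      Submodule.span_mono (fun v ⟨j, hj, h⟩ => ⟨j, by omega, h⟩)
    exact hmono (cg_hbp_mem_pspan hr0 hp0 m hpos hrz hstep k (by omega))

theorem cg_r0_invariant (hr0 : r 0 = -b) (hp0 : p 0 = b) (m : ℕ)
    (hpos : ∀ j < m+1, 0 < ⟪p j, Hb (p j)⟫)
    (hrz : ∀ j < m+1, r j ≠ 0)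
    (hstep : ∀ j < m+1,
      α j = ‖r j‖^2 / ⟪p j, Hb (p j)⟫ ∧
      r (j+1) = r j + α j • Hb (p j) ∧
      p (j+1) = -(r (j+1)) + (‖r (j+1)‖^2 / ‖r j‖^2) • p j)
    (hrm : r (m+1) = 0) :
    ∀ i : ℕ, (Hb ^ i) b ∈ Submodule.span ℝ {v | ∃ k ≤ m, v = p k} := by
  -- Hb maps the span of {p 0, ..., p m} into itself
  have hstep' : ∀ j < m+1, r (j+1) = r j + α j • Hb (p j) ∧
      p (j+1) = -(r (j+1)) + (‖r (j+1)‖^2 / ‖r j‖^2) • p j :=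
    fun j hj => (hstep j hj).2
  have hinv : ∀ x ∈ Submodule.span ℝ {v | ∃ k ≤ m, v = p k},
      Hb x ∈ Submodule.span ℝ {v | ∃ k ≤ m, v = p k} := by
    refine hb_map_span ?_
    rintro v ⟨k, hk, rfl⟩
    have hαne : α k ≠ 0 := by
      rw [(hstep k (by omega)).1]
      exact ne_of_gt (div_pos (pow_pos (norm_pos_iff.mpr (hrz k (by omega))) 2)
        (hpos k (by omega)))
    have hHbp : Hb (p k) = (α k)⁻¹ • (r (k+1) - r k) := by
      have h1 : α k • Hb (p k) = r (k+1) - r k := by rw [(hstep k (by omega)).2.1]; abel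
      rw [← h1, smul_smul, inv_mul_cancel₀ hαne, one_smul]
    have hrk : ∀ j ≤ m+1, r j ∈ Submodule.span ℝ {v | ∃ k ≤ m, v = p k} := by
      intro j hj
      rcases Nat.lt_or_ge j (m+1) with hlt | hge
      · have hmono : Submodule.span ℝ {v | ∃ k ≤ j, v = p k} ≤
            Submodule.span ℝ {v | ∃ k ≤ m, v = p k} :=
          Submodule.span_mono (fun v ⟨i, hi, h⟩ => ⟨i, by omega, h⟩)
        exact hmono (cg_r_mem_pspan hr0 hp0 (m+1) hstep' j (by omega))
      · have : j = m+1 := by omega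
        rw [this, hrm]
        exact Submodule.zero_mem _
    rw [hHbp]
    exact Submodule.smul_mem _ _ (Submodule.sub_mem _
      (hrk (k+1) (by omega)) (hrk k (by omega)))
  intro i
  induction i with
  | zero =>
    have : (Hb ^ 0) b = p 0 := by rw [hp0]; simp
    rw [this]
    exact Submodule.subset_span ⟨0, Nat.zero_le _, rfl⟩
  | succ i ih =>
    have : (Hb ^ (i+1)) b = Hb ((Hb ^ i) b) := by
      rw [pow_succ', ContinuousLinearMap.mul_apply]
    rw [this]
    exact hinv _ ih

end


theorem cg_pos_on_span {n : ℕ} {Hb : EuclideanSpace ℝ (Fin n) →L[ℝ] EuclideanSpace ℝ (Fin n)}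
    {p : ℕ → EuclideanSpace ℝ (Fin n)} (m : ℕ)
    (hposall : ∀ k ≤ m, 0 < ⟪p k, Hb (p k)⟫)
    (hconj : ∀ i k, i ≤ m → k ≤ m → i ≠ k → ⟪p i, Hb (p k)⟫ = 0)
    {z : EuclideanSpace ℝ (Fin n)}
    (hz : z ∈ Submodule.span ℝ {v | ∃ k ≤ m, v = p k}) (hz0 : z ≠ 0) :
    0 < ⟪z, Hb z⟫ := by
  set v : Fin (m+1) → EuclideanSpace ℝ (Fin n) := fun k => p k with hv
  have hset : {w | ∃ k ≤ m, w = p k} = Set.range v := by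
    ext w
    constructor
    · rintro ⟨k, hk, rfl⟩; exact ⟨⟨k, by omega⟩, rfl⟩
    · rintro ⟨k, rfl⟩; exact ⟨k, by omega, rfl⟩
  rw [hset] at hz
  obtain ⟨c, hc⟩ := (Submodule.mem_span_range_iff_exists_fun ℝ).mp hz
  have expand : ⟪z, Hb z⟫ = ∑ i, ∑ k, c i * (c k * ⟪v i, Hb (v k)⟫) := by
    rw [← hc, map_sum, sum_inner]
    refine Finset.sum_congr rfl fun i _ => ?_
    rw [real_inner_smul_left, inner_sum, Finset.mul_sum]
    refine Finset.sum_congr rfl fun k _ => ?_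
    rw [map_smul, real_inner_smul_right]
  have diag : ∀ i : Fin (m+1), ∑ k, c i * (c k * ⟪v i, Hb (v k)⟫)
      = c i ^ 2 * ⟪v i, Hb (v i)⟫ := by
    intro i
    rw [Finset.sum_eq_single i]
    · ring
    · intro k _ hki
      rw [hconj i k (by omega) (by omega) (fun h => hki (Fin.val_injective h).symm)]
      ring
    · intro h; exact absurd (Finset.mem_univ i) h
  rw [expand, Finset.sum_congr rfl fun i _ => diag i]
  have hex : ∃ i, c i ≠ 0 := by
    by_contra hall
    push_neg at hall
    apply hz0
    rw [← hc]
    simp [hall]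
  obtain ⟨i0, hi0⟩ := hex
  refine Finset.sum_pos' (fun i _ => ?_) ⟨i0, Finset.mem_univ i0, ?_⟩
  · exact mul_nonneg (sq_nonneg _) (le_of_lt (hposall i (by omega)))
  · exact mul_pos (by positivity) (hposall i0 (by omega))

/-- Theorem B.1: if `J` is the smallest index such that the Krylov subspace
`K_J(b, H̄)` contains a nonzero direction of nonpositive curvature, then CG
(applied to `H̄` with `g = −b`) runs for exactly `J` iterations and stops with
`p_Jᵀ H̄ p_J ≤ 0`. -/
theorem stmt8
    {n : ℕ} (Hb : EuclideanSpace ℝ (Fin n) →L[ℝ] EuclideanSpace ℝ (Fin n))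
    (hsym : ∀ x y : EuclideanSpace ℝ (Fin n), ⟪Hb x, y⟫ = ⟪x, Hb y⟫)
    (b : EuclideanSpace ℝ (Fin n)) (hb : ‖b‖ = 1)
    (y r p : ℕ → EuclideanSpace ℝ (Fin n)) (α : ℕ → ℝ)
    (hy0 : y 0 = 0) (hr0 : r 0 = -b) (hp0 : p 0 = b)
    (hrec : ∀ j, (∀ i ≤ j, 0 < ⟪p i, Hb (p i)⟫ ∧ r i ≠ 0) →
      α j = ‖r j‖^2 / ⟪p j, Hb (p j)⟫ ∧
      y (j+1) = y j + α j • p j ∧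
      r (j+1) = r j + α j • Hb (p j) ∧
      p (j+1) = -(r (j+1)) + (‖r (j+1)‖^2 / ‖r j‖^2) • p j)
    (J : ℕ)
    (hJmem : ∃ z ∈ Submodule.span ℝ {v | ∃ i ≤ J, v = (Hb ^ i) b},
      z ≠ 0 ∧ ⟪z, Hb z⟫ ≤ 0)
    (hJleast : ∀ t < J, ∀ z ∈ Submodule.span ℝ {v | ∃ i ≤ t, v = (Hb ^ i) b},
      z ≠ 0 → 0 < ⟪z, Hb z⟫) :
    (∀ j < J, 0 < ⟪p j, Hb (p j)⟫ ∧ r j ≠ 0) ∧ ⟪p J, Hb (p J)⟫ ≤ 0 := by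
  have hbne : b ≠ 0 := by
    intro h
    rw [h, norm_zero] at hb
    norm_num at hb
  -- the CG run is well defined up to J
  have main : ∀ m ≤ J, ∀ j < m, 0 < ⟪p j, Hb (p j)⟫ ∧ r j ≠ 0 := by
    intro m
    induction m with
    | zero => intro _ j hj; exact absurd hj (Nat.not_lt_zero j)
    | succ m ih =>
      intro hm1 j hj
      have hmJ : m < J := by omega
      have RUN := ih (by omega)
      rcases Nat.lt_or_ge j m with hjm | hge
      · exact RUN j hjm
      have hj' : j = m := by omega
      subst hj'
      have hpos : ∀ i < j, 0 < ⟪p i, Hb (p i)⟫ := fun i hi => (RUN i hi).1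
      have hrz : ∀ i < j, r i ≠ 0 := fun i hi => (RUN i hi).2
      have hstep : ∀ i < j,
          α i = ‖r i‖^2 / ⟪p i, Hb (p i)⟫ ∧
          r (i+1) = r i + α i • Hb (p i) ∧
          p (i+1) = -(r (i+1)) + (‖r (i+1)‖^2 / ‖r i‖^2) • p i := by
        intro i hi
        obtain ⟨h1, _, h3, h4⟩ := hrec i (fun k hk => RUN k (by omega))
        exact ⟨h1, h3, h4⟩
      -- r j ≠ 0
      have hrm : r j ≠ 0 := by
        intro h0
        cases j with
        | zero =>
          rw [hr0, neg_eq_zero] at h0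
          exact hbne h0
        | succ m' =>
          have hkry := cg_r0_invariant hr0 hp0 m' hpos hrz hstep h0
          obtain ⟨z, hzmem, hz0, hzneg⟩ := hJmem
          have hPK : Submodule.span ℝ {v | ∃ k ≤ m', v = p k} ≤
              Submodule.span ℝ {v | ∃ i ≤ m', v = (Hb ^ i) b} := by
            rw [Submodule.span_le]
            rintro v ⟨k, hk, rfl⟩
            have hmem := (cg_mem_kry hr0 hp0 m'
              (fun i hi => (hstep i (by omega)).2) k hk).1
            have hmono : Submodule.span ℝ {v | ∃ i ≤ k, v = (Hb ^ i) b} ≤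
                Submodule.span ℝ {v | ∃ i ≤ m', v = (Hb ^ i) b} :=
              Submodule.span_mono (fun v ⟨i, hi, h⟩ => ⟨i, by omega, h⟩)
            exact hmono hmem
          have hle : Submodule.span ℝ {v | ∃ i ≤ J, v = (Hb ^ i) b} ≤
              Submodule.span ℝ {v | ∃ k ≤ m', v = p k} := by
            rw [Submodule.span_le]
            rintro v ⟨i, hi, rfl⟩
            exact hkry i
          exact absurd (hJleast m' (by omega) z (hPK (hle hzmem)) hz0)
            (not_lt.mpr hzneg)
      -- p j ≠ 0
      have hinvm := (cg_inv hsym hr0 hp0 j hpos hrz hstep j le_rfl).1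
      have hpm : p j ≠ 0 := by
        intro h0
        rw [h0, inner_zero_right] at hinvm
        have h2 : ‖r j‖^2 = 0 := by linarith
        exact hrm (norm_eq_zero.mp ((pow_eq_zero_iff two_ne_zero).mp h2))
      have hpK := (cg_mem_kry hr0 hp0 j (fun i hi => (hstep i hi).2) j le_rfl).1
      exact ⟨hJleast j hmJ (p j) hpK hpm, hrm⟩
  have RUNJ := main J le_rfl
  refine ⟨RUNJ, ?_⟩
  have hpos : ∀ i < J, 0 < ⟪p i, Hb (p i)⟫ := fun i hi => (RUNJ i hi).1
  have hrz : ∀ i < J, r i ≠ 0 := fun i hi => (RUNJ i hi).2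
  have hstep : ∀ i < J,
      α i = ‖r i‖^2 / ⟪p i, Hb (p i)⟫ ∧
      r (i+1) = r i + α i • Hb (p i) ∧
      p (i+1) = -(r (i+1)) + (‖r (i+1)‖^2 / ‖r i‖^2) • p i := by
    intro i hi
    obtain ⟨h1, _, h3, h4⟩ := hrec i (fun k hk => RUNJ k (by omega))
    exact ⟨h1, h3, h4⟩
  by_cases hrJ : r J = 0
  · cases J with
    | zero =>
      rw [hr0, neg_eq_zero] at hrJ
      exact absurd hrJ hbne
    | succ J' =>
      have hp1 := (hstep J' (by omega)).2.2
      rw [hrJ] at hp1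
      simp only [norm_zero, zero_pow, ne_eq, OfNat.ofNat_ne_zero,
        not_false_eq_true, zero_div, zero_smul, neg_zero, zero_add, add_zero] at hp1
      rw [hp1]
      simp
  · by_contra hcon
    push_neg at hcon
    have hposJ : ∀ k ≤ J, 0 < ⟪p k, Hb (p k)⟫ := by
      intro k hk
      rcases Nat.lt_or_ge k J with h | h
      · exact hpos k h
      · have : k = J := by omega
        rw [this]; exact hcon
    have hinv := cg_inv hsym hr0 hp0 J hpos hrz hstep
    have hconj : ∀ i k, i ≤ J → k ≤ J → i ≠ k → ⟪p i, Hb (p k)⟫ = 0 := by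
      intro i k hi hk hne
      rcases Nat.lt_or_ge i k with h | h
      · have h1 := (hinv k hk).2.2.1 i h
        rw [real_inner_comm, hsym (p i) (p k)] at h1
        exact h1
      · exact (hinv i hi).2.2.1 k (by omega)
    obtain ⟨z, hzmem, hz0, hzneg⟩ := hJmem
    have hzp : z ∈ Submodule.span ℝ {v | ∃ k ≤ J, v = p k} := by
      have hle : Submodule.span ℝ {v | ∃ i ≤ J, v = (Hb ^ i) b} ≤
          Submodule.span ℝ {v | ∃ k ≤ J, v = p k} := by
        rw [Submodule.span_le]
        rintro v ⟨i, hi, rfl⟩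
        have hmono : Submodule.span ℝ {v | ∃ k ≤ i, v = p k} ≤
            Submodule.span ℝ {v | ∃ k ≤ J, v = p k} :=
          Submodule.span_mono (fun v ⟨k, hk, h⟩ => ⟨k, by omega, h⟩)
        exact hmono (cg_kry_le_pspan hr0 hp0 J hpos hrz hstep i hi)
      exact hle hzmem
    exact absurd (cg_pos_on_span J hposJ hconj hzp hz0) (not_lt.mpr hzneg)
end

section
/- Let H̄ be a symmetric n×n real matrix, b ∈ ℝⁿ with ‖b‖ = 1, and consider CG applied to H̄ with g = −b. Suppose the iterates are well defined up to index J with p_jᵀ H̄ p_j > 0 and r_j ≠ 0 for all j = 0,…,J. Then every nonzero vector z in the Krylov subspace K_J(b, H̄) satisfies zᵀ H̄ z > 0; that is, K_J(b, H̄) contains no nonzero direction of nonpositive curvature for H̄. -/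
open RealInnerProductSpace

/-!
The CG directions `p 0, …, p J` are mutually `H`-conjugate and span the Krylov subspace
`K_J(b, H)`. In the coordinates of these directions the quadratic form `z ↦ ⟪z, H z⟫` is
therefore diagonal, with the positive curvatures `⟪p j, H (p j)⟫` on the diagonal.
Conjugacy is proved by the usual induction on `k`, together with `⟪r k, p i⟫ = 0` for `i < k`,
passing through `⟪r (k + 1), r i⟫ = 0` for `i ≤ k`.
-/

section

open Submodule Set

variable {E : Type*} [NormedAddCommGroup E] [InnerProductSpace ℝ E]

theorem inner_sum_apply_sum_of_conjugate {ι : Type*} {H : E →ₗ[ℝ] E} {v : ι → E}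
    {s : Finset ι} (hconj : ∀ i ∈ s, ∀ j ∈ s, i ≠ j → ⟪v i, H (v j)⟫ = 0) (c : ι → ℝ) :
    ⟪∑ i ∈ s, c i • v i, H (∑ i ∈ s, c i • v i)⟫ = ∑ i ∈ s, c i ^ 2 * ⟪v i, H (v i)⟫ := by
  simp only [map_sum, map_smul, sum_inner, inner_sum, real_inner_smul_left,
    real_inner_smul_right]
  refine Finset.sum_congr rfl fun i hi => ?_
  rw [Finset.sum_eq_single_of_mem i hi fun j hj hji => by rw [hconj j hj i hi hji]; ring]
  ring

theorem inner_apply_pos_of_mem_span_of_conjugate {ι : Type*} {H : E →ₗ[ℝ] E} {v : ι → E}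
    {s : Finset ι} (hconj : ∀ i ∈ s, ∀ j ∈ s, i ≠ j → ⟪v i, H (v j)⟫ = 0)
    (hpos : ∀ i ∈ s, 0 < ⟪v i, H (v i)⟫) {z : E} (hz : z ∈ span ℝ (v '' s)) (hz0 : z ≠ 0) :
    0 < ⟪z, H z⟫ := by
  obtain ⟨c, rfl⟩ := (mem_span_image_finset_iff_exists_fun' ℝ).mp hz
  obtain ⟨i, hi, hci⟩ : ∃ i ∈ s, c i ≠ 0 := by
    by_contra! h
    exact hz0 (Finset.sum_eq_zero fun i hi => by rw [h i hi, zero_smul])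
  rw [inner_sum_apply_sum_of_conjugate hconj]
  exact Finset.sum_pos' (fun j hj => mul_nonneg (sq_nonneg _) (hpos j hj).le)
    ⟨i, hi, mul_pos (by positivity) (hpos i hi)⟩

def krylovSubspace (H : E →ₗ[ℝ] E) (b : E) (J : ℕ) : Submodule ℝ E :=
  span ℝ {v | ∃ i ≤ J, v = (H ^ i) b}

/-- Residuals `r j` and search directions `p j` of CG with `g = -b`, run for `J` steps without
breakdown. -/
structure IsCGRun_s10 (H : E →ₗ[ℝ] E) (b : E) (J : ℕ) (r p : ℕ → E) (α : ℕ → ℝ) : Prop where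
  r_zero : r 0 = -b
  p_zero : p 0 = b
  α_eq : ∀ j < J, α j = ‖r j‖ ^ 2 / ⟪p j, H (p j)⟫
  r_succ : ∀ j < J, r (j + 1) = r j + α j • H (p j)
  p_succ : ∀ j < J, p (j + 1) = -r (j + 1) + (‖r (j + 1)‖ ^ 2 / ‖r j‖ ^ 2) • p j
  curv_ne_zero : ∀ j < J, ⟪p j, H (p j)⟫ ≠ 0
  r_ne_zero : ∀ j < J, r j ≠ 0

namespace IsCGRun_s10

variable {H : E →ₗ[ℝ] E} {b : E} {J : ℕ} {r p : ℕ → E} {α : ℕ → ℝ}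

theorem r_zero_eq_neg_p_zero (hcg : IsCGRun_s10 H b J r p α) : r 0 = -p 0 := by
  rw [hcg.r_zero, hcg.p_zero]

theorem r_succ_eq_neg_p_succ_add (hcg : IsCGRun_s10 H b J r p α) {j : ℕ} (hj : j < J) :
    r (j + 1) = -p (j + 1) + (‖r (j + 1)‖ ^ 2 / ‖r j‖ ^ 2) • p j := by
  rw [hcg.p_succ j hj]
  abel

theorem α_mul_inner_p_apply_p (hcg : IsCGRun_s10 H b J r p α) {j : ℕ} (hj : j < J) :
    α j * ⟪p j, H (p j)⟫ = ‖r j‖ ^ 2 := by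
  rw [hcg.α_eq j hj, div_mul_cancel₀ _ (hcg.curv_ne_zero j hj)]

theorem α_ne_zero (hcg : IsCGRun_s10 H b J r p α) {j : ℕ} (hj : j < J) : α j ≠ 0 := by
  rw [hcg.α_eq j hj]
  exact div_ne_zero (pow_ne_zero 2 (norm_ne_zero_iff.mpr (hcg.r_ne_zero j hj)))
    (hcg.curv_ne_zero j hj)

theorem apply_p_eq (hcg : IsCGRun_s10 H b J r p α) {j : ℕ} (hj : j < J) :
    H (p j) = (α j)⁻¹ • (r (j + 1) - r j) := by
  rw [hcg.r_succ j hj, add_sub_cancel_left, inv_smul_smul₀ (hcg.α_ne_zero hj)]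

theorem inner_r_p_self_s10 (hcg : IsCGRun_s10 H b J r p α) {k : ℕ} (hk : k ≤ J)
    (hrp : ∀ i < k, ⟪r k, p i⟫ = 0) : ⟪r k, p k⟫ = -‖r k‖ ^ 2 := by
  cases k with
  | zero => rw [hcg.r_zero_eq_neg_p_zero, inner_neg_left, real_inner_self_eq_norm_sq, norm_neg]
  | succ m =>
    rw [hcg.p_succ m hk, inner_add_right, inner_neg_right, real_inner_smul_right,
      real_inner_self_eq_norm_sq, hrp m m.lt_succ_self, mul_zero, add_zero]

theorem inner_r_succ_p_s10 (hcg : IsCGRun_s10 H b J r p α) {k : ℕ} (hk : k < J)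
    (hrp : ∀ i < k, ⟪r k, p i⟫ = 0) (hconj : ∀ i < k, ⟪p i, H (p k)⟫ = 0) :
    ∀ i ≤ k, ⟪r (k + 1), p i⟫ = 0 := by
  intro i hi
  rw [hcg.r_succ k hk, inner_add_left, real_inner_smul_left, real_inner_comm (p i) (H (p k))]
  rcases hi.eq_or_lt with rfl | hlt
  · rw [hcg.inner_r_p_self_s10 hk.le hrp, hcg.α_mul_inner_p_apply_p hk]
    ring
  · rw [hrp i hlt, hconj i hlt, mul_zero, add_zero]

theorem inner_r_succ_r (hcg : IsCGRun_s10 H b J r p α) {k : ℕ} (hk : k < J)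
    (hrp : ∀ i ≤ k, ⟪r (k + 1), p i⟫ = 0) : ∀ i ≤ k, ⟪r (k + 1), r i⟫ = 0 := by
  intro i hi
  cases i with
  | zero => rw [hcg.r_zero_eq_neg_p_zero, inner_neg_right, hrp 0 hi, neg_zero]
  | succ m =>
    rw [hcg.r_succ_eq_neg_p_succ_add (j := m) (by omega), inner_add_right, inner_neg_right,
      real_inner_smul_right, hrp _ hi, hrp m (by omega), neg_zero, mul_zero, add_zero]

theorem inner_p_apply_p_succ (hcg : IsCGRun_s10 H b J r p α) (hsym : H.IsSymmetric) {k : ℕ}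
    (hk : k < J) (hconj : ∀ i < k, ⟪p i, H (p k)⟫ = 0)
    (hrr : ∀ i ≤ k, ⟪r (k + 1), r i⟫ = 0) : ∀ i ≤ k, ⟪p i, H (p (k + 1))⟫ = 0 := by
  intro i hi
  have hiJ : i < J := by omega
  have h_apply_r :
      ⟪H (p i), r (k + 1)⟫ = (α i)⁻¹ * (⟪r (k + 1), r (i + 1)⟫ - ⟪r (k + 1), r i⟫) := by
    rw [hcg.apply_p_eq hiJ, real_inner_smul_left, inner_sub_left, real_inner_comm (r (i + 1)),
      real_inner_comm (r i)]
  rw [← hsym, hcg.p_succ k hk, inner_add_right, inner_neg_right, real_inner_smul_right,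
    h_apply_r, hsym]
  rcases hi.eq_or_lt with rfl | hlt
  · -- the coefficient `‖r (k + 1)‖ ^ 2 / ‖r k‖ ^ 2` of `p k` in `p (k + 1)` is chosen to cancel here
    have hα0 := hcg.α_ne_zero hk
    have hr_ne : ‖r i‖ ≠ 0 := norm_ne_zero_iff.mpr (hcg.r_ne_zero i hk)
    have hcurv : ⟪p i, H (p i)⟫ = ‖r i‖ ^ 2 / α i :=
      eq_div_of_mul_eq hα0 (by rw [mul_comm, hcg.α_mul_inner_p_apply_p hk])
    rw [real_inner_self_eq_norm_sq, hrr i le_rfl, hcurv]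
    field_simp
    ring
  · rw [hrr (i + 1) hlt, hrr i hi, hconj i hlt]
    ring

theorem inner_r_p_eq_zero_and_conjugate (hcg : IsCGRun_s10 H b J r p α) (hsym : H.IsSymmetric) :
    ∀ k ≤ J, (∀ i < k, ⟪r k, p i⟫ = 0) ∧ (∀ i < k, ⟪p i, H (p k)⟫ = 0)
  | 0, _ => by simp
  | k + 1, hk => by
    obtain ⟨hrp, hconj⟩ := inner_r_p_eq_zero_and_conjugate hcg hsym k (by omega)
    have hrp' := hcg.inner_r_succ_p_s10 hk hrp hconj
    have hrr := hcg.inner_r_succ_r hk hrp'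
    exact ⟨fun i hi => hrp' i (Nat.lt_succ_iff.mp hi),
      fun i hi => hcg.inner_p_apply_p_succ hsym hk hconj hrr i (Nat.lt_succ_iff.mp hi)⟩

theorem inner_p_apply_p_of_ne (hcg : IsCGRun_s10 H b J r p α) (hsym : H.IsSymmetric) {i j : ℕ} (hi : i ≤ J)
    (hj : j ≤ J) (hij : i ≠ j) : ⟪p i, H (p j)⟫ = 0 := by
  rcases hij.lt_or_gt with h | h
  · exact (hcg.inner_r_p_eq_zero_and_conjugate hsym j hj).2 i h
  · rw [← hsym, real_inner_comm]
    exact (hcg.inner_r_p_eq_zero_and_conjugate hsym i hi).2 j h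

theorem r_mem_span (hcg : IsCGRun_s10 H b J r p α) {m : ℕ} (hm : m ≤ J) :
    r m ∈ span ℝ (p '' Iic m) := by
  cases m with
  | zero =>
    rw [hcg.r_zero_eq_neg_p_zero]
    exact neg_mem (subset_span ⟨0, mem_Iic.mpr le_rfl, rfl⟩)
  | succ m =>
    rw [hcg.r_succ_eq_neg_p_succ_add hm]
    exact add_mem (neg_mem (subset_span ⟨m + 1, mem_Iic.mpr le_rfl, rfl⟩))
      (smul_mem _ _ (subset_span ⟨m, mem_Iic.mpr m.le_succ, rfl⟩))

theorem apply_p_mem_span (hcg : IsCGRun_s10 H b J r p α) {l : ℕ} (hl : l < J) :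
    H (p l) ∈ span ℝ (p '' Iic (l + 1)) := by
  rw [hcg.apply_p_eq hl]
  exact smul_mem _ _ (sub_mem (hcg.r_mem_span hl)
    (span_mono (image_mono (Iic_subset_Iic.mpr l.le_succ)) (hcg.r_mem_span hl.le)))

theorem pow_apply_mem_span (hcg : IsCGRun_s10 H b J r p α) :
    ∀ i ≤ J, (H ^ i) b ∈ span ℝ (p '' Iic i)
  | 0, _ => subset_span ⟨0, mem_Iic.mpr le_rfl, hcg.p_zero⟩
  | i + 1, hi => by
    have hmaps : span ℝ (p '' Iic i) ≤ (span ℝ (p '' Iic (i + 1))).comap H :=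
      span_le.mpr <| by
        rintro _ ⟨l, hl, rfl⟩
        exact span_mono (image_mono (Iic_subset_Iic.mpr (Nat.succ_le_succ hl)))
          (hcg.apply_p_mem_span (lt_of_le_of_lt hl hi))
    rw [pow_succ', Module.End.mul_apply]
    exact hmaps (hcg.pow_apply_mem_span i (by omega))

theorem krylovSubspace_le_span_p (hcg : IsCGRun_s10 H b J r p α) :
    krylovSubspace H b J ≤ span ℝ (p '' Iic J) :=
  span_le.mpr <| by
    rintro _ ⟨i, hi, rfl⟩
    exact span_mono (image_mono (Iic_subset_Iic.mpr hi)) (hcg.pow_apply_mem_span i hi)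

end IsCGRun_s10

end

theorem stmt10_general
    {n : ℕ} (Hb : EuclideanSpace ℝ (Fin n) →L[ℝ] EuclideanSpace ℝ (Fin n))
    (hsym : ∀ x y : EuclideanSpace ℝ (Fin n), ⟪Hb x, y⟫ = ⟪x, Hb y⟫)
    (b : EuclideanSpace ℝ (Fin n))
    (J : ℕ)
    (y r p : ℕ → EuclideanSpace ℝ (Fin n)) (α : ℕ → ℝ)
    (hr0 : r 0 = -b) (hp0 : p 0 = b)
    (hα : ∀ j < J, α j = ‖r j‖^2 / ⟪p j, Hb (p j)⟫)
    (hrrec : ∀ j < J, r (j+1) = r j + α j • Hb (p j))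
    (hprec : ∀ j < J, p (j+1) = -(r (j+1)) + (‖r (j+1)‖^2 / ‖r j‖^2) • p j)
    (hpcurv : ∀ j ≤ J, 0 < ⟪p j, Hb (p j)⟫)
    (hrne : ∀ j ≤ J, r j ≠ 0) :
    ∀ z ∈ Submodule.span ℝ {v | ∃ i ≤ J, v = (Hb ^ i) b},
      z ≠ 0 → 0 < ⟪z, Hb z⟫ := by
  intro z hz hz0
  have hcg : IsCGRun_s10 (Hb : _ →ₗ[ℝ] _) b J r p α :=
    ⟨hr0, hp0, hα, hrrec, hprec, fun j hj => (hpcurv j hj.le).ne', fun j hj => hrne j hj.le⟩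
  have hzK : z ∈ krylovSubspace (Hb : _ →ₗ[ℝ] _) b J := by
    simpa only [krylovSubspace, ← ContinuousLinearMap.toLinearMap_pow,
      ContinuousLinearMap.coe_coe] using hz
  have hzp : z ∈ Submodule.span ℝ (p '' ↑(Finset.Iic J)) := by
    rw [Finset.coe_Iic]
    exact hcg.krylovSubspace_le_span_p hzK
  refine inner_apply_pos_of_mem_span_of_conjugate (s := Finset.Iic J) ?_ ?_ hzp hz0
  · intro i hi j hj hij
    exact hcg.inner_p_apply_p_of_ne hsym (Finset.mem_Iic.mp hi) (Finset.mem_Iic.mp hj) hij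
  · exact fun i hi => hpcurv i (Finset.mem_Iic.mp hi)

/-- If CG runs to index `J` without encountering nonpositive curvature or a
zero residual, then the Krylov subspace `K_J(b, H̄)` contains no nonzero
direction of nonpositive curvature for `H̄`. -/
theorem stmt10
    {n : ℕ} (Hb : EuclideanSpace ℝ (Fin n) →L[ℝ] EuclideanSpace ℝ (Fin n))
    (hsym : ∀ x y : EuclideanSpace ℝ (Fin n), ⟪Hb x, y⟫ = ⟪x, Hb y⟫)
    (b : EuclideanSpace ℝ (Fin n)) (hb : ‖b‖ = 1)
    (J : ℕ)
    (y r p : ℕ → EuclideanSpace ℝ (Fin n)) (α : ℕ → ℝ)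
    (hy0 : y 0 = 0) (hr0 : r 0 = -b) (hp0 : p 0 = b)
    (hα : ∀ j < J, α j = ‖r j‖^2 / ⟪p j, Hb (p j)⟫)
    (hyrec : ∀ j < J, y (j+1) = y j + α j • p j)
    (hrrec : ∀ j < J, r (j+1) = r j + α j • Hb (p j))
    (hprec : ∀ j < J, p (j+1) = -(r (j+1)) + (‖r (j+1)‖^2 / ‖r j‖^2) • p j)
    (hpcurv : ∀ j ≤ J, 0 < ⟪p j, Hb (p j)⟫)
    (hrne : ∀ j ≤ J, r j ≠ 0) :
    ∀ z ∈ Submodule.span ℝ {v | ∃ i ≤ J, v = (Hb ^ i) b},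
      z ≠ 0 → 0 < ⟪z, Hb z⟫ :=
  stmt10_general Hb hsym b J y r p α hr0 hp0 hα hrrec hprec hpcurv hrne
end

section
/- Let ε ∈ (0,1), M ≥ 0, and ζ ∈ (0,1), and define κ = (M+2ε)/ε, ζ̂ = ζ/(3κ), τ = √κ/(√κ+1), and T = 4κ⁴/(1−√τ)². Then the smallest nonnegative integer J such that √T·τ^{J/2} ≤ ζ̂ satisfies J ≤ ⌈(√κ + 1/2)·ln(144(√κ+1)²κ⁶/ζ²)⌉. -/
/-!
With `s = √κ` we have `τ = s / (s + 1)`. Since `1 - √τ ≥ (1 - τ) / 2 = 1 / (2 (s + 1))`,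
`T ≤ 16 (s + 1)² κ⁴ = A ζ̂²` for `A = 144 (s + 1)² κ⁶ / ζ²`. On the other hand
`log (1 / τ) = log (1 + 1 / s) ≥ 1 / (s + 1/2)`, so `τⁿ ≤ A⁻¹` once `n ≥ (s + 1/2) log A`.
For such `n`, `√T · √τⁿ ≤ √(A ζ̂² · A⁻¹) = ζ̂`, and `J ≤ n` by minimality.
-/

open Real

theorem Real.inv_add_half_le_log_one_add_inv {t : ℝ} (ht : 0 < t) :
    (t + 1/2)⁻¹ ≤ log (1 + t⁻¹) := by
  calc (t + 1/2)⁻¹ = 2 * (1 / (2 * ((0 : ℕ) : ℝ) + 1)) * (1 / (2 * t + 1)) ^ (2 * 0 + 1) := by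
        norm_num; field_simp
    _ ≤ log (1 + t⁻¹) := le_hasSum (hasSum_log_one_add_inv ht) 0 fun k _ => by positivity

theorem div_add_one_pow_le_inv {s A : ℝ} (hs : 0 < s) (hA : 0 < A) {n : ℕ}
    (hn : (s + 1/2) * log A ≤ n) : (s / (s + 1)) ^ n ≤ A⁻¹ := by
  have hratio : s / (s + 1) = (1 + s⁻¹)⁻¹ := by field_simp
  have hlog : log A ≤ n * log (1 + s⁻¹) :=
    calc log A = (s + 1/2) * log A * (s + 1/2)⁻¹ := by field_simp
      _ ≤ n * log (1 + s⁻¹) :=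
        mul_le_mul hn (inv_add_half_le_log_one_add_inv hs) (by positivity) (Nat.cast_nonneg n)
  rw [← exp_log hA, ← exp_neg, ← exp_log (by positivity : 0 < (s / (s + 1)) ^ n),
    exp_le_exp, log_pow, hratio, log_inv]
  linarith

theorem one_div_two_mul_add_one_le_one_sub_sqrt {s : ℝ} (hs : 0 ≤ s) :
    1 / (2 * (s + 1)) ≤ 1 - √(s / (s + 1)) := by
  set a := √(s / (s + 1))
  have ha0 : 0 ≤ a := sqrt_nonneg _
  have ha1 : a ≤ 1 := sqrt_le_one.mpr (div_le_one_of_le₀ (by linarith) (by linarith))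
  have hprod : (1 - a) * (1 + a) = 1 / (s + 1) := by
    rw [show (1 - a) * (1 + a) = 1 - a ^ 2 by ring, sq_sqrt (by positivity)]
    field_simp
    ring
  calc 1 / (2 * (s + 1)) = (1 - a) * (1 + a) / 2 := by rw [hprod]; field_simp
    _ ≤ 1 - a := by nlinarith

theorem div_one_sub_sqrt_sq_le {s c : ℝ} (hs : 0 ≤ s) (hc : 0 ≤ c) :
    c / (1 - √(s / (s + 1))) ^ 2 ≤ 4 * (s + 1) ^ 2 * c := by
  have hgap := one_div_two_mul_add_one_le_one_sub_sqrt hs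
  have hgap0 : 0 < 1 / (2 * (s + 1)) := by positivity
  rw [div_le_iff₀ (by nlinarith)]
  calc c = 4 * (s + 1) ^ 2 * c * (1 / (2 * (s + 1))) ^ 2 := by field_simp; ring
    _ ≤ 4 * (s + 1) ^ 2 * c * (1 - √(s / (s + 1))) ^ 2 := by gcongr

/-- Bound (20) on the iteration cap `J(M, ε, ζ)` of Capped CG: the smallest
nonnegative integer `J` with `√T · τ^{J/2} ≤ ζ̂` satisfies
`J ≤ ⌈(√κ + 1/2)·ln(144(√κ+1)²κ⁶/ζ²)⌉`. -/
theorem stmt11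
    (ε M ζ κ ζhat τ T : ℝ)
    (hε : ε ∈ Set.Ioo (0:ℝ) 1) (hM : 0 ≤ M) (hζ : ζ ∈ Set.Ioo (0:ℝ) 1)
    (hκ : κ = (M + 2*ε)/ε)
    (hζhat : ζhat = ζ / (3*κ))
    (hτ : τ = Real.sqrt κ / (Real.sqrt κ + 1))
    (hT : T = 4 * κ^4 / (1 - Real.sqrt τ)^2)
    (J : ℕ)
    (hJ : IsLeast {j : ℕ | Real.sqrt T * Real.sqrt τ ^ j ≤ ζhat} J) :
    (J : ℤ) ≤ ⌈(Real.sqrt κ + 1/2) *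
      Real.log (144 * (Real.sqrt κ + 1)^2 * κ^6 / ζ^2)⌉ := by
  obtain ⟨hε0, -⟩ := hε
  obtain ⟨hζ0, hζ1⟩ := hζ
  have hκ1 : 1 ≤ κ := by rw [hκ, le_div_iff₀ hε0]; linarith
  set s := √κ
  have hs1 : 1 ≤ s := one_le_sqrt.mpr hκ1
  set A := 144 * (s + 1) ^ 2 * κ ^ 6 / ζ ^ 2 with hA
  have hA1 : 1 ≤ A := by
    rw [hA, le_div_iff₀ (by positivity)]
    nlinarith [one_le_pow₀ (n := 6) hκ1]
  have hTA : T ≤ A * ζhat ^ 2 :=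
    calc T ≤ 4 * (s + 1) ^ 2 * (4 * κ ^ 4) :=
          hT ▸ hτ ▸ div_one_sub_sqrt_sq_le (sqrt_nonneg κ) (by positivity)
      _ = A * ζhat ^ 2 := by rw [hA, hζhat]; field_simp; ring
  set n := ⌈(s + 1/2) * log A⌉₊
  have hτn : τ ^ n ≤ A⁻¹ :=
    hτ ▸ div_add_one_pow_le_inv (by positivity) (by positivity) (Nat.le_ceil _)
  have hT0 : 0 ≤ T := hT ▸ by positivity
  have hτ0 : 0 ≤ τ := hτ ▸ by positivity
  have hζhat0 : 0 ≤ ζhat := hζhat ▸ by positivity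
  have hmem : √T * √τ ^ n ≤ ζhat := by
    rw [← pow_le_pow_iff_left₀ (by positivity) hζhat0 two_ne_zero, mul_pow, ← pow_mul,
      mul_comm n, pow_mul, sq_sqrt hT0, sq_sqrt hτ0]
    calc T * τ ^ n ≤ A * ζhat ^ 2 * A⁻¹ := by gcongr
      _ = ζhat ^ 2 := by field_simp
  calc (J : ℤ) ≤ n := by exact_mod_cast hJ.2 hmem
    _ = _ := Int.natCast_ceil_eq_ceil (mul_nonneg (by positivity) (log_nonneg hA1))
end

section
/- Let H be a symmetric n×n real matrix, ε > 0, g ∈ ℝⁿ with g ≠ 0, and ζ̂ ∈ (0, 1/6]. Suppose d ∈ ℝⁿ satisfies dᵀ(H + 2εI)d ≥ ε‖d‖², and let r̂ = (H + 2εI)d + g. If ‖r̂‖ ≤ ζ̂‖g‖ and gᵀr̂ = 0, then ‖d‖ ≤ 1.1·ε⁻¹·‖g‖. -/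
open RealInnerProductSpace

/-!
Write `r̂ - g = (H + 2εI) d`. The curvature condition and Cauchy–Schwarz give
`ε ‖d‖² ≤ ⟪d, r̂ - g⟫ ≤ ‖d‖ ‖r̂ - g‖`, so `ε ‖d‖ ≤ ‖r̂ - g‖`. Since `r̂ ⟂ g`, Pythagoras gives
`‖r̂ - g‖² = ‖r̂‖² + ‖g‖² ≤ (1 + ζ̂²) ‖g‖² ≤ (37/36) ‖g‖² < 1.1² ‖g‖²`.
-/

section InnerProductSpace

variable {E : Type*} [NormedAddCommGroup E] [InnerProductSpace ℝ E]

theorem mul_norm_le_norm_of_mul_sq_le_inner {c : ℝ} {x y : E} (h : c * ‖x‖ ^ 2 ≤ ⟪x, y⟫) :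
    c * ‖x‖ ≤ ‖y‖ := by
  rcases (norm_nonneg x).eq_or_lt with hx | hx
  · rw [← hx, mul_zero]
    exact norm_nonneg y
  · refine le_of_mul_le_mul_right ?_ hx
    calc c * ‖x‖ * ‖x‖ = c * ‖x‖ ^ 2 := by ring
      _ ≤ ⟪x, y⟫ := h
      _ ≤ ‖x‖ * ‖y‖ := real_inner_le_norm x y
      _ = ‖y‖ * ‖x‖ := mul_comm _ _

theorem norm_sub_sq_le_of_inner_eq_zero {ζ : ℝ} {r g : E} (horth : ⟪r, g⟫ = 0)
    (hr : ‖r‖ ≤ ζ * ‖g‖) : ‖r - g‖ ^ 2 ≤ (1 + ζ ^ 2) * ‖g‖ ^ 2 := by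
  have hpyth : ‖r - g‖ ^ 2 = ‖r‖ ^ 2 + ‖g‖ ^ 2 := by
    simp only [sq, norm_sub_sq_eq_norm_sq_add_norm_sq_real horth]
  have hr_sq : ‖r‖ ^ 2 ≤ (ζ * ‖g‖) ^ 2 := pow_le_pow_left₀ (norm_nonneg r) hr 2
  rw [hpyth]
  linarith

end InnerProductSpace

theorem stmt12_general
    {n : ℕ} (H : EuclideanSpace ℝ (Fin n) →L[ℝ] EuclideanSpace ℝ (Fin n))
    (ε ζhat : ℝ) (hε : 0 < ε) (hζhat : ζhat ∈ Set.Ioc (0:ℝ) (1/6))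
    (g d rhat : EuclideanSpace ℝ (Fin n))
    (hcurv : ⟪d, H d + (2*ε) • d⟫ ≥ ε * ‖d‖^2)
    (hrhat : rhat = H d + (2*ε) • d + g)
    (hres : ‖rhat‖ ≤ ζhat * ‖g‖)
    (horth : ⟪g, rhat⟫ = 0) :
    ‖d‖ ≤ 1.1 * ε⁻¹ * ‖g‖ := by
  obtain ⟨hζ_pos, hζ_le⟩ := hζhat
  have hsub : rhat - g = H d + (2*ε) • d := by rw [hrhat, add_sub_cancel_right]
  have hεd : ε * ‖d‖ ≤ ‖rhat - g‖ :=
    mul_norm_le_norm_of_mul_sq_le_inner (hsub ▸ hcurv)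
  have hsub_le : ‖rhat - g‖ ≤ 1.1 * ‖g‖ := by
    have hζ_sq : ζhat ^ 2 ≤ (1/6) ^ 2 := pow_le_pow_left₀ hζ_pos.le hζ_le 2
    refine (pow_le_pow_iff_left₀ (norm_nonneg _) (by positivity) two_ne_zero).1 ?_
    calc ‖rhat - g‖ ^ 2 ≤ (1 + ζhat ^ 2) * ‖g‖ ^ 2 :=
          norm_sub_sq_le_of_inner_eq_zero (real_inner_comm g rhat ▸ horth) hres
      _ ≤ (1 + (1/6) ^ 2) * ‖g‖ ^ 2 := by gcongr
      _ ≤ (1.1 * ‖g‖) ^ 2 := by nlinarith [sq_nonneg ‖g‖]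
  calc ‖d‖ = ε⁻¹ * (ε * ‖d‖) := by field_simp
    _ ≤ ε⁻¹ * (1.1 * ‖g‖) := mul_le_mul_of_nonneg_left (hεd.trans hsub_le) (inv_nonneg.2 hε.le)
    _ = 1.1 * ε⁻¹ * ‖g‖ := by ring

/-- Bound (16b) on the SOL output of Capped CG:
`‖d‖ ≤ 1.1 ε⁻¹ ‖g‖`. -/
theorem stmt12
    {n : ℕ} (H : EuclideanSpace ℝ (Fin n) →L[ℝ] EuclideanSpace ℝ (Fin n))
    (hsym : ∀ x y : EuclideanSpace ℝ (Fin n), ⟪H x, y⟫ = ⟪x, H y⟫)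
    (ε ζhat : ℝ) (hε : 0 < ε) (hζhat : ζhat ∈ Set.Ioc (0:ℝ) (1/6))
    (g d rhat : EuclideanSpace ℝ (Fin n)) (hg : g ≠ 0)
    (hcurv : ⟪d, H d + (2*ε) • d⟫ ≥ ε * ‖d‖^2)
    (hrhat : rhat = H d + (2*ε) • d + g)
    (hres : ‖rhat‖ ≤ ζhat * ‖g‖)
    (horth : ⟪g, rhat⟫ = 0) :
    ‖d‖ ≤ 1.1 * ε⁻¹ * ‖g‖ :=
  stmt12_general H ε ζhat hε hζhat g d rhat hcurv hrhat hres horth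
end

section
/- Let H be a symmetric n×n real matrix with ‖H‖ ≤ M, let ε > 0, ζ ∈ (0,1), κ = (M+2ε)/ε, and ζ̂ = ζ/(3κ) (so ζ̂ ≤ 1/6). Suppose d ∈ ℝⁿ and g ∈ ℝⁿ with g ≠ 0 satisfy ‖(H + 2εI)d + g‖ ≤ ζ̂‖g‖. Then, writing r̂ = (H + 2εI)d + g, one has ‖r̂‖ ≤ (ζ̂/(1−ζ̂))(M+2ε)‖d‖ ≤ (1/2)εζ‖d‖. -/
/-!
Since `g = r̂ - (H + 2εI)d`, the triangle inequality gives `‖g‖ ≤ ζ̂‖g‖ + (M + 2ε)‖d‖`, so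
`‖g‖ ≤ (M + 2ε)‖d‖/(1 - ζ̂)` and the first bound follows from `‖r̂‖ ≤ ζ̂‖g‖`. For the second,
`ζ̂(M + 2ε) = εζ/3` and `ζ̂ ≤ 1/6`, so the constant is at most `(εζ/3)/(5/6) ≤ εζ/2`.
-/

open RealInnerProductSpace

theorem norm_apply_add_smul_le {E : Type*} [SeminormedAddCommGroup E] [NormedSpace ℝ E]
    (T : E →L[ℝ] E) {M c : ℝ} (hT : ‖T‖ ≤ M) (hc : 0 ≤ c) (x : E) :
    ‖T x + c • x‖ ≤ (M + c) * ‖x‖ :=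
  calc ‖T x + c • x‖ ≤ ‖T x‖ + ‖c • x‖ := norm_add_le _ _
    _ ≤ M * ‖x‖ + c * ‖x‖ := by
        rw [norm_smul, Real.norm_of_nonneg hc]
        gcongr
        exact T.le_of_opNorm_le hT x
    _ = (M + c) * ‖x‖ := by ring

theorem norm_le_div_one_sub_mul_of_norm_le_mul {E : Type*} [SeminormedAddCommGroup E]
    {r a g : E} {t A : ℝ} (ht₀ : 0 ≤ t) (ht₁ : t < 1) (hr : r = a + g) (ha : ‖a‖ ≤ A)
    (hrg : ‖r‖ ≤ t * ‖g‖) :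
    ‖r‖ ≤ t / (1 - t) * A := by
  have hg : ‖g‖ ≤ ‖r‖ + ‖a‖ := by
    simpa [hr] using norm_sub_le r a
  have hg' : ‖g‖ ≤ A / (1 - t) := by
    rw [le_div_iff₀ (by linarith)]
    nlinarith
  calc ‖r‖ ≤ t * ‖g‖ := hrg
    _ ≤ t * (A / (1 - t)) := by gcongr
    _ = t / (1 - t) * A := by ring

section Tolerance

variable {ε M ζ t : ℝ}

theorem mul_eq_of_eq_div_three_mul (hε : 0 < ε) (hM : 0 ≤ M)
    (ht : t = ζ / (3 * ((M + 2 * ε) / ε))) :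
    t * (M + 2 * ε) = ζ * ε / 3 := by
  have hA : 0 < M + 2 * ε := by linarith
  rw [ht]; field_simp

theorem mem_Icc_of_eq_div_three_mul (hε : 0 < ε) (hM : 0 ≤ M) (hζ₀ : 0 < ζ) (hζ₁ : ζ < 1)
    (ht : t = ζ / (3 * ((M + 2 * ε) / ε))) :
    t ∈ Set.Icc 0 (1 / 6) := by
  have hA : 0 < M + 2 * ε := by linarith
  refine ⟨by rw [ht]; positivity, le_of_mul_le_mul_right ?_ hA⟩
  rw [mul_eq_of_eq_div_three_mul hε hM ht]
  nlinarith

theorem div_one_sub_mul_le_of_eq_div_three_mul (hε : 0 < ε) (hM : 0 ≤ M)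
    (hζ₀ : 0 < ζ) (hζ₁ : ζ < 1) (ht : t = ζ / (3 * ((M + 2 * ε) / ε))) :
    t / (1 - t) * (M + 2 * ε) ≤ 1 / 2 * ε * ζ := by
  have ht₁ := (mem_Icc_of_eq_div_three_mul hε hM hζ₀ hζ₁ ht).2
  calc t / (1 - t) * (M + 2 * ε) = t * (M + 2 * ε) / (1 - t) := by ring
    _ = ζ * ε / 3 / (1 - t) := by rw [mul_eq_of_eq_div_three_mul hε hM ht]
    _ ≤ ζ * ε / 3 / (5 / 6) := by gcongr; linarith
    _ ≤ 1 / 2 * ε * ζ := by nlinarith [mul_pos hε hζ₀]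

end Tolerance

theorem stmt13_general
    {n : ℕ} (H : EuclideanSpace ℝ (Fin n) →L[ℝ] EuclideanSpace ℝ (Fin n))
    (ε M ζ κ ζhat : ℝ) (hε : 0 < ε) (hM : ‖H‖ ≤ M) (hζ : ζ ∈ Set.Ioo (0:ℝ) 1)
    (hκ : κ = (M + 2*ε)/ε)
    (hζhat : ζhat = ζ / (3*κ))
    (g d rhat : EuclideanSpace ℝ (Fin n))
    (hrhat : rhat = H d + (2*ε) • d + g)
    (hres : ‖rhat‖ ≤ ζhat * ‖g‖) :
    ‖rhat‖ ≤ ζhat / (1 - ζhat) * (M + 2*ε) * ‖d‖ ∧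
    ζhat / (1 - ζhat) * (M + 2*ε) * ‖d‖ ≤ 1/2 * ε * ζ * ‖d‖ := by
  obtain ⟨hζ₀, hζ₁⟩ := hζ
  have hM₀ : 0 ≤ M := (norm_nonneg H).trans hM
  have htol : ζhat / (1 - ζhat) * (M + 2 * ε) ≤ 1 / 2 * ε * ζ :=
    div_one_sub_mul_le_of_eq_div_three_mul hε hM₀ hζ₀ hζ₁ (hκ ▸ hζhat)
  obtain ⟨hζhat₀, hζhat₁⟩ := mem_Icc_of_eq_div_three_mul hε hM₀ hζ₀ hζ₁ (hκ ▸ hζhat)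
  refine ⟨?_, by gcongr⟩
  rw [mul_assoc]
  exact norm_le_div_one_sub_mul_of_norm_le_mul hζhat₀ (by linarith) hrhat
    (norm_apply_add_smul_le H hM (by positivity) d) hres

/-- Bound (16c) on the residual of the SOL output of Capped CG:
`‖r̂‖ ≤ (ζ̂/(1−ζ̂))(M+2ε)‖d‖ ≤ (1/2)εζ‖d‖`. -/
theorem stmt13
    {n : ℕ} (H : EuclideanSpace ℝ (Fin n) →L[ℝ] EuclideanSpace ℝ (Fin n))
    (hsym : ∀ x y : EuclideanSpace ℝ (Fin n), ⟪H x, y⟫ = ⟪x, H y⟫)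
    (ε M ζ κ ζhat : ℝ) (hε : 0 < ε) (hM : ‖H‖ ≤ M) (hζ : ζ ∈ Set.Ioo (0:ℝ) 1)
    (hκ : κ = (M + 2*ε)/ε)
    (hζhat : ζhat = ζ / (3*κ))
    (g d rhat : EuclideanSpace ℝ (Fin n)) (hg : g ≠ 0)
    (hrhat : rhat = H d + (2*ε) • d + g)
    (hres : ‖rhat‖ ≤ ζhat * ‖g‖) :
    ‖rhat‖ ≤ ζhat / (1 - ζhat) * (M + 2*ε) * ‖d‖ ∧
    ζhat / (1 - ζhat) * (M + 2*ε) * ‖d‖ ≤ 1/2 * ε * ζ * ‖d‖ :=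
  stmt13_general H ε M ζ κ ζhat hε hM hζ hκ hζhat g d rhat hrhat hres
end

section
/- Let H be a symmetric n×n real matrix, ε > 0, and g ∈ ℝⁿ. Suppose d ∈ ℝⁿ is a nonzero vector with dᵀ(H + 2εI)d < ε‖d‖², and define d' = −sgn(dᵀg)·(|dᵀHd|/‖d‖²)·(d/‖d‖). Then d'ᵀg ≤ 0, and d'ᵀHd'/‖d'‖² = −‖d'‖ ≤ −ε. -/
/-!
`d'` is a nonzero multiple of `d`, so it has the same Rayleigh quotient `⟪d, H d⟫ / ‖d‖²`, which
the curvature condition pushes below `-ε`. The length of `d'` is chosen to be exactly minus this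
quotient, and its sign is chosen against `⟪d, g⟫`.
-/

open RealInnerProductSpace

/-- The sign function, with the convention `sgn 0 = 1`. -/
noncomputable def sgn (t : ℝ) : ℝ := if t < 0 then -1 else 1

lemma sgn_mul_self (t : ℝ) : sgn t * t = |t| := by
  unfold sgn
  split_ifs with h
  · rw [abs_of_neg h]; ring
  · rw [abs_of_nonneg (not_lt.mp h)]; ring

lemma abs_sgn (t : ℝ) : |sgn t| = 1 := by
  unfold sgn; split_ifs <;> simp

lemma sgn_ne_zero (t : ℝ) : sgn t ≠ 0 := by
  unfold sgn; split_ifs <;> norm_num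

section InnerProductSpace

variable {E : Type*} [NormedAddCommGroup E] [InnerProductSpace ℝ E]

lemma inner_neg_sgn_mul_smul_nonpos (d g : E) {c : ℝ} (hc : 0 ≤ c) :
    ⟪(-(sgn ⟪d, g⟫) * c) • d, g⟫ ≤ 0 :=
  calc ⟪(-(sgn ⟪d, g⟫) * c) • d, g⟫ = -(c * (sgn ⟪d, g⟫ * ⟪d, g⟫)) := by
        rw [real_inner_smul_left]; ring
    _ = -(c * |⟪d, g⟫|) := by rw [sgn_mul_self]
    _ ≤ 0 := neg_nonpos.mpr (by positivity)

lemma norm_mul_inv_norm_smul {σ a : ℝ} (hσ : |σ| = 1) (ha : 0 ≤ a) {d : E} (hd : d ≠ 0) :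
    ‖(σ * a * ‖d‖⁻¹) • d‖ = a := by
  have hd : ‖d‖ ≠ 0 := norm_ne_zero_iff.mpr hd
  rw [norm_smul, Real.norm_eq_abs, abs_mul, abs_mul, hσ, abs_of_nonneg ha, abs_inv, abs_norm,
    one_mul, inv_mul_cancel_right₀ hd]

lemma inner_smul_map_smul_div_norm_sq (H : E →ₗ[ℝ] E) (d : E) {c : ℝ} (hc : c ≠ 0) :
    ⟪c • d, H (c • d)⟫ / ‖c • d‖ ^ 2 = ⟪d, H d⟫ / ‖d‖ ^ 2 := by
  rw [map_smul, real_inner_smul_left, real_inner_smul_right, norm_smul, Real.norm_eq_abs, mul_pow,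
    sq_abs, ← mul_assoc, ← sq, mul_div_mul_left _ _ (pow_ne_zero 2 hc)]

lemma inner_add_smul_self (d v : E) (μ : ℝ) : ⟪d, v + μ • d⟫ = ⟪d, v⟫ + μ * ‖d‖ ^ 2 := by
  rw [inner_add_right, real_inner_smul_right, real_inner_self_eq_norm_sq]

end InnerProductSpace

theorem stmt14_general
    {n : ℕ} (H : EuclideanSpace ℝ (Fin n) →L[ℝ] EuclideanSpace ℝ (Fin n))
    (ε : ℝ) (hε : 0 < ε)
    (g d d' : EuclideanSpace ℝ (Fin n)) (hd : d ≠ 0)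
    (hcurv : ⟪d, H d + (2*ε) • d⟫ < ε * ‖d‖^2)
    (hd' : d' = (-(sgn ⟪d, g⟫) * (|⟪d, H d⟫| / ‖d‖^2) * ‖d‖⁻¹) • d) :
    ⟪d', g⟫ ≤ 0 ∧ ⟪d', H d'⟫ / ‖d'‖^2 = -‖d'‖ ∧ -‖d'‖ ≤ -ε := by
  have hd_pos : 0 < ‖d‖ := norm_pos_iff.mpr hd
  have hq : ⟪d, H d⟫ < -(ε * ‖d‖ ^ 2) := by
    rw [inner_add_smul_self] at hcurv; linarith
  have hq_neg : ⟪d, H d⟫ < 0 := hq.trans (neg_neg_of_pos (by positivity))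
  set a := |⟪d, H d⟫| / ‖d‖ ^ 2 with ha_def
  have ha : ε < a := by rw [ha_def, abs_of_neg hq_neg, lt_div_iff₀ (by positivity)]; linarith
  have hnorm : ‖d'‖ = a := by
    rw [hd']; exact norm_mul_inv_norm_smul (by rw [abs_neg, abs_sgn]) (hε.trans ha).le hd
  have hc : -(sgn ⟪d, g⟫) * a * ‖d‖⁻¹ ≠ 0 :=
    mul_ne_zero (mul_ne_zero (neg_ne_zero.mpr (sgn_ne_zero _)) (hε.trans ha).ne')
      (inv_ne_zero hd_pos.ne')
  refine ⟨?_, ?_, by rw [hnorm]; linarith⟩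
  · rw [hd', mul_assoc]; exact inner_neg_sgn_mul_smul_nonpos d g (by positivity)
  · calc ⟪d', H d'⟫ / ‖d'‖ ^ 2 = ⟪d, H d⟫ / ‖d‖ ^ 2 := by
          rw [hd']; exact inner_smul_map_smul_div_norm_sq (H : _ →ₗ[ℝ] _) d hc
      _ = -a := by rw [ha_def, abs_of_neg hq_neg, neg_div, neg_neg]
      _ = -‖d'‖ := by rw [hnorm]

/-- Properties of the rescaled negative-curvature step (d_type = NC) used by
the damped Newton-CG algorithm: `d'ᵀg ≤ 0` and
`d'ᵀHd'/‖d'‖² = −‖d'‖ ≤ −ε`. -/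
theorem stmt14
    {n : ℕ} (H : EuclideanSpace ℝ (Fin n) →L[ℝ] EuclideanSpace ℝ (Fin n))
    (hsym : ∀ x y : EuclideanSpace ℝ (Fin n), ⟪H x, y⟫ = ⟪x, H y⟫)
    (ε : ℝ) (hε : 0 < ε)
    (g d d' : EuclideanSpace ℝ (Fin n)) (hd : d ≠ 0)
    (hcurv : ⟪d, H d + (2*ε) • d⟫ < ε * ‖d‖^2)
    (hd' : d' = (-(sgn ⟪d, g⟫) * (|⟪d, H d⟫| / ‖d‖^2) * ‖d‖⁻¹) • d) :
    ⟪d', g⟫ ≤ 0 ∧ ⟪d', H d'⟫ / ‖d'‖^2 = -‖d'‖ ∧ -‖d'‖ ≤ -ε :=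
  stmt14_general H ε hε g d d' hd hcurv hd'
end

section
/- Let f : ℝⁿ → ℝ be twice continuously differentiable with ∇²f Lipschitz continuous with constant L_H > 0, let ε_g > 0, ε_H > 0, ζ ∈ (0,1), θ ∈ (0,1), η > 0, and U_g > 0. Let x be a point with ε_g < ‖∇f(x)‖ ≤ U_g, and let d ≠ 0 satisfy: dᵀ(∇²f(x) + 2ε_H I)d ≥ ε_H‖d‖², ‖d‖ ≤ 1.1·ε_H⁻¹‖∇f(x)‖, and ‖(∇²f(x) + 2ε_H I)d + ∇f(x)‖ ≤ (1/2)ε_H ζ‖d‖. Then the smallest nonnegative integer j such that f(x + θʲd) < f(x) − (η/6)θ^{3j}‖d‖³ exists and satisfies j ≤ j_sol + 1, where j_sol = [(1/2)·log_θ(3(1−ζ)ε_H²/((L_H+η)·1.1·U_g))]_+; moreover, with α = θʲ and x⁺ = x + αd, f(x) − f(x⁺) ≥ c_sol·min{‖∇f(x⁺)‖³ε_H⁻³, ε_H³}, where c_sol = (η/6)·min{[4/(√((4+ζ)² + 8L_H) + 4 + ζ)]³, [3θ²(1−ζ)/(L_H+η)]³}. -/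
open RealInnerProductSpace

lemma aux_mvt (φ φ' : ℝ → ℝ) (C : ℝ) (k : ℕ)
    (h : ∀ t, HasDerivAt φ (φ' t) t)
    (hb : ∀ t ∈ Set.Icc (0:ℝ) 1, φ' t ≤ C * t ^ k) :
    φ 1 ≤ φ 0 + C / (k + 1) := by
  set χ : ℝ → ℝ := fun t => C * t ^ (k+1) / (k+1) - φ t with hχdef
  have hχ : ∀ t, HasDerivAt χ (C * t ^ k - φ' t) t := by
    intro t
    have h1 : HasDerivAt (fun t : ℝ => C * t ^ (k+1) / (k+1)) (C * t ^ k) t := by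
      have h2 := ((hasDerivAt_pow (k+1) t).const_mul C).div_const ((k:ℝ)+1)
      convert h2 using 1
      · rfl
      · rfl
      have : ((k:ℝ)+1) ≠ 0 := by positivity
      push_cast
      field_simp
    exact h1.sub (h t)
  have hmono : MonotoneOn χ (Set.Icc 0 1) := by
    apply monotoneOn_of_deriv_nonneg (convex_Icc 0 1)
    · exact (Differentiable.continuous (fun t => (hχ t).differentiableAt)).continuousOn
    · exact fun t _ => ((hχ t).differentiableAt).differentiableWithinAt
    · intro t ht
      rw [interior_Icc] at ht
      rw [(hχ t).deriv]
      have := hb t ⟨ht.1.le, ht.2.le⟩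
      linarith
  have h01 := hmono (Set.mem_Icc.2 ⟨le_refl 0, zero_le_one⟩)
    (Set.mem_Icc.2 ⟨zero_le_one, le_refl 1⟩) zero_le_one
  simp only [hχdef, one_pow, zero_pow (Nat.succ_ne_zero k), mul_zero, mul_one, zero_div] at h01
  have : ((k:ℝ)+1) ≠ 0 := by positivity
  push_cast at h01 ⊢
  linarith [h01]

variable {E : Type*} [NormedAddCommGroup E] [InnerProductSpace ℝ E] [CompleteSpace E]

lemma aux_grad_diff {f : E → ℝ} (hf : ContDiff ℝ 2 f) : Differentiable ℝ (gradient f) := by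
  have h2 : Differentiable ℝ (fderiv ℝ f) := (hf.fderiv_right (m := 1) (by norm_num)).differentiable one_ne_zero
  exact fun y => ((InnerProductSpace.toDual ℝ E).symm.toContinuousLinearEquiv.differentiable.comp h2) y

lemma aux_line (y v : E) (t₀ : ℝ) : HasDerivAt (fun t : ℝ => y + t • v) v t₀ := by
  simpa using ((hasDerivAt_id t₀).smul_const v).const_add y

lemma aux_line_f {f : E → ℝ} (hf : ContDiff ℝ 2 f) (y v : E) (t₀ : ℝ) :
    HasDerivAt (fun t : ℝ => f (y + t • v)) ⟪gradient f (y + t₀ • v), v⟫ t₀ := by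
  have h2 : HasFDerivAt f (InnerProductSpace.toDual ℝ E (gradient f (y + t₀ • v))) (y + t₀ • v) :=
    ((hf.differentiable (by norm_num)) _).hasGradientAt
  exact h2.comp_hasDerivAt t₀ (aux_line y v t₀)

lemma aux_line_g {f : E → ℝ} (hf : ContDiff ℝ 2 f) (y v : E) (t₀ : ℝ) :
    HasDerivAt (fun t : ℝ => gradient f (y + t • v))
      (fderiv ℝ (gradient f) (y + t₀ • v) v) t₀ :=
  ((aux_grad_diff hf _).hasFDerivAt.comp_hasDerivAt t₀ (aux_line y v t₀))

-- T2
lemma aux_T2 {f : E → ℝ} (hf : ContDiff ℝ 2 f) {L : ℝ} (hL : 0 < L)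
    (hLip : LipschitzWith (Real.toNNReal L) (fun z : E => fderiv ℝ (gradient f) z))
    (x u : E) :
    ‖gradient f (x + u) - gradient f x - fderiv ℝ (gradient f) x u‖ ≤ L / 2 * ‖u‖ ^ 2 := by
  set H := fun z : E => fderiv ℝ (gradient f) z with hH
  set v := gradient f (x + u) - gradient f x - H x u with hv
  rcases eq_or_ne v 0 with h0 | h0
  · rw [h0, norm_zero]; positivity
  set w := ‖v‖⁻¹ • v with hw
  have hnw : ‖w‖ = 1 := by
    rw [hw, norm_smul, norm_inv, norm_norm, inv_mul_cancel₀ (norm_ne_zero_iff.2 h0)]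
  set ψ : ℝ → ℝ := fun t => ⟪w, gradient f (x + t • u)⟫ - t * ⟪w, H x u⟫ with hψ
  have hψ' : ∀ t, HasDerivAt ψ (⟪w, H (x + t • u) u⟫ - ⟪w, H x u⟫) t := by
    intro t
    have h1 : HasDerivAt (fun t : ℝ => ⟪w, gradient f (x + t • u)⟫) ⟪w, H (x + t • u) u⟫ t := by
      exact (innerSL ℝ w).hasFDerivAt.comp_hasDerivAt t (aux_line_g hf x u t)
    exact h1.sub (hasDerivAt_mul_const _)
  have hb : ∀ t ∈ Set.Icc (0:ℝ) 1, (⟪w, H (x + t • u) u⟫ - ⟪w, H x u⟫) ≤ (L * ‖u‖ ^ 2) * t ^ 1 :=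
    by
    intro t ht
    have h1 : ⟪w, H (x + t • u) u⟫ - ⟪w, H x u⟫ = ⟪w, (H (x + t • u) - H x) u⟫ := by
      rw [ContinuousLinearMap.sub_apply, inner_sub_right]
    rw [h1]
    have h2 : ⟪w, (H (x + t • u) - H x) u⟫ ≤ ‖w‖ * ‖(H (x + t • u) - H x) u‖ :=
      real_inner_le_norm _ _
    have h3 : ‖(H (x + t • u) - H x) u‖ ≤ ‖H (x + t • u) - H x‖ * ‖u‖ :=
      (H (x + t • u) - H x).le_opNorm u
    have h4 : ‖H (x + t • u) - H x‖ ≤ L * (t * ‖u‖) := by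
      have := hLip.dist_le_mul (x + t • u) x
      rw [dist_eq_norm] at this
      calc ‖H (x + t • u) - H x‖ ≤ (Real.toNNReal L) * dist (x + t • u) x := this
        _ = L * ‖t • u‖ := by
            rw [dist_eq_norm, Real.coe_toNNReal L hL.le, add_sub_cancel_left]
        _ ≤ L * (t * ‖u‖) := by
            rw [norm_smul, Real.norm_eq_abs, abs_of_nonneg ht.1]
    calc ⟪w, (H (x + t • u) - H x) u⟫ ≤ ‖w‖ * ‖(H (x + t • u) - H x) u‖ := h2
      _ ≤ 1 * (L * (t * ‖u‖) * ‖u‖) := by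
          rw [hnw]
          have hn : (0:ℝ) ≤ ‖u‖ := norm_nonneg u
          nlinarith [norm_nonneg ((H (x + t • u) - H x) u), h3, h4,
            norm_nonneg (H (x + t • u) - H x)]
      _ = (L * ‖u‖ ^ 2) * t ^ 1 := by ring
  have hkey := aux_mvt ψ _ (L * ‖u‖ ^ 2) 1 hψ' hb
  have hψ1 : ψ 1 = ⟪w, gradient f (x + u)⟫ - ⟪w, H x u⟫ := by
    simp [hψ]
  have hψ0 : ψ 0 = ⟪w, gradient f x⟫ := by simp [hψ]
  have hwv : ⟪w, v⟫ = ‖v‖ := by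
    rw [hw, real_inner_smul_left, real_inner_self_eq_norm_sq]
    rw [sq]
    field_simp
  have hexp : ψ 1 - ψ 0 = ⟪w, v⟫ := by
    rw [hψ1, hψ0, hv]
    rw [inner_sub_right, inner_sub_right]
    ring
  have : ‖v‖ ≤ L * ‖u‖ ^ 2 / 2 := by
    rw [← hwv, ← hexp]
    push_cast at hkey
    linarith
  linarith
-- T1
lemma aux_T1 {f : E → ℝ} (hf : ContDiff ℝ 2 f) {L : ℝ} (hL : 0 < L)
    (hLip : LipschitzWith (Real.toNNReal L) (fun z : E => fderiv ℝ (gradient f) z))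
    (x u : E) :
    f (x + u) ≤ f x + ⟪gradient f x, u⟫ + 1/2 * ⟪u, fderiv ℝ (gradient f) x u⟫
      + L / 6 * ‖u‖ ^ 3 := by
  set H := fun z : E => fderiv ℝ (gradient f) z with hH
  set ψ : ℝ → ℝ := fun t => f (x + t • u) - t * ⟪gradient f x, u⟫
    - t ^ 2 / 2 * ⟪u, H x u⟫ with hψ
  have hψ' : ∀ t, HasDerivAt ψ
      (⟪gradient f (x + t • u), u⟫ - ⟪gradient f x, u⟫ - t * ⟪u, H x u⟫) t := by
    intro t
    have h1 := aux_line_f hf x u t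
    have h2 : HasDerivAt (fun t : ℝ => t * ⟪gradient f x, u⟫) ⟪gradient f x, u⟫ t :=
      hasDerivAt_mul_const _
    have h3 : HasDerivAt (fun t : ℝ => t ^ 2 / 2 * ⟪u, H x u⟫) (t * ⟪u, H x u⟫) t := by
      have h4 := ((hasDerivAt_pow 2 t).div_const 2).mul_const ⟪u, H x u⟫
      convert h4 using 1
      · rfl
      · rfl
      · norm_num
    exact (h1.sub h2).sub h3
  have hb : ∀ t ∈ Set.Icc (0:ℝ) 1,
      (⟪gradient f (x + t • u), u⟫ - ⟪gradient f x, u⟫ - t * ⟪u, H x u⟫)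
        ≤ (L / 2 * ‖u‖ ^ 3) * t ^ 2 := by
    intro t ht
    have heq : ⟪gradient f (x + t • u), u⟫ - ⟪gradient f x, u⟫ - t * ⟪u, H x u⟫
        = ⟪gradient f (x + t • u) - gradient f x - H x (t • u), u⟫ := by
      rw [inner_sub_left, inner_sub_left, map_smul]
      rw [real_inner_smul_left]
      rw [real_inner_comm (H x u) u]
    rw [heq]
    have h2 := aux_T2 hf hL hLip x (t • u)
    have h3 : ⟪gradient f (x + t • u) - gradient f x - H x (t • u), u⟫
        ≤ ‖gradient f (x + t • u) - gradient f x - H x (t • u)‖ * ‖u‖ :=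
      real_inner_le_norm _ _
    have h4 : ‖t • u‖ ^ 2 = t ^ 2 * ‖u‖ ^ 2 := by
      rw [norm_smul, Real.norm_eq_abs, mul_pow, sq_abs]
    calc ⟪gradient f (x + t • u) - gradient f x - H x (t • u), u⟫
        ≤ ‖gradient f (x + t • u) - gradient f x - H x (t • u)‖ * ‖u‖ := h3
      _ ≤ (L / 2 * ‖t • u‖ ^ 2) * ‖u‖ := by
          exact mul_le_mul_of_nonneg_right h2 (norm_nonneg u)
      _ = (L / 2 * ‖u‖ ^ 3) * t ^ 2 := by rw [h4]; ring
  have hkey := aux_mvt ψ _ (L / 2 * ‖u‖ ^ 3) 2 hψ' hb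
  have hψ1 : ψ 1 = f (x + u) - ⟪gradient f x, u⟫ - 1/2 * ⟪u, H x u⟫ := by
    simp [hψ]
  have hψ0 : ψ 0 = f x := by simp [hψ]
  rw [hψ1, hψ0] at hkey
  push_cast at hkey
  linarith
set_option maxHeartbeats 1000000 in
/-- Lemma 3 (line search for inexact damped Newton steps): the backtracking
line search terminates in at most `j_sol + 1` steps and yields a decrease of
at least `c_sol · min{‖∇f(x⁺)‖³ ε_H⁻³, ε_H³}`.  The Hessian of `f` at `x` is
represented as `fderiv ℝ (gradient f) x`. -/
theorem stmt15
    {n : ℕ} (f : EuclideanSpace ℝ (Fin n) → ℝ)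
    (L_H : ℝ) (hLH : 0 < L_H)
    (hf : ContDiff ℝ 2 f)
    (hLip : LipschitzWith (Real.toNNReal L_H)
      (fun z : EuclideanSpace ℝ (Fin n) => fderiv ℝ (gradient f) z))
    (ε_g ε_H ζ θ η U_g : ℝ)
    (hεg : 0 < ε_g) (hεH : 0 < ε_H) (hζ : ζ ∈ Set.Ioo (0:ℝ) 1)
    (hθ : θ ∈ Set.Ioo (0:ℝ) 1) (hη : 0 < η) (hUg : 0 < U_g)
    (x d : EuclideanSpace ℝ (Fin n)) (hd : d ≠ 0)
    (hglow : ε_g < ‖gradient f x‖) (hgup : ‖gradient f x‖ ≤ U_g)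
    (hcurv : ⟪d, fderiv ℝ (gradient f) x d⟫ + 2 * ε_H * ‖d‖^2 ≥ ε_H * ‖d‖^2)
    (hnorm : ‖d‖ ≤ 1.1 * ε_H⁻¹ * ‖gradient f x‖)
    (hres : ‖fderiv ℝ (gradient f) x d + (2*ε_H) • d + gradient f x‖ ≤
      1/2 * ε_H * ζ * ‖d‖) :
    ∃ j : ℕ,
      f (x + θ^j • d) < f x - η/6 * θ^(3*j) * ‖d‖^3 ∧
      (∀ i < j, ¬ (f (x + θ^i • d) < f x - η/6 * θ^(3*i) * ‖d‖^3)) ∧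
      (j : ℝ) ≤
        max (1/2 * Real.logb θ (3*(1-ζ)/(L_H+η) * (ε_H^2/(1.1*U_g)))) 0 + 1 ∧
      f x - f (x + θ^j • d) ≥
        η/6 * min ((4/(Real.sqrt ((4+ζ)^2 + 8*L_H) + 4 + ζ))^3)
                  ((3*θ^2*(1-ζ)/(L_H+η))^3) *
          min (‖gradient f (x + θ^j • d)‖^3 * (ε_H^3)⁻¹) (ε_H^3) := by
  classical
  obtain ⟨hζ0, hζ1⟩ := hζ
  obtain ⟨hθ0, hθ1⟩ := hθ
  have hnd : 0 < ‖d‖ := norm_pos_iff.2 hd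
  have hnd2 : (0:ℝ) < ‖d‖^2 := by positivity
  have hLη : 0 < L_H + η := by linarith
  have h1ζ : 0 < 1 - ζ := by linarith
  -- the key sufficient-decrease criterion
  have key1 : ∀ α : ℝ, 0 < α → α ≤ 1 → α^2*‖d‖ ≤ 3*(1-ζ)*ε_H/(L_H+η) →
      f (x + α • d) < f x - η/6 * α^3 * ‖d‖^3 := by
    intro α hα0 hα1 hαb
    have hT := aux_T1 hf hLH hLip x (α • d)
    have e1 : ⟪gradient f x, α • d⟫ = α * ⟪gradient f x, d⟫ := real_inner_smul_right _ _ _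
    have e2 : ⟪α • d, fderiv ℝ (gradient f) x (α • d)⟫
        = α^2 * ⟪d, fderiv ℝ (gradient f) x d⟫ := by
      rw [map_smul, real_inner_smul_left, real_inner_smul_right]; ring
    have e3 : ‖α • d‖^3 = α^3 * ‖d‖^3 := by
      rw [norm_smul, Real.norm_eq_abs, abs_of_pos hα0, mul_pow]
    rw [e1, e2, e3] at hT
    set A := ⟪d, fderiv ℝ (gradient f) x d⟫ with hAdef
    have hdg : ⟪gradient f x, d⟫ ≤ 1/2*ε_H*ζ*‖d‖^2 - A - 2*ε_H*‖d‖^2 := by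
      have h1 : ⟪d, fderiv ℝ (gradient f) x d + (2*ε_H) • d + gradient f x⟫
          ≤ ‖d‖ * (1/2*ε_H*ζ*‖d‖) :=
        le_trans (real_inner_le_norm _ _) (mul_le_mul_of_nonneg_left hres (norm_nonneg d))
      have h2 : ⟪d, fderiv ℝ (gradient f) x d + (2*ε_H) • d + gradient f x⟫
          = A + 2*ε_H*‖d‖^2 + ⟪d, gradient f x⟫ := by
        rw [inner_add_right, inner_add_right, real_inner_smul_right,
          real_inner_self_eq_norm_sq]
      have h3 : ‖d‖ * (1/2*ε_H*ζ*‖d‖) = 1/2*ε_H*ζ*‖d‖^2 := by ring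
      rw [real_inner_comm]
      linarith
    have hA : -ε_H*‖d‖^2 ≤ A := by
      have := hcurv; linarith
    have s1 : α * ⟪gradient f x, d⟫ ≤ α * (1/2*ε_H*ζ*‖d‖^2 - A - 2*ε_H*‖d‖^2) :=
      mul_le_mul_of_nonneg_left hdg hα0.le
    have hc : α^2/2 - α ≤ 0 := by
      have h := mul_le_mul_of_nonneg_left hα1 hα0.le
      linarith [h]
    have s2 : (α^2/2 - α) * A ≤ (α^2/2 - α) * (-ε_H*‖d‖^2) :=
      mul_le_mul_of_nonpos_left hA hc
    have s3 : (L_H+η)/6 * α^3 * ‖d‖^3 ≤ (1-ζ)*ε_H/2 * (α * ‖d‖^2) := by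
      have t1 : (L_H+η)/6 * (α^2*‖d‖) ≤ (L_H+η)/6 * (3*(1-ζ)*ε_H/(L_H+η)) :=
        mul_le_mul_of_nonneg_left hαb (by positivity)
      have t2 : (L_H+η)/6 * (3*(1-ζ)*ε_H/(L_H+η)) = (1-ζ)*ε_H/2 := by
        field_simp; ring
      calc (L_H+η)/6*α^3*‖d‖^3 = ((L_H+η)/6*(α^2*‖d‖)) * (α*‖d‖^2) := by ring
        _ ≤ ((1-ζ)*ε_H/2) * (α*‖d‖^2) :=
            mul_le_mul_of_nonneg_right (by linarith) (by positivity)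
    linarith [hT, s1, s2, s3, mul_pos (mul_pos hα0 hεH) hnd2,
      mul_pos (mul_pos (mul_pos hα0 hα0) hεH) hnd2]
  set Aq := 3*(1-ζ)/(L_H+η) * (ε_H^2/(1.1*U_g)) with hAqdef
  have hAqpos : 0 < Aq := by
    apply mul_pos (div_pos (by linarith) hLη)
    exact div_pos (by positivity) (mul_pos (by norm_num) hUg)
  have hdUg : ‖d‖ ≤ 1.1*ε_H⁻¹*U_g := by
    refine le_trans hnorm ?_
    have h : (0:ℝ) ≤ 1.1*ε_H⁻¹ := by positivity
    calc 1.1*ε_H⁻¹*‖gradient f x‖ = 1.1*ε_H⁻¹*‖gradient f x‖ := rfl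
      _ ≤ 1.1*ε_H⁻¹*U_g := by
          rw [mul_assoc, mul_assoc]
          exact mul_le_mul_of_nonneg_left (mul_le_mul_of_nonneg_left hgup (by positivity)) (by norm_num)
  have hkey2 : ∀ N : ℕ, 1/2 * Real.logb θ Aq ≤ (N:ℝ) →
      f (x + θ^N • d) < f x - η/6 * θ^(3*N) * ‖d‖^3 := by
    intro N hN
    have h1 : (θ:ℝ) ^ (2*N : ℕ) ≤ Aq := by
      have h2 : θ ^ ((2*N : ℕ) : ℝ) ≤ θ ^ Real.logb θ Aq := by
        apply Real.rpow_le_rpow_of_exponent_ge hθ0 hθ1.le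
        push_cast; linarith
      rw [Real.rpow_logb hθ0 (ne_of_lt hθ1) hAqpos] at h2
      rw [← Real.rpow_natCast θ (2*N)]
      exact h2
    have h3 : (θ^N)^2 * ‖d‖ ≤ 3*(1-ζ)*ε_H/(L_H+η) := by
      have h4 : (θ^N)^2 * ‖d‖ ≤ θ ^ (2*N:ℕ) * (1.1*ε_H⁻¹*U_g) := by
        rw [← pow_mul, mul_comm N 2]
        exact mul_le_mul_of_nonneg_left hdUg (pow_nonneg hθ0.le _)
      have h5 : θ ^ (2*N:ℕ) * (1.1*ε_H⁻¹*U_g) ≤ Aq * (1.1*ε_H⁻¹*U_g) :=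
        mul_le_mul_of_nonneg_right h1 (by positivity)
      have h6 : Aq * (1.1*ε_H⁻¹*U_g) = 3*(1-ζ)*ε_H/(L_H+η) := by
        rw [hAqdef]
        field_simp
      linarith
    have := key1 (θ^N) (pow_pos hθ0 N) (pow_le_one₀ hθ0.le hθ1.le) h3
    have hc3 : (θ^N)^3 = θ^(3*N) := by rw [← pow_mul, mul_comm N 3]
    rw [hc3] at this
    exact this
  have hex : ∃ j : ℕ, f (x + θ^j • d) < f x - η/6 * θ^(3*j) * ‖d‖^3 :=
    ⟨⌈1/2 * Real.logb θ Aq⌉₊, hkey2 _ (Nat.le_ceil _)⟩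
  refine ⟨Nat.find hex, Nat.find_spec hex, fun i hi => Nat.find_min hex hi, ?_, ?_⟩
  · -- count bound
    have h1 : Nat.find hex ≤ ⌈1/2 * Real.logb θ Aq⌉₊ :=
      Nat.find_min' hex (hkey2 _ (Nat.le_ceil _))
    rcases le_or_gt 0 (1/2 * Real.logb θ Aq) with hc | hc
    · have h2 : ((⌈1/2 * Real.logb θ Aq⌉₊ : ℕ) : ℝ) < 1/2 * Real.logb θ Aq + 1 :=
        Nat.ceil_lt_add_one hc
      have h3 : ((Nat.find hex : ℕ):ℝ) ≤ ((⌈1/2 * Real.logb θ Aq⌉₊ : ℕ):ℝ) := by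
        exact_mod_cast h1
      have h4 : 1/2 * Real.logb θ Aq ≤ max (1/2 * Real.logb θ Aq) 0 := le_max_left _ _
      linarith
    · have h2 : ⌈1/2 * Real.logb θ Aq⌉₊ = 0 := Nat.ceil_eq_zero.2 hc.le
      rw [h2, Nat.le_zero] at h1
      rw [h1]
      have h4 : (0:ℝ) ≤ max (1/2 * Real.logb θ Aq) 0 := le_max_right _ _
      push_cast
      linarith
  · -- decrease bound
    set j₀ := Nat.find hex with hj₀
    have hPj := Nat.find_spec hex
    have hα0 : (0:ℝ) < θ^j₀ := pow_pos hθ0 _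
    have hα1 : θ^j₀ ≤ 1 := pow_le_one₀ hθ0.le hθ1.le
    have hcube : θ^(3*j₀) = (θ^j₀)^3 := by rw [← pow_mul, mul_comm j₀ 3]
    have hdec : η/6 * (θ^j₀)^3 * ‖d‖^3 < f x - f (x + θ^j₀ • d) := by
      rw [← hcube]; linarith [hPj]
    set gp := gradient f (x + θ^j₀ • d) with hgp
    set M := min (‖gp‖^3 * (ε_H^3)⁻¹) (ε_H^3) with hM
    have hM0 : 0 ≤ M := le_min (by positivity) (by positivity)
    have hMε : M ≤ ε_H^3 := min_le_right _ _
    set s := Real.sqrt ((4+ζ)^2 + 8*L_H) with hs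
    have hs2 : s^2 = (4+ζ)^2 + 8*L_H := Real.sq_sqrt (by positivity)
    have hs0 : 0 ≤ s := Real.sqrt_nonneg _
    have hsden : 0 < s + 4 + ζ := by linarith
    set c₁ := 4/(s+4+ζ) with hc₁def
    set c₂ := 3*θ^2*(1-ζ)/(L_H+η) with hc₂def
    have hc₁ : 0 < c₁ := div_pos (by norm_num) hsden
    have hc₂ : 0 < c₂ := div_pos (by positivity) hLη
    have hminc : min (c₁^3) (c₂^3) ≤ c₁^3 := min_le_left _ _
    have hminc' : min (c₁^3) (c₂^3) ≤ c₂^3 := min_le_right _ _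
    have hminc0 : 0 ≤ min (c₁^3) (c₂^3) := le_min (by positivity) (by positivity)
    have hη6 : (0:ℝ) < η/6 := by linarith
    -- suffices to bound the model decrease
    suffices hfin : min (c₁^3) (c₂^3) * M ≤ (θ^j₀)^3 * ‖d‖^3 by
      have := mul_le_mul_of_nonneg_left hfin hη6.le
      calc η/6 * min (c₁^3) (c₂^3) * M = η/6 * (min (c₁^3) (c₂^3) * M) := by ring
        _ ≤ η/6 * ((θ^j₀)^3 * ‖d‖^3) := this
        _ = η/6 * (θ^j₀)^3 * ‖d‖^3 := by ring
        _ ≤ f x - f (x + θ^j₀ • d) := hdec.le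
    rcases Nat.eq_zero_or_pos j₀ with h0 | hpos
    · -- j₀ = 0 : full step
      have hx1 : x + θ^j₀ • d = x + d := by rw [h0, pow_zero, one_smul]
      have hα : θ^j₀ = 1 := by rw [h0, pow_zero]
      have hT2d := aux_T2 hf hLH hLip x d
      have hgpd : gp = gradient f (x + d) := by rw [hgp, hx1]
      have hsplit : gp = (gradient f (x+d) - gradient f x - fderiv ℝ (gradient f) x d)
          + (fderiv ℝ (gradient f) x d + (2*ε_H) • d + gradient f x) - (2*ε_H) • d := by
        rw [hgpd]; abel
      have hgpb : ‖gp‖ ≤ L_H/2*‖d‖^2 + 1/2*ε_H*ζ*‖d‖ + 2*ε_H*‖d‖ := by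
        have h1 : ‖gp‖ ≤ ‖(gradient f (x+d) - gradient f x - fderiv ℝ (gradient f) x d)
            + (fderiv ℝ (gradient f) x d + (2*ε_H) • d + gradient f x)‖ + ‖(2*ε_H) • d‖ := by
          rw [hsplit]; exact norm_sub_le _ _
        have h2 : ‖(gradient f (x+d) - gradient f x - fderiv ℝ (gradient f) x d)
            + (fderiv ℝ (gradient f) x d + (2*ε_H) • d + gradient f x)‖
            ≤ L_H/2*‖d‖^2 + 1/2*ε_H*ζ*‖d‖ :=
          le_trans (norm_add_le _ _) (add_le_add hT2d hres)
        have h3 : ‖(2*ε_H) • d‖ = 2*ε_H*‖d‖ := by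
          rw [norm_smul, Real.norm_eq_abs, abs_of_pos (by linarith)]
        linarith
      -- key lower bound on ‖d‖
      set m := min ‖gp‖ (ε_H^2) with hm
      have hm0 : 0 ≤ m := le_min (norm_nonneg _) (by positivity)
      have hmgp : m ≤ ‖gp‖ := min_le_left _ _
      have hmε : m ≤ ε_H^2 := min_le_right _ _
      have hc₁id : L_H/2 * c₁^2 + (4+ζ)/2 * c₁ = 1 := by
        rw [hc₁def]
        have hD : s+4+ζ ≠ 0 := ne_of_gt hsden
        field_simp
        linear_combination (-2) * hs2
      have hclaim : c₁ * m / ε_H ≤ ‖d‖ := by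
        by_contra hcon
        push_neg at hcon
        have hmpos : 0 < m := by
          by_contra hm'
          push_neg at hm'
          have : m = 0 := le_antisymm hm' hm0
          rw [this] at hcon
          simp at hcon
          linarith
        have step1 : m ≤ L_H/2*‖d‖^2 + (4+ζ)/2*ε_H*‖d‖ := by linarith [hgpb, hmgp]
        have step2 : L_H/2*‖d‖^2 + (4+ζ)/2*ε_H*‖d‖
            < L_H/2*(c₁*m/ε_H)^2 + (4+ζ)/2*ε_H*(c₁*m/ε_H) := by
          have hq : ‖d‖^2 ≤ (c₁*m/ε_H)^2 := pow_le_pow_left₀ (norm_nonneg d) hcon.le 2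
          have hl : (4+ζ)/2*ε_H*‖d‖ < (4+ζ)/2*ε_H*(c₁*m/ε_H) := by
            apply mul_lt_mul_of_pos_left hcon
            positivity
          have hq' := mul_le_mul_of_nonneg_left hq (by linarith : (0:ℝ) ≤ L_H/2)
          linarith [hq', hl]
        have step3 : L_H/2*(c₁*m/ε_H)^2 + (4+ζ)/2*ε_H*(c₁*m/ε_H)
            = L_H/2*c₁^2*(m^2/ε_H^2) + (4+ζ)/2*c₁*m := by
          field_simp
        have step4 : m^2/ε_H^2 ≤ m := by
          rw [div_le_iff₀ (by positivity)]
          have := mul_le_mul_of_nonneg_left hmε hm0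
          linarith [this]
        have step5 : L_H/2*c₁^2*(m^2/ε_H^2) + (4+ζ)/2*c₁*m
            ≤ (L_H/2*c₁^2 + (4+ζ)/2*c₁) * m := by
          have h9 := mul_le_mul_of_nonneg_left step4 (by positivity : (0:ℝ) ≤ L_H/2*c₁^2)
          linarith [h9]
        rw [hc₁id] at step5
        linarith
      have hdM : c₁^3 * M ≤ ‖d‖^3 := by
        have h1 : (c₁*m/ε_H)^3 ≤ ‖d‖^3 := by
          apply pow_le_pow_left₀ (by positivity) hclaim
        have h2 : (c₁*m/ε_H)^3 = c₁^3 * (m^3 / ε_H^3) := by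
          field_simp
        have h3 : M ≤ m^3 / ε_H^3 := by
          rcases le_total ‖gp‖ (ε_H^2) with hle | hle
          · have hm' : m = ‖gp‖ := min_eq_left hle
            rw [hm']
            calc M ≤ ‖gp‖^3 * (ε_H^3)⁻¹ := min_le_left _ _
              _ = ‖gp‖^3 / ε_H^3 := by rw [div_eq_mul_inv]
          · have hm' : m = ε_H^2 := min_eq_right hle
            rw [hm']
            have : (ε_H^2)^3 / ε_H^3 = ε_H^3 := by
              field_simp
            rw [this]
            exact min_le_right _ _
        calc c₁^3 * M ≤ c₁^3 * (m^3/ε_H^3) :=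
              mul_le_mul_of_nonneg_left h3 (by positivity)
          _ = (c₁*m/ε_H)^3 := h2.symm
          _ ≤ ‖d‖^3 := h1
      calc min (c₁^3) (c₂^3) * M ≤ c₁^3 * M := mul_le_mul_of_nonneg_right hminc hM0
        _ ≤ ‖d‖^3 := hdM
        _ = (θ^j₀)^3 * ‖d‖^3 := by rw [hα]; ring
    · -- j₀ ≥ 1 : the previous step failed
      obtain ⟨k, hk⟩ : ∃ k, j₀ = k + 1 := ⟨j₀ - 1, by omega⟩
      have hnot : ¬ (f (x + θ^k • d) < f x - η/6 * θ^(3*k) * ‖d‖^3) :=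
        Nat.find_min hex (by omega)
      have hgt : 3*(1-ζ)*ε_H/(L_H+η) < (θ^k)^2 * ‖d‖ := by
        by_contra hcon
        push_neg at hcon
        have := key1 (θ^k) (pow_pos hθ0 k) (pow_le_one₀ hθ0.le hθ1.le) hcon
        have hc3 : (θ^k)^3 = θ^(3*k) := by rw [← pow_mul, mul_comm k 3]
        rw [hc3] at this
        exact hnot this
      have hαsq : c₂ * ε_H < (θ^j₀)^2 * ‖d‖ := by
        have h1 : (θ^j₀)^2 = θ^2 * (θ^k)^2 := by
          rw [hk]; ring
        rw [h1]
        have h2 : θ^2 * (3*(1-ζ)*ε_H/(L_H+η)) < θ^2 * ((θ^k)^2 * ‖d‖) :=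
          mul_lt_mul_of_pos_left hgt (by positivity)
        have h3 : c₂ * ε_H = θ^2 * (3*(1-ζ)*ε_H/(L_H+η)) := by
          rw [hc₂def]; field_simp
        rw [h3]
        linarith [h2]
      have hc₂ε : 0 < c₂ * ε_H := mul_pos hc₂ hεH
      have hcube3 : (c₂*ε_H)^3 < ((θ^j₀)^2 * ‖d‖)^3 := by
        apply pow_lt_pow_left₀ hαsq hc₂ε.le
        norm_num
      have h6 : ((θ^j₀)^2 * ‖d‖)^3 ≤ (θ^j₀)^3 * ‖d‖^3 := by
        have h7 : ((θ^j₀)^2 * ‖d‖)^3 = (θ^j₀)^6 * ‖d‖^3 := by ring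
        rw [h7]
        apply mul_le_mul_of_nonneg_right _ (by positivity)
        calc (θ^j₀)^6 = (θ^j₀)^3 * (θ^j₀)^3 := by ring
          _ ≤ 1 * (θ^j₀)^3 := by
              apply mul_le_mul_of_nonneg_right _ (by positivity)
              exact pow_le_one₀ hα0.le hα1
          _ = (θ^j₀)^3 := one_mul _
      calc min (c₁^3) (c₂^3) * M ≤ c₂^3 * ε_H^3 := by
            apply mul_le_mul hminc' hMε hM0 (by positivity)
        _ = (c₂*ε_H)^3 := by ring
        _ ≤ ((θ^j₀)^2 * ‖d‖)^3 := hcube3.le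
        _ ≤ (θ^j₀)^3 * ‖d‖^3 := h6
end

section
/- Let f : ℝⁿ → ℝ be differentiable, bounded below by f_low, and let ε_g > 0, ε_H > 0, and c > 0. Let (x_k) be a sequence in ℝⁿ such that for every k, if ‖∇f(x_k)‖ > ε_g then f(x_k) − f(x_{k+1}) ≥ c·min{‖∇f(x_{k+1})‖³·ε_H⁻³, ε_H³}. Define K̄₁ = ⌈((f(x_0) − f_low)/c)·max{ε_g⁻³ε_H³, ε_H⁻³}⌉. Then there exists k ∈ {0, 1, …, K̄₁+1} such that ‖∇f(x_k)‖ ≤ ε_g. -/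
open RealInnerProductSpace

/-- Theorem 3 (first-order iteration complexity): if each iteration at a point
with gradient norm above `ε_g` decreases `f` by at least
`c·min{‖∇f(x_{k+1})‖³ ε_H⁻³, ε_H³}`, then within `K̄₁ + 1` iterations some
iterate has gradient norm at most `ε_g`. -/
theorem stmt17
    {n : ℕ} (f : EuclideanSpace ℝ (Fin n) → ℝ) (f_low : ℝ)
    (hdiff : Differentiable ℝ f)
    (hbound : ∀ z, f_low ≤ f z)
    (ε_g ε_H c : ℝ) (hεg : 0 < ε_g) (hεH : 0 < ε_H) (hc : 0 < c)
    (x : ℕ → EuclideanSpace ℝ (Fin n))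
    (hdec : ∀ k, ε_g < ‖gradient f (x k)‖ →
      f (x k) - f (x (k+1)) ≥
        c * min (‖gradient f (x (k+1))‖^3 * (ε_H^3)⁻¹) (ε_H^3)) :
    ∃ k ≤ ⌈(f (x 0) - f_low) / c *
        max ((ε_g^3)⁻¹ * ε_H^3) ((ε_H^3)⁻¹)⌉₊ + 1,
      ‖gradient f (x k)‖ ≤ ε_g := by
  by_contra hcon
  push_neg at hcon
  set M := max ((ε_g^3)⁻¹ * ε_H^3) ((ε_H^3)⁻¹) with hMdef
  set K := ⌈(f (x 0) - f_low) / c * M⌉₊ with hKdef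
  set m := min (ε_g^3 * (ε_H^3)⁻¹) (ε_H^3) with hmdef
  have hm0 : 0 < m := lt_min (by positivity) (by positivity)
  have hinv : m⁻¹ ≤ M := by
    rcases min_cases (ε_g^3 * (ε_H^3)⁻¹) (ε_H^3) with ⟨h1, _⟩ | ⟨h1, _⟩
    · rw [hmdef, h1, mul_inv, inv_inv]
      exact le_max_left _ _
    · rw [hmdef, h1]
      exact le_max_right _ _
  have hstep : ∀ k ≤ K, c * m ≤ f (x k) - f (x (k+1)) := by
    intro k hk
    have h1 := hdec k (hcon k (by omega))
    have h2 : ε_g < ‖gradient f (x (k+1))‖ := hcon (k+1) (by omega)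
    have h3 : m ≤ min (‖gradient f (x (k+1))‖^3 * (ε_H^3)⁻¹) (ε_H^3) :=
      min_le_min (mul_le_mul_of_nonneg_right
        (pow_le_pow_left₀ hεg.le h2.le 3) (by positivity)) le_rfl
    nlinarith
  have hsum : ∀ N, N ≤ K + 1 → (N : ℝ) * (c * m) ≤ f (x 0) - f (x N) := by
    intro N
    induction N with
    | zero => intro _; simp
    | succ N ih =>
      intro hN
      have h1 := ih (by omega)
      have h2 := hstep N (by omega)
      push_cast
      linarith
  have hfinal := hsum (K + 1) le_rfl
  have hb := hbound (x (K + 1))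
  have hD0 : 0 ≤ (f (x 0) - f_low) / c := by
    have h0 := hbound (x 0)
    exact div_nonneg (by linarith) hc.le
  have hle : ((K : ℝ) + 1) * (c * m) ≤ f (x 0) - f_low := by
    push_cast at hfinal; linarith
  have hK1 : (K : ℝ) + 1 ≤ (f (x 0) - f_low) / c * m⁻¹ := by
    have heq : (f (x 0) - f_low) / c * m⁻¹ = (f (x 0) - f_low) / (c * m) := by
      field_simp
    rw [heq, le_div_iff₀ (by positivity)]
    exact hle
  have hK2 : (f (x 0) - f_low) / c * m⁻¹ ≤ (f (x 0) - f_low) / c * M :=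
    mul_le_mul_of_nonneg_left hinv hD0
  have hK3 : (f (x 0) - f_low) / c * M ≤ (K : ℝ) := Nat.le_ceil _
  linarith
end
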